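/- arXiv:2212.06885 — 6 statements merged into one kernel-verified Lean document; each statement's English description precedes it below -/
import Mathlib

section
/- The number of classical parking functions of length n is (n+1)^(n-1). -/
open Finset MeasureTheory

/-- `f` is an x-parking function of length `n` for `x = (a,b,b,...,b)`:
a tuple of positive integers whose nondecreasing rearrangement `f ∘ σ`
satisfies `(f ∘ σ) i ≤ a + i*b` (0-indexed, i.e. `b_i ≤ x_1 + ⋯ + x_i`). -/
def IsXPF (n a b : ℕ) (f : Fin n → ℕ) : Prop :=
  (∀ i, 1 ≤ f i) ∧ ∃ σ : Equiv.Perm (Fin n),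
    Monotone (f ∘ σ) ∧ ∀ i : Fin n, f (σ i) ≤ a + (i : ℕ) * b

/-- The x-parking function polytope `X_n(a,b)`: convex hull in `ℝ^n`
of all x-parking functions for `x = (a,b,...,b)`. -/
def XPFP (n a b : ℕ) : Set (Fin n → ℝ) :=
  convexHull ℝ {x : Fin n → ℝ | ∃ f : Fin n → ℕ, IsXPF n a b f ∧ x = fun i => (f i : ℝ)}

namespace PFAux

open Finset

theorem card_filter_fin_lt (n k : ℕ) (hk : k ≤ n) :
    (univ.filter fun i : Fin n => (i : ℕ) < k).card = k := by
  have : (univ.filter fun i : Fin n => (i : ℕ) < k).card = (Finset.range k).card := by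
    refine Finset.card_nbij (i := fun i : Fin n => (i : ℕ)) ?_ ?_ ?_
    · intro a ha; simp_all
    · intro a _ b _ h; exact Fin.val_injective h
    · intro b hb; simp at hb
      exact ⟨⟨b, lt_of_lt_of_le hb hk⟩, by simp [hb]⟩
  simpa using this

theorem card_filter_perm {n : ℕ} (p : Fin n → Prop) [DecidablePred p] (σ : Equiv.Perm (Fin n)) :
    (univ.filter fun i => p (σ i)).card = (univ.filter p).card := by
  refine Finset.card_nbij (i := fun i => σ i) ?_ ?_ ?_
  · intro a ha; simp_all
  · intro a _ b _ h; exact σ.injective h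
  · intro b hb; simp at hb
    exact ⟨σ.symm b, by simp [hb]⟩

/-- Characterization of classical parking functions by counting. -/
theorem isXPF_iff (n : ℕ) (f : Fin n → ℕ) :
    IsXPF n 1 1 f ↔ ((∀ i, 1 ≤ f i) ∧ ∀ k, 1 ≤ k → k ≤ n →
      k ≤ (univ.filter fun i => f i ≤ k).card) := by
  constructor
  · rintro ⟨hpos, σ, hmono, hb⟩
    refine ⟨hpos, fun k hk1 hkn => ?_⟩
    calc k = (univ.filter fun i : Fin n => (i : ℕ) < k).card :=
            (card_filter_fin_lt n k hkn).symm
      _ ≤ (univ.filter fun i => f (σ i) ≤ k).card := by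
            apply Finset.card_le_card
            intro i hi
            simp only [mem_filter, mem_univ, true_and] at hi ⊢
            have := hb i
            omega
      _ = (univ.filter fun i => f i ≤ k).card := card_filter_perm (fun x => f x ≤ k) σ
  · rintro ⟨hpos, hcnt⟩
    refine ⟨hpos, Tuple.sort f, Tuple.monotone_sort f, ?_⟩
    intro i
    by_contra hcon
    push_neg at hcon
    set σ := Tuple.sort f with hσ
    have hmono : Monotone (f ∘ σ) := Tuple.monotone_sort f
    have key : ∀ j : Fin n, f (σ j) ≤ (i : ℕ) + 1 → (j : ℕ) < (i : ℕ) := by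
      intro j hj
      by_contra h
      push_neg at h
      have hij : i ≤ j := by exact_mod_cast h
      have : f (σ i) ≤ f (σ j) := hmono hij
      simp only [Nat.mul_one] at hcon
      omega
    have hle : (univ.filter fun x => f x ≤ (i : ℕ) + 1).card ≤
        (univ.filter fun j : Fin n => (j : ℕ) < (i : ℕ)).card := by
      rw [← card_filter_perm (fun x => f x ≤ (i : ℕ) + 1) σ]
      apply Finset.card_le_card
      intro j hj
      simp only [mem_filter, mem_univ, true_and] at hj ⊢
      exact key j hj
    have h1 := hcnt ((i : ℕ) + 1) (by omega) (by have := i.isLt; omega)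
    have h2 := card_filter_fin_lt n (i : ℕ) (le_of_lt i.isLt)
    omega

theorem isXPF_le {n : ℕ} {f : Fin n → ℕ} (hf : IsXPF n 1 1 f) (i : Fin n) : f i ≤ n := by
  obtain ⟨hpos, σ, hmono, hb⟩ := hf
  have := hb (σ.symm i)
  have h2 := (σ.symm i).isLt
  simp only [Equiv.apply_symm_apply] at this
  omega

/-- "Goodness" of a `ZMod (n+1)`-valued tuple: it corresponds (by adding 1 to values)
to a parking function. -/
def Good (n : ℕ) (g : Fin n → ZMod (n + 1)) : Prop :=
  ∀ k, 1 ≤ k → k ≤ n → k ≤ (univ.filter fun i => (g i).val < k).card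

/-- The cycle lemma: for `D` with period drop `-1` over `n+1`, there is a unique
starting point `t ≤ n` all of whose partial increments within the period are nonnegative. -/
theorem cycle (n : ℕ) (D : ℕ → ℤ) (hD : ∀ m, D (m + (n + 1)) = D m - 1) :
    ∃! t, t ≤ n ∧ ∀ k, 1 ≤ k → k ≤ n → D t ≤ D (t + k) := by
  have hP : ∃ t, t ≤ n ∧ ∀ m ≤ n, D t ≤ D m := by
    obtain ⟨t, ht, hmin⟩ := Finset.exists_min_image (Finset.range (n + 1)) D
      ⟨0, by simp⟩
    exact ⟨t, by simpa using Finset.mem_range.mp ht |>.le |> fun _ => Nat.lt_succ_iff.mp (Finset.mem_range.mp ht),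
      fun m hm => hmin m (Finset.mem_range.mpr (by omega))⟩
  classical
  set t₀ := Nat.find hP with ht₀
  have htP := Nat.find_spec hP
  have strict : ∀ m, m < t₀ → D t₀ + 1 ≤ D m := by
    intro m hm
    by_contra h
    push_neg at h
    have hm' : D m ≤ D t₀ := by omega
    exact Nat.find_min hP hm ⟨by omega, fun m' hm'' => le_trans hm' (htP.2 m' hm'')⟩
  have hGood : ∀ k, 1 ≤ k → k ≤ n → D t₀ ≤ D (t₀ + k) := by
    intro k hk1 hkn
    by_cases h : t₀ + k ≤ n
    · exact htP.2 _ h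
    · have heq : t₀ + k = (t₀ + k - (n + 1)) + (n + 1) := by omega
      rw [heq, hD]
      have hm : t₀ + k - (n + 1) < t₀ := by omega
      have := strict _ hm
      omega
  have key : ∀ a b, a ≤ n → b ≤ n →
      (∀ k, 1 ≤ k → k ≤ n → D a ≤ D (a + k)) →
      (∀ k, 1 ≤ k → k ≤ n → D b ≤ D (b + k)) → a < b → False := by
    intro a b han hbn hA hB hab
    have h1 : D a ≤ D b := by
      have := hA (b - a) (by omega) (by omega)
      rwa [show a + (b - a) = b by omega] at this
    have h2 : D b ≤ D (b + (n + 1 - (b - a))) := hB _ (by omega) (by omega)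
    rw [show b + (n + 1 - (b - a)) = a + (n + 1) by omega, hD] at h2
    omega
  refine ⟨t₀, ⟨htP.1, hGood⟩, ?_⟩
  rintro t' ⟨ht'n, ht'A⟩
  rcases Nat.lt_trichotomy t' t₀ with h | h | h
  · exact absurd (key t' t₀ ht'n htP.1 ht'A hGood h) (by simp)
  · exact h
  · exact absurd (key t₀ t' htP.1 ht'n hGood ht'A h) (by simp)

theorem exists_unique_shift (n : ℕ) (f : Fin n → ZMod (n + 1)) :
    ∃! c : ZMod (n + 1), Good n (fun i => f i + c) := by
  classical
  set cnt : ZMod (n + 1) → ℕ := fun s => (univ.filter fun i => f i = s).card with hcnt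
  have hsum : ∑ s : ZMod (n + 1), cnt s = n := by
    have := Finset.card_eq_sum_card_fiberwise (s := (univ : Finset (Fin n)))
      (t := (univ : Finset (ZMod (n + 1)))) (f := f) (fun x _ => mem_univ _)
    simpa [cnt] using this.symm
  set S : ℕ → ℕ := fun m => ∑ j ∈ Finset.range m, cnt ((j : ℕ) : ZMod (n + 1)) with hSdef
  have hS : ∀ t k, S (t + k) = S t + ∑ j ∈ Finset.range k, cnt (((t + j : ℕ) : ZMod (n + 1))) :=
    fun t k => Finset.sum_range_add (fun j => cnt ((j : ℕ) : ZMod (n + 1))) t k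
  -- the sum over a full period is n
  have hfull : ∀ t : ℕ, ∑ j ∈ Finset.range (n + 1), cnt (((t + j : ℕ) : ZMod (n + 1))) = n := by
    intro t
    conv_rhs => rw [← hsum]
    apply Finset.sum_nbij' (i := fun j => ((t + j : ℕ) : ZMod (n + 1)))
      (j := fun s => (s - (t : ℕ)).val)
    · intro a _; exact mem_univ _
    · intro s _
      exact Finset.mem_range.mpr (ZMod.val_lt _)
    · intro j hj
      simp only [Finset.mem_range] at hj
      push_cast
      rw [add_sub_cancel_left]
      exact ZMod.val_cast_of_lt hj
    · intro s _
      push_cast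
      rw [ZMod.natCast_zmod_val, add_sub_cancel]
    · intro j _; rfl
  have hper : ∀ m, S (m + (n + 1)) = S m + n := fun m => by rw [hS, hfull]
  set D : ℕ → ℤ := fun m => (S m : ℤ) - m with hDdef
  have hD : ∀ m, D (m + (n + 1)) = D m - 1 := by
    intro m
    simp only [hDdef, hper m]
    push_cast
    ring
  obtain ⟨t₀, ⟨ht₀n, ht₀⟩, huniq⟩ := cycle n D hD
  -- counting an arc
  have harc : ∀ (t k : ℕ), k ≤ n →
      (univ.filter fun i => ∃ j < k, f i = ((t + j : ℕ) : ZMod (n + 1))).card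
        = ∑ j ∈ Finset.range k, cnt (((t + j : ℕ) : ZMod (n + 1))) := by
    intro t k hk
    induction k with
    | zero => simp
    | succ k ih =>
      rw [Finset.sum_range_succ, ← ih (by omega)]
      have hsplit : (univ.filter fun i => ∃ j < k + 1, f i = ((t + j : ℕ) : ZMod (n + 1)))
          = (univ.filter fun i => ∃ j < k, f i = ((t + j : ℕ) : ZMod (n + 1)))
            ∪ (univ.filter fun i => f i = ((t + k : ℕ) : ZMod (n + 1))) := by
        ext i
        simp only [Finset.mem_filter, Finset.mem_union, mem_univ, true_and]
        constructor
        · rintro ⟨j, hj, hfi⟩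
          rcases Nat.lt_or_ge j k with h | h
          · exact Or.inl ⟨j, h, hfi⟩
          · have : j = k := by omega
            exact Or.inr (this ▸ hfi)
        · rintro (⟨j, hj, hfi⟩ | hfi)
          · exact ⟨j, by omega, hfi⟩
          · exact ⟨k, by omega, hfi⟩
      rw [hsplit, Finset.card_union_of_disjoint]
      rw [Finset.disjoint_left]
      intro i hi hi'
      simp only [Finset.mem_filter, mem_univ, true_and] at hi hi'
      obtain ⟨j, hj, hfi⟩ := hi
      rw [hi'] at hfi
      have := (ZMod.natCast_eq_natCast_iff _ _ _).mp hfi.symm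
      have h2 := Nat.ModEq.add_left_cancel' t this
      unfold Nat.ModEq at h2
      rw [Nat.mod_eq_of_lt (by omega), Nat.mod_eq_of_lt (by omega)] at h2
      omega
  -- translation between Good and the D-condition
  have hgood_iff : ∀ c : ZMod (n + 1),
      Good n (fun i => f i + c) ↔
        (∀ k, 1 ≤ k → k ≤ n → D ((-c).val) ≤ D ((-c).val + k)) := by
    intro c
    have hcast : (((-c).val : ℕ) : ZMod (n + 1)) = -c := ZMod.natCast_zmod_val _
    have hfilter : ∀ k, k ≤ n →
        (univ.filter fun i => ((f i + c).val < k))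
          = (univ.filter fun i => ∃ j < k, f i = (((-c).val + j : ℕ) : ZMod (n + 1))) := by
      intro k hk
      apply Finset.filter_congr
      intro i _
      constructor
      · intro hv
        refine ⟨(f i + c).val, hv, ?_⟩
        push_cast
        rw [hcast, ZMod.natCast_zmod_val]
        ring
      · rintro ⟨j, hj, hfi⟩
        have : f i + c = (j : ℕ) := by
          rw [hfi]; push_cast; rw [hcast]; ring
        rw [this, ZMod.val_cast_of_lt (by omega)]
        exact hj
    constructor
    · intro hg k hk1 hkn
      have := hg k hk1 hkn
      rw [hfilter k hkn, harc _ k hkn] at this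
      have h2 := hS ((-c).val) k
      simp only [hDdef]
      omega
    · intro hd k hk1 hkn
      have := hd k hk1 hkn
      simp only [hDdef] at this
      have h2 := hS ((-c).val) k
      rw [hfilter k hkn, harc _ k hkn]
      omega
  refine ⟨-(t₀ : ZMod (n + 1)), ?_, ?_⟩
  · show Good n fun i => f i + -(t₀ : ZMod (n + 1))
    rw [hgood_iff]
    have : (-(-(t₀ : ZMod (n + 1)))).val = t₀ := by
      rw [neg_neg]; exact ZMod.val_cast_of_lt (by omega)
    rw [this]
    exact ht₀
  · intro c hc
    have hc2 : Good n fun i => f i + c := hc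
    rw [hgood_iff] at hc2
    have ht : (-c).val = t₀ := huniq _ ⟨by have := ZMod.val_lt (-c); omega, hc2⟩
    have : -c = (t₀ : ZMod (n + 1)) := by rw [← ht, ZMod.natCast_zmod_val]
    rw [← neg_neg c, this]

end PFAux

/-- The number of classical parking functions of length `n` is `(n+1)^(n-1)`. -/
theorem stmt_0 (n : ℕ) (hn : 0 < n) :
    {f : Fin n → ℕ | IsXPF n 1 1 f}.ncard = (n + 1) ^ (n - 1) := by
  classical
  rw [← Nat.card_coe_set_eq]
  have goodOf : ∀ f : Fin n → ℕ, IsXPF n 1 1 f →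
      PFAux.Good n (fun i => ((f i - 1 : ℕ) : ZMod (n + 1))) := by
    intro f hf
    obtain ⟨hpos, hcnt⟩ := (PFAux.isXPF_iff n f).mp hf
    have hle := PFAux.isXPF_le hf
    intro k hk1 hkn
    have : (univ.filter fun i => (((f i - 1 : ℕ) : ZMod (n + 1))).val < k)
        = (univ.filter fun i => f i ≤ k) := by
      apply Finset.filter_congr
      intro i _
      rw [ZMod.val_cast_of_lt (by have := hle i; omega)]
      have := hpos i
      omega
    rw [this]
    exact hcnt k hk1 hkn
  have pfOf : ∀ g : Fin n → ZMod (n + 1), PFAux.Good n g →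
      IsXPF n 1 1 (fun i => (g i).val + 1) := by
    intro g hg
    rw [PFAux.isXPF_iff]
    refine ⟨fun i => by omega, fun k hk1 hkn => ?_⟩
    have : (univ.filter fun i => (g i).val + 1 ≤ k)
        = (univ.filter fun i => (g i).val < k) := by
      apply Finset.filter_congr
      intro i _
      omega
    rw [this]
    exact hg k hk1 hkn
  have e1 : {f : Fin n → ℕ // IsXPF n 1 1 f} ≃ {g : Fin n → ZMod (n + 1) // PFAux.Good n g} :=
    { toFun := fun x => ⟨fun i => ((x.1 i - 1 : ℕ) : ZMod (n + 1)), goodOf x.1 x.2⟩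
      invFun := fun y => ⟨fun i => (y.1 i).val + 1, pfOf y.1 y.2⟩
      left_inv := by
        rintro ⟨f, hf⟩
        ext i
        have h1 := hf.1 i
        have h2 := PFAux.isXPF_le hf i
        simp only
        rw [ZMod.val_cast_of_lt (by omega)]
        omega
      right_inv := by
        rintro ⟨g, hg⟩
        ext i
        simp [ZMod.natCast_zmod_val] }
  have e2 : {g : Fin n → ZMod (n + 1) // PFAux.Good n g} × ZMod (n + 1) ≃ (Fin n → ZMod (n + 1)) := by
    apply Equiv.ofBijective (fun p => fun i => p.1.1 i + p.2)
    constructor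
    · rintro ⟨⟨g, hg⟩, c⟩ ⟨⟨g', hg'⟩, c'⟩ h
      simp only at h
      set F : Fin n → ZMod (n + 1) := fun i => g i + c with hF
      have hob := PFAux.exists_unique_shift n F
      have hgood1 : PFAux.Good n (fun i => F i + (-c)) := by
        have : (fun i => F i + (-c)) = g := by funext i; show g i + c + -c = g i; ring
        rw [this]; exact hg
      have hgood2 : PFAux.Good n (fun i => F i + (-c')) := by
        have : (fun i => F i + (-c')) = g' := by
          funext i
          have hFi : F i = g' i + c' := congrFun h i
          show F i + -c' = g' i
          rw [hFi]; ring
        rw [this]; exact hg'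
      have hcc : -c = -c' := hob.unique hgood1 hgood2
      have hcc' : c = c' := by
        have := congrArg Neg.neg hcc; simpa using this
      subst hcc'
      have hgg : g = g' := by
        funext i
        have := congrFun h i
        exact add_right_cancel this
      simp [hgg]
    · intro F
      obtain ⟨c, hc, -⟩ := PFAux.exists_unique_shift n F
      refine ⟨⟨⟨fun i => F i + c, hc⟩, -c⟩, ?_⟩
      funext i
      simp
  have h2 : Nat.card {g : Fin n → ZMod (n + 1) // PFAux.Good n g} * Nat.card (ZMod (n + 1))
      = Nat.card (Fin n → ZMod (n + 1)) := by
    rw [← Nat.card_prod]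
    exact Nat.card_congr e2
  have h3 : Nat.card (ZMod (n + 1)) = n + 1 := by
    simp [Nat.card_eq_fintype_card, ZMod.card]
  have h4 : Nat.card (Fin n → ZMod (n + 1)) = (n + 1) ^ n := by
    simp [Nat.card_eq_fintype_card, Fintype.card_fun, ZMod.card]
  have h5 : Nat.card {g : Fin n → ZMod (n + 1) // PFAux.Good n g} = (n + 1) ^ (n - 1) := by
    have hpow : (n + 1) ^ n = (n + 1) ^ (n - 1) * (n + 1) := by
      rw [← pow_succ, show n - 1 + 1 = n by omega]
    rw [h3, h4, hpow] at h2
    exact Nat.eq_of_mul_eq_mul_right (by omega) h2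
  calc Nat.card {f : Fin n → ℕ | IsXPF n 1 1 f}
      = Nat.card {g : Fin n → ZMod (n + 1) // PFAux.Good n g} := Nat.card_congr e1
    _ = (n + 1) ^ (n - 1) := h5
end

section
/- For positive integers a, b, n, the number of x-parking functions of length n with x = (a,b,b,...,b) is a(a+nb)^(n-1). -/
open Finset MeasureTheory

def runMin (F : ℕ → ℤ) : ℕ → ℤ
  | 0 => F 0
  | t+1 => min (runMin F t) (F (t+1))

lemma runMin_le (F : ℕ → ℤ) : ∀ t, ∀ j ≤ t, runMin F t ≤ F j := by
  intro t
  induction t with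
  | zero => intro j hj; simp_all [runMin]
  | succ t ih =>
    intro j hj
    rcases Nat.lt_or_ge j (t+1) with h | h
    · exact le_trans (min_le_left _ _) (ih j (by omega))
    · have : j = t+1 := by omega
      subst this; exact min_le_right _ _

lemma le_runMin (F : ℕ → ℤ) (c : ℤ) : ∀ t, (∀ j ≤ t, c ≤ F j) → c ≤ runMin F t := by
  intro t
  induction t with
  | zero => intro h; simpa [runMin] using h 0 le_rfl
  | succ t ih =>
    intro h
    exact le_min (ih fun j hj => h j (by omega)) (h (t+1) le_rfl)

lemma count_ladder (F : ℕ → ℤ) (hstep : ∀ t, F t - 1 ≤ F (t+1)) :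
    ∀ t, (((Finset.Icc 1 t).filter (fun q => F q < runMin F (q-1))).card : ℤ)
      = F 0 - runMin F t := by
  intro t
  induction t with
  | zero => simp [runMin]
  | succ t ih =>
    have hins : Finset.Icc 1 (t+1) = insert (t+1) (Finset.Icc 1 t) := by
      ext x; simp [Finset.mem_Icc, Finset.mem_insert]; omega
    rw [hins, Finset.filter_insert]
    by_cases h : F (t+1) < runMin F ((t+1)-1)
    · have h' : F (t+1) < runMin F t := by simpa using h
      rw [if_pos h, Finset.card_insert_of_notMem (by simp)]
      have hmin : runMin F (t+1) = runMin F t - 1 := by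
        have h1 : runMin F t - 1 ≤ F (t+1) :=
          le_trans (by linarith [runMin_le F t t le_rfl]) (hstep t)
        simp only [runMin]
        omega
      push_cast
      rw [ih, hmin]; ring
    · have h' : ¬ F (t+1) < runMin F t := by simpa using h
      rw [if_neg h]
      have hmin : runMin F (t+1) = runMin F t := by
        simp only [runMin]; omega
      rw [ih, hmin]

lemma runMin_per (F : ℕ → ℤ) (m a : ℕ) (hm : 0 < m)
    (hper : ∀ t, F (t + m) = F t - a) :
    runMin F (2*m) = runMin F m - a := by
  apply le_antisymm
  · have : ∀ j ≤ m, runMin F (2*m) + a ≤ F j := by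
      intro j hj
      have := runMin_le F (2*m) (j + m) (by omega)
      rw [hper j] at this; omega
    have := le_runMin F (runMin F (2*m) + a) m this
    omega
  · apply le_runMin
    intro j hj
    rcases Nat.lt_or_ge j m with h | h
    · have := runMin_le F m j (by omega); omega
    · obtain ⟨j', rfl⟩ : ∃ j', j = j' + m := ⟨j - m, by omega⟩
      rw [hper j']
      have := runMin_le F m j' (by omega); omega

lemma ladder_count (F : ℕ → ℤ) (m a : ℕ) (hm : 0 < m) (ha : 0 < a)
    (hstep : ∀ t, F t - 1 ≤ F (t+1)) (hper : ∀ t, F (t + m) = F t - a) :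
    (((Finset.Icc (m+1) (2*m)).filter
      (fun q => ∀ j ∈ Finset.Ico (q - m) q, F q < F j)).card) = a := by
  -- first: on Icc (m+1) (2m), the window condition equals the ladder condition
  have hequiv : ∀ q ∈ Finset.Icc (m+1) (2*m),
      ((∀ j ∈ Finset.Ico (q - m) q, F q < F j) ↔ F q < runMin F (q-1)) := by
    intro q hq
    simp only [Finset.mem_Icc] at hq
    constructor
    · intro h
      have hall : ∀ j ≤ q - 1, F q < F j := by
        intro j hj
        rcases Nat.lt_or_ge j (q - m) with hlt | hge
        · have hjm : j + m ∈ Finset.Ico (q-m) q := by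
            simp [Finset.mem_Ico]; omega
          have := h (j + m) hjm
          rw [hper j] at this
          omega
        · exact h j (by simp [Finset.mem_Ico]; omega)
      -- F q < min over [0, q-1]
      have : F q ≤ runMin F (q-1) - 1 := by
        have := le_runMin F (F q + 1) (q-1) (fun j hj => by have := hall j hj; omega)
        omega
      omega
    · intro h j hj
      simp only [Finset.mem_Ico] at hj
      have := runMin_le F (q-1) j (by omega)
      omega
  rw [Finset.filter_congr hequiv]
  -- split Icc 1 (2m) into Icc 1 m and Icc (m+1) (2m)
  have hsplit : (Finset.Icc 1 (2*m)).filter (fun q => F q < runMin F (q-1))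
      = ((Finset.Icc 1 m).filter (fun q => F q < runMin F (q-1))) ∪
        ((Finset.Icc (m+1) (2*m)).filter (fun q => F q < runMin F (q-1))) := by
    rw [← Finset.filter_union]
    congr 1
    ext x; simp [Finset.mem_Icc]; omega
  have hdisj : Disjoint ((Finset.Icc 1 m).filter (fun q => F q < runMin F (q-1)))
      ((Finset.Icc (m+1) (2*m)).filter (fun q => F q < runMin F (q-1))) := by
    apply Finset.disjoint_filter_filter
    simp [Finset.disjoint_left, Finset.mem_Icc]; omega
  have h1 := count_ladder F hstep (2*m)
  have h2 := count_ladder F hstep m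
  have h3 := runMin_per F m a hm hper
  have hcard : (((Finset.Icc 1 (2*m)).filter (fun q => F q < runMin F (q-1))).card : ℤ)
      = (((Finset.Icc 1 m).filter (fun q => F q < runMin F (q-1))).card : ℤ)
      + (((Finset.Icc (m+1) (2*m)).filter (fun q => F q < runMin F (q-1))).card : ℤ) := by
    rw [hsplit]; push_cast [Finset.card_union_of_disjoint hdisj]; ring
  have : (((Finset.Icc (m+1) (2*m)).filter (fun q => F q < runMin F (q-1))).card : ℤ) = a := by
    rw [h1, h2] at hcard; omega
  exact_mod_cast this

lemma claimE (n a b : ℕ) (ha : 0 < a) (hb : 0 < b) (w : Fin n → ℕ)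
    (hw : ∀ i, w i < a + n * b) :
    (∀ j : Fin n, (j:ℕ) + 1 ≤ (Finset.univ.filter fun i => w i < a + (j:ℕ) * b).card) ↔
    (∀ t < a + n * b, b * (Finset.univ.filter fun i => t ≤ w i).card ≤ a + n * b - 1 - t) := by
  have hcompl : ∀ t : ℕ, (Finset.univ.filter fun i => t ≤ w i).card
      = n - (Finset.univ.filter fun i => w i < t).card := by
    intro t
    have h1 := Finset.card_filter_add_card_filter_not
      (s := (Finset.univ : Finset (Fin n))) (p := fun i => w i < t)
    have heq : (Finset.univ.filter fun i => ¬ w i < t) = (Finset.univ.filter fun i => t ≤ w i) := by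
      apply Finset.filter_congr; intro i _; simp
    rw [heq] at h1
    simp only [Finset.card_univ, Fintype.card_fin] at h1
    omega
  have hCle : ∀ t : ℕ, (Finset.univ.filter fun i => w i < t).card ≤ n := by
    intro t; exact le_trans (Finset.card_filter_le _ _) (by simp)
  constructor
  · intro h t ht
    rw [hcompl t]
    set C := (Finset.univ.filter fun i => w i < t).card with hC
    have hCle' := hCle t
    rcases Nat.lt_or_ge t a with hta | hta
    · have h1 : b * (n - C) ≤ b * n := Nat.mul_le_mul_left b (by omega)
      have h2 : b * n = n * b := Nat.mul_comm b n
      omega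
    · set j := (t - a) / b with hj
      have hjn : j < n := by
        rw [hj]
        have hcm : b * n = n * b := Nat.mul_comm b n
        exact Nat.div_lt_of_lt_mul (by omega)
      have hjle : a + j * b ≤ t := by
        have := Nat.div_mul_le_self (t - a) b
        rw [hj]; omega
      have hjub : t - a < (j + 1) * b := (Nat.div_lt_iff_lt_mul hb).mp (by omega)
      have hcnt := h ⟨j, hjn⟩
      simp only at hcnt
      have hmono : (Finset.univ.filter fun i => w i < a + j * b)
          ⊆ (Finset.univ.filter fun i => w i < t) := by
        intro i hi
        simp only [Finset.mem_filter, Finset.mem_univ, true_and] at hi ⊢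
        omega
      have hCge : j + 1 ≤ C := le_trans hcnt (Finset.card_le_card hmono)
      have h1 : b * (n - C) ≤ b * (n - (j+1)) := Nat.mul_le_mul_left b (by omega)
      have h2 : b * (n - (j+1)) + b * (j+1) = b * n := by
        rw [← Nat.mul_add]
        congr 1; omega
      have h3 : b * n = n * b := Nat.mul_comm b n
      have h4 : b * (j+1) = (j+1) * b := Nat.mul_comm b (j+1)
      omega
  · intro h j
    set t := a + (j:ℕ) * b with ht
    have htm : t < a + n * b := by
      have h1 : (j:ℕ) < n := j.isLt
      have : (j:ℕ) * b < n * b := Nat.mul_lt_mul_of_lt_of_le h1 le_rfl hb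
      omega
    have hineq := h t htm
    rw [hcompl t] at hineq
    set C := (Finset.univ.filter fun i => w i < t).card with hC
    have hCle' := hCle t
    by_contra hcc
    push_neg at hcc
    have hCj : C ≤ (j:ℕ) := by omega
    have hjn : (j:ℕ) < n := j.isLt
    have h1 : b * (n - (j:ℕ)) ≤ b * (n - C) := Nat.mul_le_mul_left b (by omega)
    have h2 : b * (n - (j:ℕ)) + b * (j:ℕ) = b * n := by
      rw [← Nat.mul_add]; congr 1; omega
    have h3 : b * n = n * b := Nat.mul_comm b n
    have h4 : b * (j:ℕ) = (j:ℕ) * b := Nat.mul_comm b _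
    have h5 : 0 < b * (n - (j:ℕ)) := Nat.mul_pos hb (by omega)
    omega

lemma mod2 (x m : ℕ) (hm : 0 < m) (hx : x < 2*m) :
    (x % m = x ∧ x < m) ∨ (x % m = x - m ∧ m ≤ x) := by
  rcases Nat.lt_or_ge x m with h | h
  · exact Or.inl ⟨Nat.mod_eq_of_lt h, h⟩
  · right
    refine ⟨?_, h⟩
    rw [Nat.mod_eq_sub_mod h, Nat.mod_eq_of_lt (by omega)]

lemma window (n m : ℕ) (hm : 0 < m) (v : Fin n → ℕ) (hv : ∀ i, v i < m)
    (κ t : ℕ) (hκ : κ < m) (htm : t < m) :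
    (∑ s ∈ Finset.range (t + m - κ), (Finset.univ.filter fun i => v i = s % m).card)
      + (Finset.univ.filter fun i => t ≤ (v i + κ) % m).card
    = ∑ s ∈ Finset.range (2*m - κ), (Finset.univ.filter fun i => v i = s % m).card := by
  have hle : t + m - κ ≤ 2*m - κ := by omega
  rw [Finset.range_eq_Ico,
    Finset.range_eq_Ico, ← Finset.sum_Ico_consecutive _ (Nat.zero_le (t+m-κ)) hle]
  congr 1
  rw [Finset.card_eq_sum_card_fiberwise
    (f := fun i => (v i + κ) % m + (m - κ)) (t := Finset.Ico (t+m-κ) (2*m-κ))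
    (by
      intro i hi
      simp only [Finset.mem_coe, Finset.mem_filter, Finset.mem_univ, true_and] at hi
      have h1 : (v i + κ) % m < m := Nat.mod_lt _ hm
      simp only [Finset.mem_coe, Finset.mem_Ico]
      omega)]
  apply Finset.sum_congr rfl
  intro s hs
  simp only [Finset.mem_Ico] at hs
  congr 1
  ext i
  simp only [Finset.mem_filter, Finset.mem_univ, true_and]
  have hx := mod2 (v i + κ) m hm (by have := hv i; omega)
  have hsm := mod2 s m hm (by omega)
  have hvi := hv i
  omega

lemma keyC (n a b : ℕ) (ha : 0 < a) (hb : 0 < b) [NeZero (a + n*b)] (u : Fin n → ZMod (a + n*b)) :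
    (Finset.univ.filter fun k : ZMod (a + n*b) =>
      ∀ j : Fin n, (j:ℕ) + 1 ≤ (Finset.univ.filter fun i => (u i + k).val < a + (j:ℕ) * b).card).card
    = a := by
  have hm0 : 0 < a + n*b := by omega
  set G : ℕ → ℕ := fun x => ∑ s ∈ Finset.range x, (Finset.univ.filter fun i => (u i).val = s % (a + n*b)).card with hG
  set F : ℕ → ℤ := fun x => ((b * G x : ℕ) : ℤ) - (x : ℤ) with hF
  have hG0 : G 0 = 0 := by simp [hG]
  have hGm : G (a + n*b) = n := by
    have h1 : (Finset.univ : Finset (Fin n)).card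
        = ∑ s ∈ Finset.range (a + n*b), ((Finset.univ : Finset (Fin n)).filter fun i => (u i).val = s).card := by
      apply Finset.card_eq_sum_card_fiberwise
      intro i _
      simp only [Finset.mem_coe, Finset.mem_range]
      exact ZMod.val_lt (u i)
    have h2 : G (a + n*b) = ∑ s ∈ Finset.range (a + n*b), ((Finset.univ : Finset (Fin n)).filter fun i => (u i).val = s).card := by
      rw [hG]
      apply Finset.sum_congr rfl
      intro s hs
      simp only [Finset.mem_range] at hs
      rw [Nat.mod_eq_of_lt hs]
    simp only [Finset.card_univ, Fintype.card_fin] at h1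
    omega
  have hGstep : ∀ x, G (x+1) = G x + (Finset.univ.filter fun i => (u i).val = x % (a + n*b)).card := by
    intro x
    rw [hG]; simp [Finset.sum_range_succ]
  have hGper : ∀ x, G (x + (a + n*b)) = G x + n := by
    intro x
    induction x with
    | zero => rw [Nat.zero_add, hGm, hG0]; omega
    | succ x ih =>
      have e1 : x + 1 + (a + n*b) = (x + (a + n*b)) + 1 := by omega
      rw [e1, hGstep (x+(a+n*b)), hGstep x, ih, Nat.add_mod_right x (a+n*b)]
      omega
  have hFstep : ∀ x, F x - 1 ≤ F (x+1) := by
    intro x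
    have e1 : F x = ((b * G x : ℕ) : ℤ) - (x : ℤ) := rfl
    have e2 : F (x+1) = ((b * G (x+1) : ℕ) : ℤ) - ((x+1 : ℕ) : ℤ) := rfl
    have h1 : b * G (x+1) = b * G x + b * (Finset.univ.filter fun i => (u i).val = x % (a + n*b)).card := by
      rw [hGstep x, Nat.mul_add]
    omega
  have hFper : ∀ x, F (x + (a + n*b)) = F x - a := by
    intro x
    have e1 : F x = ((b * G x : ℕ) : ℤ) - (x : ℤ) := rfl
    have e2 : F (x+(a + n*b)) = ((b * G (x+(a + n*b)) : ℕ) : ℤ) - ((x+(a + n*b) : ℕ) : ℤ) := rfl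
    have h1 : b * G (x + (a + n*b)) = b * G x + b * n := by rw [hGper x, Nat.mul_add]
    have h2 : b * n = n * b := Nat.mul_comm b n
    omega
  have hiff : ∀ k : ZMod (a + n*b),
      ((∀ j : Fin n, (j:ℕ) + 1 ≤ (Finset.univ.filter fun i => (u i + k).val < a + (j:ℕ) * b).card)
        ↔ (∀ j ∈ Finset.Ico ((2*(a + n*b) - k.val) - (a + n*b)) (2*(a + n*b) - k.val),
            F (2*(a + n*b) - k.val) < F j)) := by
    intro k
    have hκ : k.val < a + n*b := ZMod.val_lt k
    have hval : ∀ i, (u i + k).val = ((u i).val + k.val) % (a + n*b) := by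
      intro i; rw [ZMod.val_add]
    have hwlt : ∀ i, (u i + k).val < a + n*b := fun i => ZMod.val_lt _
    rw [claimE n a b ha hb (fun i => (u i + k).val)
      (fun i => by show (u i + k).val < a + n*b; exact hwlt i)]
    constructor
    · intro h j hj
      simp only [Finset.mem_Ico] at hj
      set t := j - ((a + n*b) - k.val) with ht
      have ht1 : t < a + n*b := by omega
      have ht2 : j = t + (a + n*b) - k.val := by omega
      have hwin : (∑ s ∈ Finset.range (t + (a + n*b) - k.val), (Finset.univ.filter fun i => (u i).val = s % (a + n*b)).card)
          + (Finset.univ.filter fun i => t ≤ ((u i).val + k.val) % (a + n*b)).card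
          = ∑ s ∈ Finset.range (2*(a + n*b) - k.val), (Finset.univ.filter fun i => (u i).val = s % (a + n*b)).card :=
        window n (a + n*b) hm0 (fun i => (u i).val) (fun i => ZMod.val_lt (u i)) k.val t hκ ht1
      have hcond := h t (by omega)
      simp only [hval] at hcond
      have hGle : G (t + (a + n*b) - k.val) + (Finset.univ.filter fun i => t ≤ ((u i).val + k.val) % (a + n*b)).card
          = G (2*(a + n*b) - k.val) := hwin
      have hmul : b * G (2*(a + n*b) - k.val) = b * G (t + (a + n*b) - k.val)
          + b * (Finset.univ.filter fun i => t ≤ ((u i).val + k.val) % (a + n*b)).card := by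
        rw [← hGle, Nat.mul_add]
      have e1 : F (2*(a + n*b) - k.val) = ((b * G (2*(a + n*b) - k.val) : ℕ) : ℤ) - ((2*(a + n*b) - k.val : ℕ) : ℤ) := rfl
      have e2 : F (t + (a + n*b) - k.val) = ((b * G (t + (a + n*b) - k.val) : ℕ) : ℤ) - ((t + (a + n*b) - k.val : ℕ) : ℤ) := rfl
      rw [ht2]
      omega
    · intro h t htm
      simp only [hval]
      have hwin : (∑ s ∈ Finset.range (t + (a + n*b) - k.val), (Finset.univ.filter fun i => (u i).val = s % (a + n*b)).card)
          + (Finset.univ.filter fun i => t ≤ ((u i).val + k.val) % (a + n*b)).card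
          = ∑ s ∈ Finset.range (2*(a + n*b) - k.val), (Finset.univ.filter fun i => (u i).val = s % (a + n*b)).card :=
        window n (a + n*b) hm0 (fun i => (u i).val) (fun i => ZMod.val_lt (u i)) k.val t hκ htm
      have hj : (t + (a + n*b) - k.val) ∈ Finset.Ico ((2*(a + n*b) - k.val) - (a + n*b)) (2*(a + n*b) - k.val) := by
        simp only [Finset.mem_Ico]; omega
      have hFlt := h (t + (a + n*b) - k.val) hj
      have hGle : G (t + (a + n*b) - k.val) + (Finset.univ.filter fun i => t ≤ ((u i).val + k.val) % (a + n*b)).card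
          = G (2*(a + n*b) - k.val) := hwin
      have hmul : b * G (2*(a + n*b) - k.val) = b * G (t + (a + n*b) - k.val)
          + b * (Finset.univ.filter fun i => t ≤ ((u i).val + k.val) % (a + n*b)).card := by
        rw [← hGle, Nat.mul_add]
      have e1 : F (2*(a + n*b) - k.val) = ((b * G (2*(a + n*b) - k.val) : ℕ) : ℤ) - ((2*(a + n*b) - k.val : ℕ) : ℤ) := rfl
      have e2 : F (t + (a + n*b) - k.val) = ((b * G (t + (a + n*b) - k.val) : ℕ) : ℤ) - ((t + (a + n*b) - k.val : ℕ) : ℤ) := rfl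
      omega
  have hcard : (Finset.univ.filter fun k : ZMod (a + n*b) =>
      ∀ j : Fin n, (j:ℕ) + 1 ≤ (Finset.univ.filter fun i => (u i + k).val < a + (j:ℕ) * b).card).card
      = ((Finset.Icc ((a + n*b)+1) (2*(a + n*b))).filter
          (fun q => ∀ j ∈ Finset.Ico (q - (a + n*b)) q, F q < F j)).card := by
    apply Finset.card_bij (i := fun k _ => 2*(a + n*b) - k.val)
    · intro k hk
      simp only [Finset.mem_filter, Finset.mem_univ, true_and] at hk
      simp only [Finset.mem_filter, Finset.mem_Icc]
      have hκ : k.val < a + n*b := ZMod.val_lt k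
      exact ⟨⟨by omega, by omega⟩, (hiff k).mp hk⟩
    · intro k₁ h₁ k₂ h₂ heq
      have hκ1 : k₁.val < a + n*b := ZMod.val_lt k₁
      have hκ2 : k₂.val < a + n*b := ZMod.val_lt k₂
      have : k₁.val = k₂.val := by omega
      exact ZMod.val_injective (a + n*b) this
    · intro q hq
      simp only [Finset.mem_filter, Finset.mem_Icc] at hq
      refine ⟨((2*(a + n*b) - q : ℕ) : ZMod (a + n*b)), ?_, ?_⟩
      · simp only [Finset.mem_filter, Finset.mem_univ, true_and]
        apply (hiff _).mpr
        have hv : ((2*(a + n*b) - q : ℕ) : ZMod (a + n*b)).val = 2*(a + n*b) - q := ZMod.val_cast_of_lt (by omega)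
        rw [hv]
        have he : 2*(a + n*b) - (2*(a + n*b) - q) = q := by omega
        rw [he]
        exact hq.2
      · have hv : ((2*(a + n*b) - q : ℕ) : ZMod (a + n*b)).val = 2*(a + n*b) - q := ZMod.val_cast_of_lt (by omega)
        rw [hv]
        omega
  rw [hcard]
  exact ladder_count F (a + n*b) a hm0 ha hFstep hFper

lemma isXPF_iff_count (n a b : ℕ) (f : Fin n → ℕ) :
    IsXPF n a b f ↔ ((∀ i, 1 ≤ f i) ∧
      ∀ j : Fin n, (j : ℕ) + 1 ≤ (Finset.univ.filter fun i => f i ≤ a + (j:ℕ) * b).card) := by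
  constructor
  · rintro ⟨hpos, σ, hmono, hbd⟩
    refine ⟨hpos, fun j => ?_⟩
    have hsub : (Finset.Iic j).image σ ⊆ Finset.univ.filter fun i => f i ≤ a + (j:ℕ)*b := by
      intro i hi
      simp only [Finset.mem_image, Finset.mem_Iic] at hi
      obtain ⟨i', hi', rfl⟩ := hi
      simp only [Finset.mem_filter, Finset.mem_univ, true_and]
      calc f (σ i') ≤ a + (i' : ℕ) * b := hbd i'
        _ ≤ a + (j:ℕ) * b := by
            have : (i' : ℕ) ≤ (j : ℕ) := hi'
            nlinarith
    calc (j:ℕ) + 1 = (Finset.Iic j).card := (Fin.card_Iic j).symm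
      _ = ((Finset.Iic j).image σ).card := (Finset.card_image_of_injective _ σ.injective).symm
      _ ≤ _ := Finset.card_le_card hsub
  · rintro ⟨hpos, hcount⟩
    refine ⟨hpos, Tuple.sort f, Tuple.monotone_sort f, fun j => ?_⟩
    by_contra hcon
    push_neg at hcon
    have hsub : (Finset.univ.filter fun i => f i ≤ a + (j:ℕ)*b) ⊆ (Finset.Iio j).image (Tuple.sort f) := by
      intro i hi
      simp only [Finset.mem_filter, Finset.mem_univ, true_and] at hi
      simp only [Finset.mem_image, Finset.mem_Iio]
      refine ⟨(Tuple.sort f).symm i, ?_, by simp⟩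
      by_contra hge
      push_neg at hge
      have := Tuple.monotone_sort f (a := j) (b := (Tuple.sort f).symm i) hge
      simp only [Function.comp_apply, Equiv.apply_symm_apply] at this
      omega
    have := Finset.card_le_card hsub
    rw [Finset.card_image_of_injective _ (Tuple.sort f).injective, Fin.card_Iio] at this
    have := hcount j
    omega


lemma xpf_bound (n a b : ℕ) (f : Fin n → ℕ) (h : IsXPF n a b f) (i : Fin n) :
    f i ≤ a + (n-1) * b := by
  obtain ⟨pos, σ, mono, hbd⟩ := h
  have h1 := hbd (σ.symm i)
  rw [Equiv.apply_symm_apply] at h1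
  have h2 : ((σ.symm i : Fin n) : ℕ) ≤ n - 1 := by
    have := (σ.symm i).isLt; omega
  have h3 : ((σ.symm i : Fin n) : ℕ) * b ≤ (n-1) * b := Nat.mul_le_mul_right b h2
  omega


/-- The number of x-parking functions of length `n` for `x = (a,b,...,b)`
is `a * (a + n*b)^(n-1)`. -/
theorem stmt_1 (n a b : ℕ) (hn : 0 < n) (ha : 0 < a) (hb : 0 < b) :
    {f : Fin n → ℕ | IsXPF n a b f}.ncard = a * (a + n * b) ^ (n - 1) := by
  haveI : NeZero (a + n * b) := ⟨by omega⟩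
  have hm0 : 0 < a + n * b := by omega
  have hnb : (n - 1) * b + b = n * b := by
    have h2 : n - 1 + 1 = n := Nat.sub_add_cancel hn
    calc (n-1)*b + b = (n-1+1)*b := (Nat.succ_mul (n-1) b).symm
      _ = n*b := by rw [h2]
  have hset : {f : Fin n → ℕ | IsXPF n a b f}
      = (fun (u : Fin n → ZMod (a + n*b)) (i : Fin n) => (u i).val + 1) ''
        {u | ∀ j : Fin n, (j:ℕ) + 1 ≤ (Finset.univ.filter fun i => (u i).val < a + (j:ℕ) * b).card} := by
    ext f
    simp only [Set.mem_setOf_eq, Set.mem_image]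
    constructor
    · intro hf
      have hpos := hf.1
      have hbd := xpf_bound n a b f hf
      refine ⟨fun i => ((f i - 1 : ℕ) : ZMod (a + n*b)), ?_, ?_⟩
      · have hval : ∀ i, ((( f i - 1 : ℕ) : ZMod (a + n*b))).val = f i - 1 := by
          intro i
          apply ZMod.val_cast_of_lt
          have := hbd i; have := hpos i; omega
        intro j
        have hcnt := ((isXPF_iff_count n a b f).mp hf).2 j
        have heq : (Finset.univ.filter fun i => (((f i - 1 : ℕ) : ZMod (a + n*b))).val < a + (j:ℕ) * b)
            = (Finset.univ.filter fun i => f i ≤ a + (j:ℕ) * b) := by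
          apply Finset.filter_congr
          intro i _
          rw [hval i]
          have := hpos i
          omega
        rw [heq]
        exact hcnt
      · funext i
        have hv : ((( f i - 1 : ℕ) : ZMod (a + n*b))).val = f i - 1 := by
          apply ZMod.val_cast_of_lt
          have := hbd i; have := hpos i; omega
        simp only [hv]
        have := hpos i
        omega
    · rintro ⟨u, hu, rfl⟩
      apply (isXPF_iff_count n a b _).mpr
      refine ⟨fun i => by omega, fun j => ?_⟩
      have heq : (Finset.univ.filter fun i => (u i).val + 1 ≤ a + (j:ℕ) * b)
          = (Finset.univ.filter fun i => (u i).val < a + (j:ℕ) * b) := by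
        apply Finset.filter_congr
        intro i _
        omega
      rw [heq]
      exact hu j
  have hinj : Function.Injective (fun (u : Fin n → ZMod (a + n*b)) (i : Fin n) => (u i).val + 1) := by
    intro u v h
    funext i
    have h1 : (u i).val + 1 = (v i).val + 1 := congrFun h i
    exact ZMod.val_injective _ (by omega)
  rw [hset, Set.ncard_image_of_injective _ hinj]
  have hsetfin : {u : Fin n → ZMod (a + n*b) | ∀ j : Fin n, (j:ℕ) + 1 ≤ (Finset.univ.filter fun i => (u i).val < a + (j:ℕ) * b).card}
      = ↑(Finset.univ.filter fun u : Fin n → ZMod (a + n*b) =>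
          ∀ j : Fin n, (j:ℕ) + 1 ≤ (Finset.univ.filter fun i => (u i).val < a + (j:ℕ) * b).card) := by
    ext u; simp
  rw [hsetfin, Set.ncard_coe_finset]
  set N := (Finset.univ.filter fun u : Fin n → ZMod (a + n*b) =>
      ∀ j : Fin n, (j:ℕ) + 1 ≤ (Finset.univ.filter fun i => (u i).val < a + (j:ℕ) * b).card).card with hN
  have hshift : ∀ k : ZMod (a + n*b),
      (Finset.univ.filter fun u : Fin n → ZMod (a + n*b) =>
        ∀ j : Fin n, (j:ℕ) + 1 ≤ (Finset.univ.filter fun i => (u i + k).val < a + (j:ℕ) * b).card).card = N := by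
    intro k
    rw [hN]
    apply Finset.card_bij' (i := fun u _ => fun i => u i + k) (j := fun v _ => fun i => v i - k)
    · intro u hu
      simp only [Finset.mem_filter, Finset.mem_univ, true_and] at hu ⊢
      exact hu
    · intro v hv
      simp only [Finset.mem_filter, Finset.mem_univ, true_and, sub_add_cancel] at hv ⊢
      exact hv
    · intro u hu; funext i; simp
    · intro v hv; funext i; simp
  have hdc : ∑ u : Fin n → ZMod (a + n*b),
      (Finset.univ.filter fun k : ZMod (a + n*b) =>
        ∀ j : Fin n, (j:ℕ) + 1 ≤ (Finset.univ.filter fun i => (u i + k).val < a + (j:ℕ) * b).card).card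
      = ∑ k : ZMod (a + n*b),
      (Finset.univ.filter fun u : Fin n → ZMod (a + n*b) =>
        ∀ j : Fin n, (j:ℕ) + 1 ≤ (Finset.univ.filter fun i => (u i + k).val < a + (j:ℕ) * b).card).card := by
    simp_rw [Finset.card_filter]
    exact Finset.sum_comm
  have hL : ∑ u : Fin n → ZMod (a + n*b),
      (Finset.univ.filter fun k : ZMod (a + n*b) =>
        ∀ j : Fin n, (j:ℕ) + 1 ≤ (Finset.univ.filter fun i => (u i + k).val < a + (j:ℕ) * b).card).card
      = (a + n*b)^n * a := by
    rw [Finset.sum_congr rfl (fun u _ => keyC n a b ha hb u)]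
    simp [Finset.card_univ, ZMod.card]
  have hR : ∑ k : ZMod (a + n*b),
      (Finset.univ.filter fun u : Fin n → ZMod (a + n*b) =>
        ∀ j : Fin n, (j:ℕ) + 1 ≤ (Finset.univ.filter fun i => (u i + k).val < a + (j:ℕ) * b).card).card
      = (a + n*b) * N := by
    rw [Finset.sum_congr rfl (fun k _ => hshift k)]
    simp [Finset.card_univ, ZMod.card, Nat.mul_comm]
  have hkey : (a + n*b)^n * a = (a + n*b) * N := by rw [← hL, hdc, hR]
  have hpow : (a + n*b)^n = (a + n*b)^(n-1) * (a + n*b) := by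
    have h2 : n - 1 + 1 = n := Nat.sub_add_cancel hn
    rw [← pow_succ, h2]
  have hfin : (a + n*b) * (a * (a + n*b)^(n-1)) = (a + n*b) * N := by
    rw [← hkey, hpow]; ring
  exact (Nat.eq_of_mul_eq_mul_left hm0 hfin).symm
end

section
/- The number of vertices of the x-parking function polytope X_n(a,b) equals n!·(1/1! + 1/2! + ... + 1/n!) if a = 1, and n!·(1/0! + 1/1! + ... + 1/n!) if a > 1. -/
open Finset MeasureTheory Nat

namespace XPFaux

/-- the sorted vertex with `k` ones -/
def vk (a b k : ℕ) {n : ℕ} (j : Fin n) : ℕ := if (j : ℕ) < k then 1 else a + (j : ℕ) * b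

/-- slots from `t` on -/
def F (n t : ℕ) : Finset (Fin n) := univ.filter (fun j => t ≤ (j : ℕ))

lemma sum_filter_val {n : ℕ} {M : Type*} [AddCommMonoid M] (p : ℕ → Prop) [DecidablePred p]
    (h : ℕ → M) :
    ∑ j ∈ univ.filter (fun j : Fin n => p (j : ℕ)), h (j : ℕ)
      = ∑ m ∈ (range n).filter p, h m := by
  rw [Finset.sum_filter, Finset.sum_filter, Fin.sum_univ_eq_sum_range (fun m => if p m then h m else 0)]

lemma sum_F {n t : ℕ} {M : Type*} [AddCommMonoid M] (h : ℕ → M) :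
    ∑ j ∈ F n t, h (j : ℕ) = ∑ m ∈ Ico t n, h m := by
  rw [F, sum_filter_val]
  congr 1
  ext m
  simp [Finset.mem_filter, Finset.mem_range, Finset.mem_Ico, and_comm]

lemma card_F {n t : ℕ} : (F n t).card = n - t := by
  have h := sum_F (n := n) (t := t) (fun _ => (1 : ℕ))
  rw [Finset.card_eq_sum_ones, h, Finset.sum_const, smul_eq_mul, mul_one, Nat.card_Ico]

lemma sum_low {n k : ℕ} {M : Type*} [AddCommMonoid M] (h : ℕ → M) (hk : k ≤ n) :
    ∑ j ∈ univ.filter (fun j : Fin n => (j : ℕ) < k), h (j : ℕ) = ∑ m ∈ range k, h m := by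
  rw [sum_filter_val (fun m => m < k) h]
  congr 1
  ext m
  simp only [Finset.mem_filter, Finset.mem_range]
  omega

lemma card_low {n k : ℕ} (hk : k ≤ n) :
    (univ.filter (fun j : Fin n => (j : ℕ) < k)).card = k := by
  have h := sum_low (n := n) (k := k) (fun _ => (1 : ℕ)) hk
  rw [Finset.card_eq_sum_ones, h, Finset.sum_const, smul_eq_mul, mul_one, Finset.card_range]

/-- sum of distinct naturals is at least `0+1+⋯+(m-1)` -/
lemma sum_range_card_le (s : Finset ℕ) : ∑ i ∈ range s.card, i ≤ ∑ x ∈ s, x := by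
  suffices H : ∀ m (s : Finset ℕ), s.card = m → ∑ i ∈ range m, i ≤ ∑ x ∈ s, x by
    exact H _ s rfl
  intro m
  induction m with
  | zero => intro s _; simp
  | succ m ih =>
    intro s hm
    have hne : s.Nonempty := by
      rw [← Finset.card_pos, hm]; omega
    set Mx := s.max' hne with hMx
    have hmem : Mx ∈ s := s.max'_mem hne
    have hcard : (s.erase Mx).card = m := by
      rw [Finset.card_erase_of_mem hmem, hm]; omega
    have hsub : s ⊆ range (Mx + 1) := by
      intro x hx
      simp only [Finset.mem_range]
      exact Nat.lt_succ_of_le (s.le_max' x hx)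
    have hMle : m ≤ Mx := by
      have := Finset.card_le_card hsub
      simp [hm] at this; omega
    calc ∑ i ∈ range (m+1), i = (∑ i ∈ range m, i) + m := by rw [Finset.sum_range_succ]
    _ ≤ (∑ x ∈ s.erase Mx, x) + Mx := Nat.add_le_add (ih _ hcard) hMle
    _ = ∑ x ∈ s, x := by rw [Nat.add_comm]; exact Finset.add_sum_erase _ (fun x => x) hmem

/-- sum of a finset of `[0,n)` is at most the top segment sum -/
lemma sum_le_top (J : Finset ℕ) (n : ℕ) (hJ : J ⊆ range n) :
    ∑ x ∈ J, x ≤ ∑ m ∈ Ico (n - J.card) n, m := by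
  have hsplit : ∑ x ∈ range n, x = ∑ x ∈ J, x + ∑ x ∈ range n \ J, x := by
    rw [← Finset.sum_union (Finset.disjoint_sdiff)]
    congr 1
    rw [Finset.union_sdiff_of_subset hJ]
  have hcard : (range n \ J).card = n - J.card := by
    rw [Finset.card_sdiff_of_subset hJ, Finset.card_range]
  have hge : ∑ i ∈ range (n - J.card), i ≤ ∑ x ∈ range n \ J, x := by
    rw [← hcard]; exact sum_range_card_le _
  have hsplit2 : ∑ x ∈ range n, x = ∑ x ∈ range (n - J.card), x + ∑ m ∈ Ico (n - J.card) n, m := by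
    rw [Finset.range_eq_Ico, Finset.range_eq_Ico,
      Finset.sum_Ico_consecutive (fun x => x) (Nat.zero_le _) (Nat.sub_le _ _)]
  omega


variable {n a b : ℕ}

/-- sum of a parking function over any subset is bounded by the top segment -/
lemma sum_subset_le {f : Fin n → ℕ} (hf : IsXPF n a b f) (C : Finset (Fin n)) :
    ∑ i ∈ C, f i ≤ ∑ m ∈ Ico (n - C.card) n, (a + m * b) := by
  obtain ⟨hpos, π, hmono, hbd⟩ := hf
  have hCn : C.card ≤ n := by
    simpa using Finset.card_le_univ C
  have step1 : ∑ i ∈ C, f i ≤ ∑ i ∈ C, (a + ((π⁻¹ i : Fin n) : ℕ) * b) := by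
    apply Finset.sum_le_sum
    intro i _
    have h := hbd (π⁻¹ i)
    simpa [Equiv.Perm.coe_inv, Equiv.apply_symm_apply] using h
  have hinj : ∀ x ∈ C, ∀ y ∈ C, π⁻¹ x = π⁻¹ y → x = y := fun x _ y _ h => π⁻¹.injective h
  have step2 : ∑ i ∈ C, (a + ((π⁻¹ i : Fin n) : ℕ) * b)
      = ∑ j ∈ C.image (fun i => π⁻¹ i), (a + (j : ℕ) * b) :=
    (Finset.sum_image (f := fun j : Fin n => a + (j : ℕ) * b) hinj).symm
  set D := C.image (fun i => π⁻¹ i) with hD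
  have hcardD : D.card = C.card := Finset.card_image_of_injective _ π⁻¹.injective
  have hvinj : ∀ x ∈ D, ∀ y ∈ D, (x : ℕ) = (y : ℕ) → x = y := fun x _ y _ h => Fin.val_injective h
  have step3 : ∑ j ∈ D, ((j : ℕ)) = ∑ x ∈ D.image (fun j : Fin n => (j : ℕ)), x :=
    (Finset.sum_image (f := fun x : ℕ => x) hvinj).symm
  set J := D.image (fun j : Fin n => (j : ℕ)) with hJ
  have hJcard : J.card = C.card := by
    rw [hJ, Finset.card_image_of_injective _ Fin.val_injective, hcardD]
  have hJsub : J ⊆ range n := by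
    intro x hx
    simp only [hJ, Finset.mem_image] at hx
    obtain ⟨j, _, rfl⟩ := hx
    simpa using j.isLt
  have step4 : ∑ x ∈ J, x ≤ ∑ m ∈ Ico (n - C.card) n, m := by
    have := sum_le_top J n hJsub
    rwa [hJcard] at this
  have expand : ∀ {ι : Type} (s : Finset ι) (g : ι → ℕ),
      ∑ j ∈ s, (a + g j * b) = s.card * a + (∑ j ∈ s, g j) * b := by
    intro ι s g
    rw [Finset.sum_add_distrib, Finset.sum_const, smul_eq_mul, Finset.sum_mul]
  calc ∑ i ∈ C, f i ≤ ∑ j ∈ D, (a + (j : ℕ) * b) := step1.trans_eq step2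
    _ = D.card * a + (∑ j ∈ D, ((j : ℕ))) * b := expand D (fun j => (j : ℕ))
    _ = C.card * a + (∑ x ∈ J, x) * b := by rw [hcardD, step3]
    _ ≤ C.card * a + (∑ m ∈ Ico (n - C.card) n, m) * b := by
        exact Nat.add_le_add_left (Nat.mul_le_mul_right _ step4) _
    _ = ∑ m ∈ Ico (n - C.card) n, (a + m * b) := by
        rw [expand (Ico (n - C.card) n) (fun m => m), Nat.card_Ico]
        congr 2
        omega

/-- maximum possible weighted top sum -/
def Msum (n a b k : ℕ) : ℕ := ∑ t ∈ Ico k n, ∑ m ∈ Ico t n, (a + m * b)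

def topsum (n k : ℕ) (g : Fin n → ℕ) (τ : Equiv.Perm (Fin n)) : ℕ :=
  ∑ t ∈ Ico k n, ∑ j ∈ F n t, g (τ⁻¹ j)

def lowsum (n k : ℕ) (g : Fin n → ℕ) (τ : Equiv.Perm (Fin n)) : ℕ :=
  ∑ j ∈ univ.filter (fun j : Fin n => (j : ℕ) < k), g (τ⁻¹ j)

lemma inner_le {f : Fin n → ℕ} (hf : IsXPF n a b f) (τ : Equiv.Perm (Fin n)) {t : ℕ}
    (ht : t ≤ n) : ∑ j ∈ F n t, f (τ⁻¹ j) ≤ ∑ m ∈ Ico t n, (a + m * b) := by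
  have hinj : ∀ x ∈ F n t, ∀ y ∈ F n t, τ⁻¹ x = τ⁻¹ y → x = y := fun x _ y _ h => τ⁻¹.injective h
  have himg : ∑ j ∈ F n t, f (τ⁻¹ j) = ∑ i ∈ (F n t).image (fun j => τ⁻¹ j), f i :=
    (Finset.sum_image hinj).symm
  rw [himg]
  have hcard : ((F n t).image (fun j => τ⁻¹ j)).card = n - t := by
    rw [Finset.card_image_of_injective _ τ⁻¹.injective, card_F]
  have := sum_subset_le hf ((F n t).image (fun j => τ⁻¹ j))
  rw [hcard] at this
  have hnt : n - (n - t) = t := by omega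
  rwa [hnt] at this

lemma topsum_le {f : Fin n → ℕ} (hf : IsXPF n a b f) (τ : Equiv.Perm (Fin n)) (k : ℕ) :
    topsum n k f τ ≤ Msum n a b k := by
  apply Finset.sum_le_sum
  intro t ht
  rw [Finset.mem_Ico] at ht
  exact inner_le hf τ ht.2.le

lemma lowsum_ge {f : Fin n → ℕ} (hpos : ∀ i, 1 ≤ f i) (τ : Equiv.Perm (Fin n)) {k : ℕ}
    (hk : k ≤ n) : k ≤ lowsum n k f τ := by
  have : ∑ j ∈ univ.filter (fun j : Fin n => (j : ℕ) < k), 1 ≤ lowsum n k f τ :=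
    Finset.sum_le_sum (fun j _ => hpos (τ⁻¹ j))
  calc k = (univ.filter (fun j : Fin n => (j : ℕ) < k)).card := (card_low hk).symm
    _ = ∑ j ∈ univ.filter (fun j : Fin n => (j : ℕ) < k), 1 := by rw [Finset.card_eq_sum_ones]
    _ ≤ lowsum n k f τ := this

lemma vertex_comp (k : ℕ) (τ : Equiv.Perm (Fin n)) (j : Fin n) :
    (fun i => vk a b k (τ i)) (τ⁻¹ j) = vk a b k j := by
  simp [Equiv.Perm.coe_inv, Equiv.apply_symm_apply]

lemma lowsum_vertex {k : ℕ} (hk : k ≤ n) (τ : Equiv.Perm (Fin n)) :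
    lowsum n k (fun i => vk a b k (τ i)) τ = k := by
  unfold lowsum
  have h1 : ∀ j ∈ univ.filter (fun j : Fin n => (j : ℕ) < k),
      (fun i => vk a b k (τ i)) (τ⁻¹ j) = 1 := by
    intro j hj
    simp only [Finset.mem_filter] at hj
    simp [Equiv.Perm.coe_inv, Equiv.apply_symm_apply, vk, hj.2]
  rw [Finset.sum_congr rfl h1, Finset.sum_const, smul_eq_mul, mul_one, card_low hk]

lemma topsum_vertex {k : ℕ} (τ : Equiv.Perm (Fin n)) :
    topsum n k (fun i => vk a b k (τ i)) τ = Msum n a b k := by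
  unfold topsum Msum
  apply Finset.sum_congr rfl
  intro t ht
  rw [Finset.mem_Ico] at ht
  have h1 : ∀ j ∈ F n t, (fun i => vk a b k (τ i)) (τ⁻¹ j) = (fun m => a + m * b) ((j : ℕ)) := by
    intro j hj
    have hj' : t ≤ (j : ℕ) := by simpa [F] using hj
    simp only [Equiv.Perm.coe_inv, Equiv.apply_symm_apply, vk, if_neg (show ¬((j:ℕ) < k) by omega)]
  rw [Finset.sum_congr rfl h1, sum_F (fun m => a + m * b)]

lemma eq_vertex_of_sums {f : Fin n → ℕ} (hpos : ∀ i, 1 ≤ f i)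
    (hf : IsXPF n a b f) {k : ℕ} (hk : k ≤ n) (τ : Equiv.Perm (Fin n))
    (htop : topsum n k f τ = Msum n a b k) (hlow : lowsum n k f τ = k) :
    f = fun i => vk a b k (τ i) := by
  -- low part
  have hlow1 : ∀ j ∈ univ.filter (fun j : Fin n => (j : ℕ) < k), 1 = f (τ⁻¹ j) := by
    rw [← Finset.sum_eq_sum_iff_of_le (fun j _ => hpos (τ⁻¹ j))]
    rw [Finset.sum_const, smul_eq_mul, mul_one, card_low hk]
    exact hlow.symm
  -- top part
  have hS : ∀ t ∈ Ico k n, ∑ j ∈ F n t, f (τ⁻¹ j) = ∑ m ∈ Ico t n, (a + m * b) := by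
    rw [← Finset.sum_eq_sum_iff_of_le (fun t ht => inner_le hf τ (Finset.mem_Ico.mp ht).2.le)]
    exact htop
  have htopval : ∀ j : Fin n, k ≤ (j : ℕ) → f (τ⁻¹ j) = a + (j : ℕ) * b := by
    intro j hj
    set t := (j : ℕ) with htj
    have htn : t < n := j.isLt
    have hinsert : F n t = insert j (F n (t + 1)) := by
      ext j'
      simp only [F, Finset.mem_filter, Finset.mem_univ, true_and, Finset.mem_insert]
      constructor
      · intro h
        rcases Nat.eq_or_lt_of_le h with h' | h'
        · left; exact Fin.ext h'.symm
        · right; omega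
      · rintro (rfl | h)
        · omega
        · omega
    have hnotmem : j ∉ F n (t + 1) := by simp [F]; omega
    have hsplitS : ∑ j' ∈ F n t, f (τ⁻¹ j') = f (τ⁻¹ j) + ∑ j' ∈ F n (t + 1), f (τ⁻¹ j') := by
      rw [hinsert, Finset.sum_insert hnotmem]
    have hsplitM : ∑ m ∈ Ico t n, (a + m * b)
        = (a + t * b) + ∑ m ∈ Ico (t + 1) n, (a + m * b) :=
      Finset.sum_eq_sum_Ico_succ_bot htn _
    have hnext : ∑ j' ∈ F n (t + 1), f (τ⁻¹ j') = ∑ m ∈ Ico (t + 1) n, (a + m * b) := by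
      rcases Nat.lt_or_ge (t + 1) n with h | h
      · exact hS (t + 1) (Finset.mem_Ico.mpr ⟨by omega, h⟩)
      · have h1 : F n (t + 1) = ∅ := by
          ext j'
          simp only [F, Finset.mem_filter, Finset.mem_univ, true_and, Finset.notMem_empty,
            iff_false]
          have := j'.isLt
          omega
        have h2 : Ico (t + 1) n = ∅ := by
          rw [Finset.Ico_eq_empty_iff]
          omega
        rw [h1, h2]
        simp
    have hmain := hS t (Finset.mem_Ico.mpr ⟨hj, htn⟩)
    rw [hsplitS, hsplitM, hnext] at hmain
    omega
  funext i
  have h1 : f i = f (τ⁻¹ (τ i)) := by rw [Equiv.Perm.coe_inv, Equiv.symm_apply_apply]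
  rw [h1]
  by_cases hc : ((τ i : Fin n) : ℕ) < k
  · have := hlow1 (τ i) (by simp [hc])
    simp only [vk, if_pos hc]
    exact this.symm
  · have := htopval (τ i) (by omega)
    simp only [vk, if_neg hc]
    exact this


def toReal {n : ℕ} (g : Fin n → ℕ) : Fin n → ℝ := fun i => (g i : ℝ)

lemma toReal_injective {n : ℕ} : Function.Injective (toReal (n := n)) := by
  intro g g' h
  funext i
  exact Nat.cast_injective (congrFun h i)

def PFset (n a b : ℕ) : Set (Fin n → ℝ) :=
  {x : Fin n → ℝ | ∃ f : Fin n → ℕ, IsXPF n a b f ∧ x = fun i => (f i : ℝ)}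

lemma XPFP_eq (n a b : ℕ) : XPFP n a b = convexHull ℝ (PFset n a b) := rfl

lemma isXPF_vertex (ha : 1 ≤ a) {k : ℕ} (τ : Equiv.Perm (Fin n)) :
    IsXPF n a b (fun i => vk a b k (τ i)) := by
  constructor
  · intro i
    by_cases h : ((τ i : Fin n) : ℕ) < k <;> simp [vk, h] <;> omega
  · refine ⟨τ⁻¹, ?_, ?_⟩
    · intro j j' hle
      simp only [Function.comp_apply, Equiv.Perm.coe_inv, Equiv.apply_symm_apply]
      unfold vk
      have hv : (j : ℕ) ≤ (j' : ℕ) := hle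
      split
      · split
        · exact le_refl 1
        · omega
      · split
        · omega
        · exact Nat.add_le_add_left (Nat.mul_le_mul_right _ hv) _
    · intro j
      simp only [Equiv.Perm.coe_inv, Equiv.apply_symm_apply]
      unfold vk
      split
      · omega
      · exact le_refl _

section Extreme

variable (ha : 1 ≤ a) (hb : 1 ≤ b)

/-- the separating linear functional for the vertex `vk ∘ τ` -/
def lfun (n k : ℕ) (τ : Equiv.Perm (Fin n)) (x : Fin n → ℝ) : ℝ :=
  (∑ t ∈ Ico k n, ∑ j ∈ F n t, x (τ⁻¹ j))
    - ∑ j ∈ univ.filter (fun j : Fin n => (j : ℕ) < k), x (τ⁻¹ j)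

lemma lfun_linear (n k : ℕ) (τ : Equiv.Perm (Fin n)) : IsLinearMap ℝ (lfun n k τ) := by
  constructor
  · intro x y
    unfold lfun
    simp only [Pi.add_apply, Finset.sum_add_distrib]
    ring
  · intro c x
    unfold lfun
    simp only [Pi.smul_apply, smul_eq_mul, ← Finset.mul_sum]
    ring

lemma lfun_cast (k : ℕ) (τ : Equiv.Perm (Fin n)) (f : Fin n → ℕ) :
    lfun n k τ (toReal f) = (topsum n k f τ : ℝ) - (lowsum n k f τ : ℝ) := by
  unfold lfun toReal topsum lowsum
  push_cast
  ring

lemma lfun_le_on_PFset {k : ℕ} (hk : k ≤ n) {x : Fin n → ℝ} (hx : x ∈ PFset n a b)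
    (τ : Equiv.Perm (Fin n)) : lfun n k τ x ≤ (Msum n a b k : ℝ) - (k : ℝ) := by
  obtain ⟨f, hf, rfl⟩ := hx
  rw [show (fun i => ((f i : ℝ))) = toReal f from rfl, lfun_cast]
  have h1 : (topsum n k f τ : ℝ) ≤ (Msum n a b k : ℝ) := Nat.cast_le.mpr (topsum_le hf τ k)
  have h2 : (k : ℝ) ≤ (lowsum n k f τ : ℝ) := Nat.cast_le.mpr (lowsum_ge hf.1 τ hk)
  linarith

lemma lfun_eq_on_PFset {k : ℕ} (hk : k ≤ n) {x : Fin n → ℝ} (hx : x ∈ PFset n a b)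
    (τ : Equiv.Perm (Fin n)) (heq : lfun n k τ x = (Msum n a b k : ℝ) - (k : ℝ)) :
    x = toReal (fun i => vk a b k (τ i)) := by
  obtain ⟨f, hf, rfl⟩ := hx
  rw [show (fun i => ((f i : ℝ))) = toReal f from rfl, lfun_cast] at heq
  have h1 : (topsum n k f τ : ℝ) ≤ (Msum n a b k : ℝ) := Nat.cast_le.mpr (topsum_le hf τ k)
  have h2 : (k : ℝ) ≤ (lowsum n k f τ : ℝ) := Nat.cast_le.mpr (lowsum_ge hf.1 τ hk)
  have htop : topsum n k f τ = Msum n a b k := by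
    have h : (topsum n k f τ : ℝ) = (Msum n a b k : ℝ) := by linarith
    exact_mod_cast h
  have hlow : lowsum n k f τ = k := by
    have h : (lowsum n k f τ : ℝ) = (k : ℝ) := by linarith
    exact_mod_cast h
  rw [eq_vertex_of_sums hf.1 hf hk τ htop hlow]
  rfl

lemma lfun_le_on_XPFP {k : ℕ} (hk : k ≤ n) (τ : Equiv.Perm (Fin n)) {x : Fin n → ℝ}
    (hx : x ∈ XPFP n a b) : lfun n k τ x ≤ (Msum n a b k : ℝ) - (k : ℝ) := by
  rw [XPFP_eq] at hx
  have hconv : Convex ℝ {w : Fin n → ℝ | lfun n k τ w ≤ (Msum n a b k : ℝ) - (k : ℝ)} :=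
    convex_halfSpace_le (lfun_linear n k τ) _
  exact convexHull_min (fun y hy => lfun_le_on_PFset hk hy τ) hconv hx

lemma lfun_eq_on_XPFP {k : ℕ} (hk : k ≤ n) (τ : Equiv.Perm (Fin n)) {x : Fin n → ℝ}
    (hx : x ∈ XPFP n a b) (heq : lfun n k τ x = (Msum n a b k : ℝ) - (k : ℝ)) :
    x = toReal (fun i => vk a b k (τ i)) := by
  set c : ℝ := (Msum n a b k : ℝ) - (k : ℝ) with hc
  rw [XPFP_eq, _root_.convexHull_eq] at hx
  obtain ⟨ι, t, w, z, hw0, hw1, hz, hxeq⟩ := hx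
  set L : (Fin n → ℝ) →ₗ[ℝ] ℝ := IsLinearMap.mk' _ (lfun_linear n k τ) with hL
  have hxsum : x = ∑ i ∈ t, w i • z i := by
    rw [← hxeq, Finset.centerMass_eq_of_sum_1 _ _ hw1]
  have hLsum : lfun n k τ x = ∑ i ∈ t, w i * lfun n k τ (z i) := by
    show L x = _
    rw [hxsum, map_sum]
    exact Finset.sum_congr rfl (fun i _ => by rw [L.map_smul, smul_eq_mul]; rfl)
  have hle : ∀ i ∈ t, w i * lfun n k τ (z i) ≤ w i * c := fun i hi =>
    mul_le_mul_of_nonneg_left (lfun_le_on_PFset hk (hz i hi) τ) (hw0 i hi)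
  have hsum_eq : ∑ i ∈ t, w i * lfun n k τ (z i) = ∑ i ∈ t, w i * c := by
    rw [← hLsum, heq, ← Finset.sum_mul, hw1, one_mul]
  have hkey : ∀ i ∈ t, w i * lfun n k τ (z i) = w i * c :=
    (Finset.sum_eq_sum_iff_of_le hle).mp hsum_eq
  have hz_eq : ∀ i ∈ t, w i • z i = w i • toReal (fun i => vk a b k (τ i)) := by
    intro i hi
    rcases eq_or_ne (w i) 0 with h0 | h0
    · rw [h0, zero_smul, zero_smul]
    · have : lfun n k τ (z i) = c := by
        have := hkey i hi
        exact mul_left_cancel₀ h0 this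
      rw [lfun_eq_on_PFset hk (hz i hi) τ this]
  rw [hxsum, Finset.sum_congr rfl hz_eq, ← Finset.sum_smul, hw1, one_smul]

lemma vertex_mem_extremePoints (ha : 1 ≤ a) {k : ℕ} (hk : k ≤ n) (τ : Equiv.Perm (Fin n)) :
    toReal (fun i => vk a b k (τ i)) ∈ Set.extremePoints ℝ (XPFP n a b) := by
  set u : Fin n → ℝ := toReal (fun i => vk a b k (τ i)) with hu
  set c : ℝ := (Msum n a b k : ℝ) - (k : ℝ) with hc
  have humem : u ∈ XPFP n a b := by
    rw [XPFP_eq]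
    exact subset_convexHull ℝ _ ⟨_, isXPF_vertex ha τ, rfl⟩
  have hlu : lfun n k τ u = c := by
    rw [hu, lfun_cast, topsum_vertex, lowsum_vertex hk]
  rw [mem_extremePoints]
  refine ⟨humem, fun x₁ h₁ x₂ h₂ hseg => ?_⟩
  obtain ⟨s, t, hs, ht, hst, heq⟩ := hseg
  have h₁le := lfun_le_on_XPFP hk τ h₁
  have h₂le := lfun_le_on_XPFP hk τ h₂
  set L : (Fin n → ℝ) →ₗ[ℝ] ℝ := IsLinearMap.mk' _ (lfun_linear n k τ) with hL
  have hsum : s * lfun n k τ x₁ + t * lfun n k τ x₂ = c := by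
    have h3 : L (s • x₁ + t • x₂) = s * L x₁ + t * L x₂ := by
      rw [L.map_add, L.map_smul, L.map_smul, smul_eq_mul, smul_eq_mul]
    rw [← heq] at hlu
    calc s * lfun n k τ x₁ + t * lfun n k τ x₂ = L (s • x₁ + t • x₂) := h3.symm
      _ = c := hlu
  have h1eq : lfun n k τ x₁ = c := by nlinarith
  have h2eq : lfun n k τ x₂ = c := by nlinarith
  exact ⟨lfun_eq_on_XPFP hk τ h₁ h1eq, lfun_eq_on_XPFP hk τ h₂ h2eq⟩

end Extreme


lemma dichotomy {f : Fin n → ℕ} (hf : IsXPF n a b f) (ha : 1 ≤ a) :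
    (∃ k ≤ n, ∃ σ : Equiv.Perm (Fin n), f = fun i => vk a b k (σ i)) ∨
    (∃ i : Fin n, 2 ≤ f i ∧ IsXPF n a b (Function.update f i (f i + 1)) ∧
      IsXPF n a b (Function.update f i (f i - 1))) := by
  obtain ⟨hpos, π, hmono, hbd⟩ := hf
  by_cases hint : ∃ j : Fin n, 1 < f (π j) ∧ f (π j) < a + (j : ℕ) * b
  · -- interior coordinate exists : midpoint case
    right
    obtain ⟨j₀, hV1, hV2⟩ := hint
    set V := f (π j₀) with hV
    have hVset : (univ.filter (fun j : Fin n => f (π j) = V)).Nonempty :=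
      ⟨j₀, by simp [hV]⟩
    set J := univ.filter (fun j : Fin n => f (π j) = V) with hJ
    set j1 := J.min' hVset with hj1
    set j2 := J.max' hVset with hj2
    have hj1m : f (π j1) = V := (Finset.mem_filter.mp (J.min'_mem hVset)).2
    have hj2m : f (π j2) = V := (Finset.mem_filter.mp (J.max'_mem hVset)).2
    have hj1le : j1 ≤ j₀ := J.min'_le j₀ (by simp [hJ, hV])
    have hj0le : j₀ ≤ j2 := J.le_max' j₀ (by simp [hJ, hV])
    have hlt : ∀ m : Fin n, m < j1 → f (π m) < V := by
      intro m hm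
      rcases Nat.lt_or_ge (f (π m)) V with h | h
      · exact h
      · exfalso
        have hle : f (π m) ≤ f (π j1) := hmono hm.le
        rw [hj1m] at hle
        have : f (π m) = V := le_antisymm hle h
        have hmem : m ∈ J := by simp [hJ, this]
        have := J.min'_le m hmem
        rw [← hj1] at this
        exact absurd hm (not_lt.mpr this)
    have hgt : ∀ m : Fin n, j2 < m → V < f (π m) := by
      intro m hm
      rcases Nat.lt_or_ge V (f (π m)) with h | h
      · exact h
      · exfalso
        have hle : f (π j2) ≤ f (π m) := hmono hm.le
        rw [hj2m] at hle
        have : f (π m) = V := le_antisymm h hle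
        have hmem : m ∈ J := by simp [hJ, this]
        have := J.le_max' m hmem
        rw [← hj2] at this
        exact absurd hm (not_lt.mpr this)
    set i := π j2 with hi
    have hfi : f i = V := hj2m
    refine ⟨i, by omega, ?_, ?_⟩
    · -- increment
      refine ⟨?_, π, ?_, ?_⟩
      · intro i'
        rcases eq_or_ne i' i with rfl | h
        · rw [Function.update_self]; omega
        · rw [Function.update_of_ne h]; exact hpos i'
      · intro m m' hmm'
        have gp : ∀ m : Fin n, Function.update f i (f i + 1) (π m)
            = if m = j2 then V + 1 else f (π m) := by
          intro m
          rw [Function.update_apply, hfi]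
          simp [hi, π.injective.eq_iff]
        simp only [Function.comp_apply, gp]
        rcases eq_or_ne m j2 with hm0 | hm <;> rcases eq_or_ne m' j2 with h' | h'
        · rw [if_pos hm0, if_pos h']
        · rw [if_pos hm0, if_neg h']
          have hlt' : m < m' := lt_of_le_of_ne hmm' (fun hc => h' (hc ▸ hm0))
          have : j2 < m' := hm0 ▸ hlt'
          have := hgt m' this
          omega
        · rw [if_neg hm, if_pos h']
          have h5 : f (π m) ≤ f (π m') := hmono hmm'
          have h6 : f (π m') = V := by rw [h']; exact hj2m
          omega
        · rw [if_neg hm, if_neg h']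
          exact hmono hmm'
      · intro m
        have gp : Function.update f i (f i + 1) (π m)
            = if m = j2 then V + 1 else f (π m) := by
          rw [Function.update_apply, hfi]
          simp [hi, π.injective.eq_iff]
        rw [gp]
        rcases eq_or_ne m j2 with hm0 | hm
        · rw [if_pos hm0]
          have h1 : V < a + (j₀ : ℕ) * b := hV2
          have h2 : (j₀ : ℕ) ≤ (m : ℕ) := by
            rw [hm0]; exact Fin.le_def.mp hj0le
          have : a + (j₀ : ℕ) * b ≤ a + (m : ℕ) * b :=
            Nat.add_le_add_left (Nat.mul_le_mul_right _ h2) _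
          omega
        · rw [if_neg hm]
          exact hbd m
    · -- decrement
      have hVpos : 2 ≤ V := hV1
      refine ⟨?_, π * (Equiv.swap j1 j2), ?_, ?_⟩
      · intro i'
        rcases eq_or_ne i' i with rfl | h
        · rw [Function.update_self]; omega
        · rw [Function.update_of_ne h]; exact hpos i'
      · intro m m' hmm'
        have gm : ∀ m : Fin n, Function.update f i (f i - 1) ((π * Equiv.swap j1 j2) m)
            = if m = j1 then V - 1 else f (π m) := by
          intro m
          simp only [Equiv.Perm.mul_apply]
          rw [Function.update_apply, hfi]
          rcases eq_or_ne m j1 with rfl | h1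
          · rw [Equiv.swap_apply_left, if_pos rfl]
            simp [hi]
          · rcases eq_or_ne m j2 with rfl | h2
            · rw [Equiv.swap_apply_right, if_neg h1]
              have : ¬ (π j1 = i) := by
                rw [hi, π.injective.eq_iff]
                intro hc
                exact h1 (hc ▸ rfl)
              rw [if_neg this, hj1m, ← hj2m]
            · rw [Equiv.swap_apply_of_ne_of_ne h1 h2, if_neg h1]
              have : ¬ (π m = i) := by
                rw [hi, π.injective.eq_iff]
                exact h2
              rw [if_neg this]
        simp only [Function.comp_apply, gm]
        rcases eq_or_ne m j1 with hm0 | hm <;> rcases eq_or_ne m' j1 with h' | h'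
        · rw [if_pos hm0, if_pos h']
        · rw [if_pos hm0, if_neg h']
          have hlt' : m < m' := lt_of_le_of_ne hmm' (fun hc => h' (hc ▸ hm0))
          have h5 : j1 ≤ m' := hm0 ▸ hlt'.le
          have h6 : V ≤ f (π m') := by rw [← hj1m]; exact hmono h5
          omega
        · rw [if_neg hm, if_pos h']
          have hlt' : m < m' := lt_of_le_of_ne hmm' (fun hc => hm (hc ▸ h'.symm ▸ rfl))
          have h5 : m < j1 := h' ▸ hlt'
          have := hlt m h5
          omega
        · rw [if_neg hm, if_neg h']
          exact hmono hmm'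
      · intro m
        have gm : Function.update f i (f i - 1) ((π * Equiv.swap j1 j2) m)
            = if m = j1 then V - 1 else f (π m) := by
          simp only [Equiv.Perm.mul_apply]
          rw [Function.update_apply, hfi]
          rcases eq_or_ne m j1 with rfl | h1
          · rw [Equiv.swap_apply_left, if_pos rfl]
            simp [hi]
          · rcases eq_or_ne m j2 with rfl | h2
            · rw [Equiv.swap_apply_right, if_neg h1]
              have : ¬ (π j1 = i) := by
                rw [hi, π.injective.eq_iff]
                intro hc
                exact h1 (hc ▸ rfl)
              rw [if_neg this, hj1m, ← hj2m]
            · rw [Equiv.swap_apply_of_ne_of_ne h1 h2, if_neg h1]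
              have : ¬ (π m = i) := by
                rw [hi, π.injective.eq_iff]
                exact h2
              rw [if_neg this]
        rw [gm]
        rcases eq_or_ne m j1 with hm0 | hm
        · rw [if_pos hm0, hm0]
          have h7 := hbd j1
          rw [hj1m] at h7
          omega
        · rw [if_neg hm]
          exact hbd m
  · -- no interior coordinate : vertex
    left
    push_neg at hint
    have hdich : ∀ j : Fin n, f (π j) = 1 ∨ f (π j) = a + (j : ℕ) * b := by
      intro j
      have h1 := hbd j
      have h2 := hpos (π j)
      have h3 := hint j
      omega
    set s := univ.filter (fun j : Fin n => f (π j) = 1) with hs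
    set k := s.card with hk
    have hkn : k ≤ n := by
      rw [hk]
      calc s.card ≤ (univ : Finset (Fin n)).card := Finset.card_le_univ s
        _ = n := by simp
    have hch : ∀ j : Fin n, f (π j) = 1 ↔ (j : ℕ) < k := by
      intro j
      constructor
      · intro hj
        have hsub : univ.filter (fun j' : Fin n => (j' : ℕ) < (j : ℕ) + 1) ⊆ s := by
          intro j' hj'
          simp only [Finset.mem_filter, Finset.mem_univ, true_and] at hj'
          rw [hs, Finset.mem_filter]
          refine ⟨Finset.mem_univ _, ?_⟩
          have hle : j' ≤ j := by
            rw [Fin.le_def]; omega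
          have := hmono (show j' ≤ j from hle)
          simp only [Function.comp_apply] at this
          rw [hj] at this
          have := hpos (π j')
          omega
        have hcard := Finset.card_le_card hsub
        rw [card_low (show (j : ℕ) + 1 ≤ n from j.isLt)] at hcard
        omega
      · intro hj
        by_contra hne
        have hsub : s ⊆ univ.filter (fun j' : Fin n => (j' : ℕ) < (j : ℕ)) := by
          intro j' hj'
          rw [hs, Finset.mem_filter] at hj'
          simp only [Finset.mem_filter, Finset.mem_univ, true_and]
          by_contra hge
          push_neg at hge
          have hle : j ≤ j' := by rw [Fin.le_def]; omega
          have := hmono hle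
          simp only [Function.comp_apply] at this
          have := hpos (π j)
          have := hj'.2
          omega
        have hcard := Finset.card_le_card hsub
        rw [card_low (show (j : ℕ) ≤ n from j.isLt.le)] at hcard
        omega
    refine ⟨k, hkn, π⁻¹, ?_⟩
    funext i
    have h1 : f i = f (π (π⁻¹ i)) := by rw [Equiv.Perm.coe_inv, Equiv.apply_symm_apply]
    rw [h1]
    unfold vk
    rcases Nat.lt_or_ge ((π⁻¹ i : Fin n) : ℕ) k with hc | hc
    · rw [if_pos hc]
      exact (hch _).mpr hc
    · rw [if_neg (by omega)]
      rcases hdich (π⁻¹ i) with h | h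
      · exfalso
        have := (hch _).mp h
        omega
      · exact h

/-- extreme points are vertices -/
lemma extreme_subset_vertices (ha : 1 ≤ a) :
    Set.extremePoints ℝ (XPFP n a b)
      ⊆ {x | ∃ k ≤ n, ∃ σ : Equiv.Perm (Fin n), x = toReal (fun i => vk a b k (σ i))} := by
  intro x hx
  have hxPF : x ∈ PFset n a b := by
    have := extremePoints_convexHull_subset (𝕜 := ℝ) (A := PFset n a b)
    rw [← XPFP_eq] at this
    exact this hx
  obtain ⟨f, hf, rfl⟩ := hxPF
  rcases dichotomy hf ha with ⟨k, hk, σ, hfv⟩ | ⟨i, h2, hplus, hminus⟩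
  · exact ⟨k, hk, σ, by rw [hfv]; rfl⟩
  · exfalso
    set xp := toReal (Function.update f i (f i + 1)) with hxp
    set xm := toReal (Function.update f i (f i - 1)) with hxm
    have hxpmem : xp ∈ XPFP n a b := by
      rw [XPFP_eq]
      exact subset_convexHull ℝ _ ⟨_, hplus, rfl⟩
    have hxmmem : xm ∈ XPFP n a b := by
      rw [XPFP_eq]
      exact subset_convexHull ℝ _ ⟨_, hminus, rfl⟩
    have hseg : (fun i' => ((f i' : ℝ))) ∈ openSegment ℝ xp xm := by
      refine ⟨1/2, 1/2, by norm_num, by norm_num, by norm_num, ?_⟩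
      funext i'
      simp only [Pi.add_apply, Pi.smul_apply, smul_eq_mul, hxp, hxm, toReal]
      rcases eq_or_ne i' i with rfl | h
      · rw [Function.update_self, Function.update_self]
        have : (1 : ℕ) ≤ f i' := by omega
        push_cast [this]
        ring
      · rw [Function.update_of_ne h, Function.update_of_ne h]
        ring
    have := (mem_extremePoints.mp hx).2 xp hxpmem xm hxmmem hseg
    have hcontra := congrFun this.1 i
    simp only [hxp, toReal, Function.update_self] at hcontra
    have : ((f i : ℝ)) + 1 = (f i : ℝ) := by push_cast at hcontra; linarith
    linarith

lemma extreme_eq_vertices (ha : 1 ≤ a) :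
    Set.extremePoints ℝ (XPFP n a b)
      = {x | ∃ k ≤ n, ∃ σ : Equiv.Perm (Fin n), x = toReal (fun i => vk a b k (σ i))} := by
  apply subset_antisymm (extreme_subset_vertices ha)
  rintro x ⟨k, hk, σ, rfl⟩
  exact vertex_mem_extremePoints ha hk σ


section Counting

/-- the set of coordinate arrangements of the `k`-th vertex -/
def Fk (n a b k : ℕ) : Finset (Fin n → ℕ) :=
  (univ : Finset (Equiv.Perm (Fin n))).image (fun σ => fun i => vk a b k (σ i))

lemma vk_ne_one {k : ℕ} (ha : 1 ≤ a) (hb : 1 ≤ b) (h2 : 2 ≤ a ∨ 1 ≤ k) {j : Fin n}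
    (hj : ¬ ((j : ℕ) < k)) : vk a b k j ≠ 1 := by
  unfold vk
  rw [if_neg hj]
  rcases h2 with h | h
  · omega
  · have : 1 ≤ (j : ℕ) * b := by
      have : 1 ≤ (j : ℕ) := by omega
      exact Nat.one_le_iff_ne_zero.mpr (by positivity)
    omega

lemma vk_one {k : ℕ} {j : Fin n} (hj : (j : ℕ) < k) : vk a b k j = 1 := by
  unfold vk; rw [if_pos hj]

lemma card_stab (ha : 1 ≤ a) (hb : 1 ≤ b) {k : ℕ} (hk : k ≤ n) (h2 : 2 ≤ a ∨ 1 ≤ k) :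
    (univ.filter (fun τ : Equiv.Perm (Fin n) =>
      ∀ j, vk a b k (τ j) = vk a b k j)).card = k ! := by
  have fixhigh : ∀ τ : Equiv.Perm (Fin n), (∀ j, vk a b k (τ j) = vk a b k j) →
      ∀ j : Fin n, ¬ ((j : ℕ) < k) → τ j = j := by
    intro τ hτ j hj
    have h1 := hτ j
    have hne : vk a b k (τ j) ≠ 1 := by rw [h1]; exact vk_ne_one ha hb h2 hj
    have hτj : ¬ ((τ j : Fin n) : ℕ) < k := by
      intro hc
      exact hne (vk_one hc)
    unfold vk at h1
    rw [if_neg hτj, if_neg hj] at h1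
    have : ((τ j : Fin n) : ℕ) = (j : ℕ) := by
      have hb0 : 0 < b := hb
      exact Nat.eq_of_mul_eq_mul_right hb0 (by omega)
    exact Fin.ext this
  have preslow : ∀ τ : Equiv.Perm (Fin n), (∀ j, vk a b k (τ j) = vk a b k j) →
      ∀ j : Fin n, (j : ℕ) < k → ((τ j : Fin n) : ℕ) < k := by
    intro τ hτ j hj
    by_contra hc
    have h1 : τ (τ j) = τ j := fixhigh τ hτ (τ j) hc
    have h2' : τ j = j := τ.injective h1
    rw [h2'] at hc
    exact hc hj
  -- bijection with permutations of the subtype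
  have hsub : ∀ τ : Equiv.Perm (Fin n), (∀ j, vk a b k (τ j) = vk a b k j) →
      ∀ x : Fin n, (x : ℕ) < k ↔ ((τ x : Fin n) : ℕ) < k := by
    intro τ hτ x
    constructor
    · exact preslow τ hτ x
    · intro hx
      by_contra hcx
      have := fixhigh τ hτ x hcx
      rw [this] at hx
      exact hcx hx
  have hbij : (univ.filter (fun τ : Equiv.Perm (Fin n) =>
      ∀ j, vk a b k (τ j) = vk a b k j)).card
      = (univ : Finset (Equiv.Perm {j : Fin n // (j : ℕ) < k})).card := by
    refine Finset.card_bij'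
      (i := fun τ hτ => τ.subtypePerm (p := fun j : Fin n => (j : ℕ) < k)
        (fun x => (hsub τ (by simpa using hτ) x).symm))
      (j := fun ρ _ => Equiv.Perm.ofSubtype ρ) (fun _ _ => Finset.mem_univ _) ?_ ?_ ?_
    · intro ρ _
      simp only [Finset.mem_filter, Finset.mem_univ, true_and]
      intro j
      by_cases hj : (j : ℕ) < k
      · rw [Equiv.Perm.ofSubtype_apply_of_mem ρ hj, vk_one (ρ ⟨j, hj⟩).2, vk_one hj]
      · rw [Equiv.Perm.ofSubtype_apply_of_not_mem ρ hj]
    · intro τ hτ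
      have hτ' : ∀ j, vk a b k (τ j) = vk a b k j := by simpa using hτ
      ext j
      by_cases hj : (j : ℕ) < k
      · rw [Equiv.Perm.ofSubtype_apply_of_mem (p := fun x : Fin n => (x : ℕ) < k) _ hj]
        rfl
      · rw [Equiv.Perm.ofSubtype_apply_of_not_mem (p := fun x : Fin n => (x : ℕ) < k) _ hj]
        exact congrArg Fin.val (fixhigh τ hτ' j hj).symm
    · intro ρ _
      ext x
      simp [Equiv.Perm.subtypePerm_apply, Equiv.Perm.ofSubtype_apply_of_mem]
  rw [hbij, Finset.card_univ, Fintype.card_perm]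
  congr 1
  rw [Fintype.card_subtype]
  exact card_low hk

lemma card_Fk (ha : 1 ≤ a) (hb : 1 ≤ b) {k : ℕ} (hk : k ≤ n) (h2 : 2 ≤ a ∨ 1 ≤ k) :
    (Fk n a b k).card = n ! / k ! := by
  have hmem : ∀ σ ∈ (univ : Finset (Equiv.Perm (Fin n))),
      (fun i => vk a b k (σ i)) ∈ Fk n a b k := by
    intro σ _
    exact Finset.mem_image_of_mem _ (Finset.mem_univ σ)
  have hsum := Finset.card_eq_sum_card_fiberwise hmem
  have hcard_univ : (univ : Finset (Equiv.Perm (Fin n))).card = n ! := by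
    rw [Finset.card_univ, Fintype.card_perm, Fintype.card_fin]
  have hfiber : ∀ g ∈ Fk n a b k,
      (univ.filter (fun σ : Equiv.Perm (Fin n) =>
        (fun i => vk a b k (σ i)) = g)).card = k ! := by
    intro g hg
    obtain ⟨σ₀, _, rfl⟩ := Finset.mem_image.mp hg
    rw [← card_stab ha hb hk h2]
    apply Finset.card_bij' (i := fun τ _ => τ * σ₀⁻¹) (j := fun τ _ => τ * σ₀)
    · intro τ hτ
      simp only [Finset.mem_filter, Finset.mem_univ, true_and] at hτ ⊢
      intro j
      have := congrFun hτ (σ₀⁻¹ j)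
      rw [Equiv.Perm.mul_apply]
      rw [this]
      simp [Equiv.Perm.coe_inv, Equiv.apply_symm_apply]
    · intro τ hτ
      simp only [Finset.mem_filter, Finset.mem_univ, true_and] at hτ ⊢
      funext i
      rw [Equiv.Perm.mul_apply]
      exact hτ (σ₀ i)
    · intro τ _
      group
    · intro τ _
      group
  have : ∑ g ∈ Fk n a b k, (univ.filter (fun σ : Equiv.Perm (Fin n) =>
      (fun i => vk a b k (σ i)) = g)).card = (Fk n a b k).card * k ! := by
    rw [Finset.sum_congr rfl hfiber, Finset.sum_const, smul_eq_mul]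
  rw [this] at hsum
  rw [hcard_univ] at hsum
  symm
  exact Nat.div_eq_of_eq_mul_left (Nat.factorial_pos k) hsum

lemma ones_count (ha : 1 ≤ a) (hb : 1 ≤ b) {k : ℕ} (hk : k ≤ n) (h2 : 2 ≤ a ∨ 1 ≤ k)
    {g : Fin n → ℕ} (hg : g ∈ Fk n a b k) :
    (univ.filter (fun i => g i = 1)).card = k := by
  obtain ⟨σ, _, rfl⟩ := Finset.mem_image.mp hg
  have hstep : (univ.filter (fun i : Fin n => vk a b k (σ i) = 1)).card
      = (univ.filter (fun j : Fin n => vk a b k j = 1)).card := by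
    apply Finset.card_bij' (i := fun i _ => σ i) (j := fun j _ => σ⁻¹ j)
    · intro i hi
      simp only [Finset.mem_filter, Finset.mem_univ, true_and] at hi ⊢
      exact hi
    · intro j hj
      simp only [Finset.mem_filter, Finset.mem_univ, true_and] at hj ⊢
      rwa [Equiv.Perm.coe_inv, Equiv.apply_symm_apply]
    · intro i _
      simp
    · intro j _
      simp
  rw [hstep]
  have hfilter : univ.filter (fun j : Fin n => vk a b k j = 1)
      = univ.filter (fun j : Fin n => (j : ℕ) < k) := by
    ext j
    simp only [Finset.mem_filter, Finset.mem_univ, true_and]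
    constructor
    · intro h
      by_contra hc
      exact vk_ne_one ha hb h2 hc h
    · intro h
      exact vk_one h
  rw [hfilter]
  exact card_low hk

lemma Fk_disjoint (ha : 1 ≤ a) (hb : 1 ≤ b) {k k' : ℕ} (hk : k ≤ n) (hk' : k' ≤ n)
    (h2 : 2 ≤ a ∨ 1 ≤ k) (h2' : 2 ≤ a ∨ 1 ≤ k') (hne : k ≠ k') :
    Disjoint (Fk n a b k) (Fk n a b k') := by
  rw [Finset.disjoint_left]
  intro g hg hg'
  have h1 := ones_count ha hb hk h2 hg
  have h2'' := ones_count ha hb hk' h2' hg'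
  omega

lemma Fk_zero_eq_one (hb : 1 ≤ b) (ha1 : a = 1) : Fk n a b 0 = Fk n a b 1 := by
  subst ha1
  have : vk (n := n) 1 b 0 = vk 1 b 1 := by
    funext j
    unfold vk
    rcases Nat.eq_zero_or_pos (j : ℕ) with h | h
    · rw [h]
      norm_num
    · rw [if_neg (by omega), if_neg (by omega)]
  unfold Fk
  rw [this]

end Counting


lemma extreme_set_eq_image (ha : 1 ≤ a) :
    Set.extremePoints ℝ (XPFP n a b)
      = toReal '' ↑((range (n + 1)).biUnion (Fk n a b)) := by
  rw [extreme_eq_vertices ha]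
  ext x
  constructor
  · rintro ⟨k, hk, σ, rfl⟩
    refine ⟨(fun i => vk a b k (σ i)), ?_, rfl⟩
    rw [Finset.mem_coe, Finset.mem_biUnion]
    exact ⟨k, Finset.mem_range.mpr (by omega), Finset.mem_image_of_mem _ (Finset.mem_univ σ)⟩
  · rintro ⟨g, hg, rfl⟩
    rw [Finset.mem_coe, Finset.mem_biUnion] at hg
    obtain ⟨k, hkr, hgF⟩ := hg
    obtain ⟨σ, _, rfl⟩ := Finset.mem_image.mp hgF
    exact ⟨k, by simpa using Nat.lt_succ_iff.mp (Finset.mem_range.mp hkr), σ, rfl⟩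

end XPFaux

/-- The number of vertices (extreme points) of `X_n(a,b)` is
`n!·(1/1! + ⋯ + 1/n!)` if `a = 1`, and `n!·(1/0! + 1/1! + ⋯ + 1/n!)` if `a > 1`. -/
theorem stmt_2 (n a b : ℕ) (hn : 0 < n) (ha : 0 < a) (hb : 0 < b) :
    (a = 1 → (Set.extremePoints ℝ (XPFP n a b)).ncard = ∑ k ∈ Finset.Icc 1 n, n ! / k !) ∧
    (1 < a → (Set.extremePoints ℝ (XPFP n a b)).ncard = ∑ k ∈ Finset.range (n + 1), n ! / k !) := by
  have ha1 : 1 ≤ a := ha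
  have hb1 : 1 ≤ b := hb
  constructor
  · intro haeq
    rw [XPFaux.extreme_set_eq_image ha1,
      Set.ncard_image_of_injective _ XPFaux.toReal_injective, Set.ncard_coe_finset]
    have hB : (range (n + 1)).biUnion (XPFaux.Fk n a b)
        = (Finset.Icc 1 n).biUnion (XPFaux.Fk n a b) := by
      have hr : range (n + 1) = insert 0 (Finset.Icc 1 n) := by
        ext m
        simp only [Finset.mem_range, Finset.mem_insert, Finset.mem_Icc]
        omega
      rw [hr, Finset.biUnion_insert, XPFaux.Fk_zero_eq_one hb1 haeq]
      apply Finset.union_eq_right.mpr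
      exact Finset.subset_biUnion_of_mem _ (Finset.mem_Icc.mpr ⟨le_refl 1, hn⟩)
    have hdisj : ∀ k ∈ Finset.Icc 1 n, ∀ k' ∈ Finset.Icc 1 n, k ≠ k' →
        Disjoint (XPFaux.Fk n a b k) (XPFaux.Fk n a b k') := by
      intro k hk k' hk' hne
      rw [Finset.mem_Icc] at hk hk'
      exact XPFaux.Fk_disjoint ha1 hb1 hk.2 hk'.2 (Or.inr hk.1) (Or.inr hk'.1) hne
    rw [hB, Finset.card_biUnion hdisj]
    apply Finset.sum_congr rfl
    intro k hk
    rw [Finset.mem_Icc] at hk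
    exact XPFaux.card_Fk ha1 hb1 hk.2 (Or.inr hk.1)
  · intro ha2
    rw [XPFaux.extreme_set_eq_image ha1,
      Set.ncard_image_of_injective _ XPFaux.toReal_injective, Set.ncard_coe_finset]
    have hdisj : ∀ k ∈ range (n + 1), ∀ k' ∈ range (n + 1), k ≠ k' →
        Disjoint (XPFaux.Fk n a b k) (XPFaux.Fk n a b k') := by
      intro k hk k' hk' hne
      rw [Finset.mem_range] at hk hk'
      exact XPFaux.Fk_disjoint ha1 hb1 (by omega) (by omega) (Or.inl ha2) (Or.inl ha2) hne
    rw [Finset.card_biUnion hdisj]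
    apply Finset.sum_congr rfl
    intro k hk
    rw [Finset.mem_range] at hk
    exact XPFaux.card_Fk ha1 hb1 (by omega) (Or.inl ha2)
end

section
/- The vertices of the x-parking function polytope X_n(a,b) are exactly the coordinate permutations of the vectors (1,...,1, a+kb, a+(k+1)b, ..., a+(n-2)b, a+(n-1)b) with k leading ones, for all 0 ≤ k ≤ n. -/
open Finset MeasureTheory

lemma xpf_EF {ι : Type*} (t : Finset ι) (w g : ι → ℝ) (c : ℝ)
    (h0 : ∀ i ∈ t, 0 ≤ w i) (h1 : ∑ i ∈ t, w i = 1)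
    (hle : ∀ i ∈ t, w i ≠ 0 → g i ≤ c) (hsum : ∑ i ∈ t, w i * g i = c) :
    ∀ i ∈ t, w i ≠ 0 → g i = c := by
  have hzero : ∑ i ∈ t, w i * (c - g i) = 0 := by
    have : ∑ i ∈ t, w i * (c - g i) = (∑ i ∈ t, w i) * c - ∑ i ∈ t, w i * g i := by
      rw [Finset.sum_mul, ← Finset.sum_sub_distrib]
      exact Finset.sum_congr rfl fun i _ => by ring
    rw [this, h1, hsum]; ring
  intro i hi hwi
  have hnn : ∀ j ∈ t, 0 ≤ w j * (c - g j) := by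
    intro j hj
    rcases eq_or_ne (w j) 0 with h | h
    · simp [h]
    · exact mul_nonneg (h0 j hj) (sub_nonneg.2 (hle j hj h))
  have := (Finset.sum_eq_zero_iff_of_nonneg hnn).1 hzero i hi
  have hwpos : 0 < w i := lt_of_le_of_ne (h0 i hi) (Ne.symm hwi)
  nlinarith [this]

lemma xpf_min (n a b : ℕ) (f : Fin n → ℕ) (hf : IsXPF n a b f) (T : Finset (Fin n))
    (hT : T.Nonempty) (c : ℕ) (hcard : n ≤ T.card + c) :
    ∃ t ∈ T, f t ≤ a + c * b := by
  obtain ⟨-, σ', hmono, hbnd⟩ := hf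
  by_contra h
  push_neg at h
  have hmap : ∀ t ∈ T, ((σ'.symm t : Fin n) : ℕ) ∈ Finset.Ico (c + 1) n := by
    intro t ht
    have hlt : ¬ ((σ'.symm t : Fin n) : ℕ) ≤ c := by
      intro hle
      have : f t ≤ a + ((σ'.symm t : Fin n) : ℕ) * b := by
        have := hbnd (σ'.symm t)
        rwa [Equiv.apply_symm_apply] at this
      have : f t ≤ a + c * b :=
        this.trans (by gcongr)
      exact absurd (h t ht) (not_lt.2 this)
    exact Finset.mem_Ico.2 ⟨by omega, (σ'.symm t).isLt⟩
  have hinj : Set.InjOn (fun t => ((σ'.symm t : Fin n) : ℕ)) T := by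
    intro x _ y _ hxy
    exact σ'.symm.injective (Fin.val_injective hxy)
  have hcard2 : T.card ≤ (Finset.Ico (c + 1) n).card :=
    Finset.card_le_card_of_injOn _ hmap hinj
  rw [Nat.card_Ico] at hcard2
  have := hT.card_pos
  omega

lemma xpf_key (n a b : ℕ) (hb : 0 < b)
    (k : ℕ) (hk : k ≤ n) (σ : Equiv.Perm (Fin n)) (v : Fin n → ℝ)
    (hv : ∀ i : Fin n, v (σ i) = if (i : ℕ) < k then 1 else (a : ℝ) + ((i : ℕ) : ℝ) * b)
    {ι : Type*} (t : Finset ι) (w : ι → ℝ) (z : ι → Fin n → ℝ)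
    (h0 : ∀ i ∈ t, 0 ≤ w i) (h1 : ∑ i ∈ t, w i = 1)
    (hz : ∀ i ∈ t, ∃ f : Fin n → ℕ, IsXPF n a b f ∧ z i = fun j => (f j : ℝ))
    (hsum : ∑ i ∈ t, w i • z i = v) :
    ∀ i ∈ t, w i ≠ 0 → z i = v := by
  have coord : ∀ j, ∑ i ∈ t, w i * z i j = v j := by
    intro j
    rw [← hsum]
    rw [Finset.sum_apply]
    simp [smul_eq_mul]
  -- downward induction on the tail coordinates
  have tail : ∀ d : ℕ, d ≤ n - k → ∀ i ∈ t, w i ≠ 0 → ∀ m : Fin n, n - d ≤ (m : ℕ) →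
      z i (σ m) = (a : ℝ) + ((m : ℕ) : ℝ) * b := by
    intro d
    induction d with
    | zero =>
      intro _ i hi hw m hm
      exact absurd m.isLt (by omega)
    | succ d ih =>
      intro hd i hi hwi m hm
      have hdk : d ≤ n - k := le_trans (Nat.le_succ d) hd
      by_cases hm2 : n - d ≤ (m : ℕ)
      · exact ih hdk i hi hwi m hm2
      · have hmval : (m : ℕ) = n - (d + 1) := by omega
        have hub : ∀ i' ∈ t, w i' ≠ 0 → z i' (σ m) ≤ (a : ℝ) + ((m : ℕ) : ℝ) * b := by
          intro i' hi' hwi'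
          obtain ⟨f, hfPF, hzf⟩ := hz i' hi'
          have hcardT : n ≤ ((Finset.Ici m).image σ).card + (m : ℕ) := by
            rw [Finset.card_image_of_injective _ σ.injective, Fin.card_Ici]
            omega
          obtain ⟨t', ht', hft'⟩ := xpf_min n a b f hfPF ((Finset.Ici m).image σ)
            ⟨σ m, Finset.mem_image_of_mem σ (Finset.mem_Ici.2 le_rfl)⟩ (m : ℕ) hcardT
          obtain ⟨r, hr, rfl⟩ := Finset.mem_image.1 ht'
          rcases eq_or_ne r m with rfl | hrm
          · rw [hzf]
            have : (f (σ r) : ℝ) ≤ ((a + (r : ℕ) * b : ℕ) : ℝ) := by exact_mod_cast hft'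
            simpa [Nat.cast_add, Nat.cast_mul] using this
          · exfalso
            have hmr : (m : ℕ) < (r : ℕ) := by
              have := Finset.mem_Ici.1 hr
              have : (m : ℕ) ≤ (r : ℕ) := this
              rcases this.lt_or_eq with h | h
              · exact h
              · exact absurd (Fin.ext h.symm) hrm
            have hir : z i' (σ r) = (a : ℝ) + ((r : ℕ) : ℝ) * b :=
              ih hdk i' hi' hwi' r (by omega)
            have : (f (σ r) : ℝ) = (a : ℝ) + ((r : ℕ) : ℝ) * b := by
              rw [← hir, hzf]
            have hle2 : (a : ℝ) + ((r : ℕ) : ℝ) * b ≤ (a : ℝ) + ((m : ℕ) : ℝ) * b := by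
              rw [← this]
              have : (f (σ r) : ℝ) ≤ ((a + (m : ℕ) * b : ℕ) : ℝ) := by exact_mod_cast hft'
              simpa [Nat.cast_add, Nat.cast_mul] using this
            have : ((r : ℕ) : ℝ) * b ≤ ((m : ℕ) : ℝ) * b := by linarith
            have hbR : (0 : ℝ) < (b : ℝ) := by exact_mod_cast hb
            have : ((r : ℕ) : ℝ) ≤ ((m : ℕ) : ℝ) := le_of_mul_le_mul_right this hbR
            have : (r : ℕ) ≤ (m : ℕ) := by exact_mod_cast this
            omega
        have hmk : ¬ ((m : ℕ) < k) := by omega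
        have hvm : v (σ m) = (a : ℝ) + ((m : ℕ) : ℝ) * b := by rw [hv m]; simp [hmk]
        have := xpf_EF t w (fun i' => z i' (σ m)) ((a : ℝ) + ((m : ℕ) : ℝ) * b) h0 h1 hub
          (by rw [← hvm]; exact coord (σ m))
        exact this i hi hwi
  -- conclude
  intro i hi hwi
  funext j
  have hj : j = σ (σ.symm j) := (σ.apply_symm_apply j).symm
  by_cases hjk : ((σ.symm j : Fin n) : ℕ) < k
  · -- coordinate forced to be 1
    have hvj : v j = 1 := by rw [hj, hv]; simp [hjk]
    have hlb : ∀ i' ∈ t, w i' ≠ 0 → -(z i' j) ≤ (-1 : ℝ) := by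
      intro i' hi' _
      obtain ⟨f, hfPF, hzf⟩ := hz i' hi'
      have : (1 : ℝ) ≤ z i' j := by
        rw [hzf]
        simp only []
        exact_mod_cast hfPF.1 j
      linarith
    have hsn : ∑ i' ∈ t, w i' * (-(z i' j)) = (-1 : ℝ) := by
      have : ∑ i' ∈ t, w i' * (-(z i' j)) = -∑ i' ∈ t, w i' * z i' j := by
        rw [← Finset.sum_neg_distrib]
        exact Finset.sum_congr rfl fun _ _ => by ring
      rw [this, coord j, hvj]
    have h' := xpf_EF t w (fun i' => -(z i' j)) (-1) h0 h1 hlb hsn i hi hwi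
    simp only [neg_eq_iff_eq_neg] at h'
    have : z i j = 1 := by simpa using h'
    rw [this, hvj]
  · -- tail coordinate
    have hm : n - (n - k) ≤ ((σ.symm j : Fin n) : ℕ) := by omega
    have := tail (n - k) le_rfl i hi hwi (σ.symm j) hm
    rw [hj, hv, this]
    simp [hjk]

lemma xpf_vertex (n a b : ℕ) (ha : 0 < a) (hb : 0 < b)
    (k : ℕ) (hk : k ≤ n) (σ : Equiv.Perm (Fin n)) (v : Fin n → ℝ)
    (hv : ∀ i : Fin n, v (σ i) = if (i : ℕ) < k then 1 else (a : ℝ) + ((i : ℕ) : ℝ) * b) :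
    v ∈ Set.extremePoints ℝ (XPFP n a b) := by
  classical
  set S := {x : Fin n → ℝ | ∃ f : Fin n → ℕ, IsXPF n a b f ∧ x = fun i => (f i : ℝ)} with hS
  -- the natural-number parking function underlying v
  set fℕ : Fin n → ℕ := fun j => if ((σ.symm j : Fin n) : ℕ) < k then 1
    else a + ((σ.symm j : Fin n) : ℕ) * b with hfdef
  have hfσ : ∀ i : Fin n, fℕ (σ i) = if (i : ℕ) < k then 1 else a + (i : ℕ) * b := by
    intro i; simp [hfdef]
  have hfPF : IsXPF n a b fℕ := by
    refine ⟨?_, σ, ?_, ?_⟩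
    · intro j
      rw [hfdef]
      simp only []
      split
      · exact le_rfl
      · omega
    · intro p q hpq
      simp only [Function.comp_apply, hfσ]
      have hpq' : (p : ℕ) ≤ (q : ℕ) := hpq
      split_ifs with h1 h2 h2
      · exact le_rfl
      · omega
      · omega
      · have : (p : ℕ) * b ≤ (q : ℕ) * b := Nat.mul_le_mul_right b hpq'
        omega
    · intro i
      rw [hfσ]
      split
      · omega
      · exact le_rfl
  have hvf : v = fun j => (fℕ j : ℝ) := by
    funext j
    have : v j = v (σ (σ.symm j)) := by rw [σ.apply_symm_apply]
    rw [this, hv, hfdef]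
    simp only [σ.symm_apply_apply]
    split
    · norm_num
    · push_cast; ring
  have hvS : v ∈ S := ⟨fℕ, hfPF, hvf⟩
  have hvP : v ∈ XPFP n a b := subset_convexHull ℝ S hvS
  refine ⟨hvP, ?_⟩
  intro x hx y hy hseg
  obtain ⟨θ, τ, hθ, hτ, hθτ, heq⟩ := hseg
  rw [XPFP, _root_.convexHull_eq] at hx hy
  obtain ⟨ι₁, t₁, w₁, z₁, hw₁0, hw₁1, hz₁, hx⟩ := hx
  obtain ⟨ι₂, t₂, w₂, z₂, hw₂0, hw₂1, hz₂, hy⟩ := hy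
  rw [Finset.centerMass_eq_of_sum_1 _ _ hw₁1] at hx
  rw [Finset.centerMass_eq_of_sum_1 _ _ hw₂1] at hy
  -- combined convex combination
  set t := t₁.disjSum t₂ with ht
  set w : ι₁ ⊕ ι₂ → ℝ := Sum.elim (fun i => θ * w₁ i) (fun i => τ * w₂ i) with hwdef
  set z : ι₁ ⊕ ι₂ → Fin n → ℝ := Sum.elim z₁ z₂ with hzdef
  have h0 : ∀ i ∈ t, 0 ≤ w i := by
    rintro (i | i) hi
    · exact mul_nonneg hθ.le (hw₁0 i (Finset.inl_mem_disjSum.1 hi))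
    · exact mul_nonneg hτ.le (hw₂0 i (Finset.inr_mem_disjSum.1 hi))
  have h1 : ∑ i ∈ t, w i = 1 := by
    rw [ht, hwdef, Finset.sum_sumElim, ← Finset.mul_sum, ← Finset.mul_sum, hw₁1, hw₂1]
    simpa using hθτ
  have hzS : ∀ i ∈ t, ∃ f : Fin n → ℕ, IsXPF n a b f ∧ z i = fun j => (f j : ℝ) := by
    rintro (i | i) hi
    · exact hz₁ i (Finset.inl_mem_disjSum.1 hi)
    · exact hz₂ i (Finset.inr_mem_disjSum.1 hi)
  have hsum : ∑ i ∈ t, w i • z i = v := by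
    rw [ht, Finset.sum_disjSum]
    simp only [hwdef, hzdef, Sum.elim_inl, Sum.elim_inr, mul_smul]
    rw [← Finset.smul_sum, ← Finset.smul_sum, hx, hy, heq]
  have hforce := xpf_key n a b hb k hk σ v hv t w z h0 h1 hzS hsum
  refine (?_ : x = v ∧ y = v).1
  constructor
  · rw [← hx]
    have : ∀ i ∈ t₁, w₁ i • z₁ i = w₁ i • v := by
      intro i hi
      rcases eq_or_ne (w₁ i) 0 with h | h
      · rw [h, zero_smul, zero_smul]
      · have hz' := hforce (Sum.inl i) (Finset.inl_mem_disjSum.2 hi)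
          (by simpa [hwdef] using mul_ne_zero (ne_of_gt hθ) h)
        simp only [hzdef, Sum.elim_inl] at hz'
        rw [hz']
    rw [Finset.sum_congr rfl this, ← Finset.sum_smul, hw₁1, one_smul]
  · rw [← hy]
    have : ∀ i ∈ t₂, w₂ i • z₂ i = w₂ i • v := by
      intro i hi
      rcases eq_or_ne (w₂ i) 0 with h | h
      · rw [h, zero_smul, zero_smul]
      · have hz' := hforce (Sum.inr i) (Finset.inr_mem_disjSum.2 hi)
          (by simpa [hwdef] using mul_ne_zero (ne_of_gt hτ) h)
        simp only [hzdef, Sum.elim_inr] at hz'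
        rw [hz']
    rw [Finset.sum_congr rfl this, ← Finset.sum_smul, hw₂1, one_smul]

/-- The vertices of `X_n(a,b)` are exactly the coordinate permutations of
`(1,...,1, a+kb, a+(k+1)b, ..., a+(n-1)b)` with `k` leading ones, `0 ≤ k ≤ n`. -/
theorem stmt_3 (n a b : ℕ) (hn : 0 < n) (ha : 0 < a) (hb : 0 < b) :
    Set.extremePoints ℝ (XPFP n a b) =
      {v : Fin n → ℝ | ∃ k ≤ n, ∃ σ : Equiv.Perm (Fin n),
        ∀ i : Fin n, v (σ i) = if (i : ℕ) < k then 1 else (a : ℝ) + ((i : ℕ) : ℝ) * b} := by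
  classical
  ext v
  simp only [Set.mem_setOf_eq]
  constructor
  · intro hv
    have hvS : v ∈ {x : Fin n → ℝ | ∃ f : Fin n → ℕ, IsXPF n a b f ∧ x = fun i => (f i : ℝ)} := by
      have := hv
      rw [XPFP] at this
      exact extremePoints_convexHull_subset this
    obtain ⟨f, hfPF, hvf⟩ := hvS
    obtain ⟨hpos, σ, hmono, hbnd⟩ := hfPF
    by_cases hall : ∀ i : Fin n, f (σ i) = 1
    · refine ⟨n, le_rfl, σ, fun i => ?_⟩
      rw [hvf]
      simp [hall i, i.isLt]
    · push_neg at hall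
      obtain ⟨i₁, hi₁⟩ := hall
      set A : Finset (Fin n) := Finset.univ.filter (fun i : Fin n => f (σ i) ≠ 1) with hA
      have hAne : A.Nonempty := ⟨i₁, by simp [hA, hi₁]⟩
      set i0 := A.min' hAne with hi0
      have hi0A : f (σ i0) ≠ 1 := by
        have := A.min'_mem hAne
        exact (Finset.mem_filter.1 this).2
      have hones : ∀ i : Fin n, i < i0 → f (σ i) = 1 := by
        intro i hi
        by_contra h
        exact absurd (A.min'_le i (by simp [hA, h])) (not_le.2 hi)
      by_cases hform : ∀ j : Fin n, i0 ≤ j → f (σ j) = a + (j : ℕ) * b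
      · refine ⟨(i0 : ℕ), le_of_lt i0.isLt, σ, fun i => ?_⟩
        rw [hvf]
        by_cases h : (i : ℕ) < (i0 : ℕ)
        · simp only [h, if_true]
          have : f (σ i) = 1 := hones i h
          simp [this]
        · simp only [h, if_false]
          have : f (σ i) = a + (i : ℕ) * b := hform i (not_lt.1 h)
          simp only [this]
          push_cast
          ring
      · exfalso
        push_neg at hform
        obtain ⟨j, hj0, hjne⟩ := hform
        set v0 := f (σ j) with hv0
        have h2 : 2 ≤ v0 := by
          have h1' : 1 ≤ f (σ i0) := hpos _
          have hle : f (σ i0) ≤ v0 := hmono hj0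
          omega
        have hlt : v0 < a + (j : ℕ) * b := lt_of_le_of_ne (hbnd j) hjne
        set B : Finset (Fin n) := Finset.univ.filter (fun i : Fin n => f (σ i) = v0) with hB
        have hBne : B.Nonempty := ⟨j, by simp [hB, hv0]⟩
        set jmin := B.min' hBne with hjmindef
        set jmax := B.max' hBne with hjmaxdef
        have hmin : f (σ jmin) = v0 := by
          have := B.min'_mem hBne
          exact (Finset.mem_filter.1 this).2
        have hmax : f (σ jmax) = v0 := by
          have := B.max'_mem hBne
          exact (Finset.mem_filter.1 this).2
        have hjmin : jmin ≤ j := B.min'_le j (by simp [hB, hv0])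
        have hjmax : j ≤ jmax := B.le_max' j (by simp [hB, hv0])
        have hlow : ∀ p : Fin n, p < jmin → f (σ p) < v0 := by
          intro p hp
          have hne : f (σ p) ≠ v0 := by
            intro h
            exact absurd (B.min'_le p (by simp [hB, h])) (not_le.2 hp)
          have hle : f (σ p) ≤ v0 := by rw [← hmin]; exact hmono hp.le
          omega
        have hhigh : ∀ q : Fin n, jmax < q → v0 + 1 ≤ f (σ q) := by
          intro q hq
          have hne : f (σ q) ≠ v0 := by
            intro h
            exact absurd (B.le_max' q (by simp [hB, h])) (not_le.2 hq)
          have hge : v0 ≤ f (σ q) := by rw [← hmax]; exact hmono hq.le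
          omega
        set fm := Function.update f (σ jmin) (v0 - 1) with hfm
        set fp := Function.update f (σ jmin) (v0 + 1) with hfp
        have hfmσ : ∀ i : Fin n, fm (σ i) = if i = jmin then v0 - 1 else f (σ i) := by
          intro i
          rw [hfm, Function.update_apply]
          simp [σ.injective.eq_iff]
        have hfpσ : ∀ i : Fin n, fp (σ (Equiv.swap jmin jmax i)) =
            if i = jmax then v0 + 1 else f (σ i) := by
          intro i
          rw [hfp, Function.update_apply]
          by_cases h : i = jmax
          · subst h
            rw [Equiv.swap_apply_right]
            simp
          · have hne : σ (Equiv.swap jmin jmax i) ≠ σ jmin := by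
              intro hcon
              have h1 := σ.injective hcon
              have h2 : Equiv.swap jmin jmax i = Equiv.swap jmin jmax jmax := by
                rw [Equiv.swap_apply_right, h1]
              exact h ((Equiv.swap jmin jmax).injective h2)
            rw [if_neg hne, if_neg h]
            by_cases h2 : i = jmin
            · subst h2
              rw [Equiv.swap_apply_left, hmax, hmin]
            · rw [Equiv.swap_apply_of_ne_of_ne h2 h]
        have hfmPF : IsXPF n a b fm := by
          refine ⟨?_, σ, ?_, ?_⟩
          · intro x
            rw [hfm, Function.update_apply]
            split
            · omega
            · exact hpos x
          · intro p q hpq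
            simp only [Function.comp_apply, hfmσ]
            by_cases hp : p = jmin <;> by_cases hq : q = jmin
            · simp [hp, hq]
            · subst hp
              rw [if_pos rfl, if_neg hq]
              have : v0 ≤ f (σ q) := by rw [← hmin]; exact hmono hpq
              omega
            · subst hq
              rw [if_neg hp, if_pos rfl]
              have hplt : p < jmin := lt_of_le_of_ne hpq hp
              have := hlow p hplt
              omega
            · rw [if_neg hp, if_neg hq]
              exact hmono hpq
          · intro i
            by_cases h : i = jmin
            · subst h
              rw [hfmσ, if_pos rfl]
              have := hbnd jmin
              rw [hmin] at this
              omega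
            · rw [hfmσ, if_neg h]
              exact hbnd i
        have hfpPF : IsXPF n a b fp := by
          refine ⟨?_, (Equiv.swap jmin jmax).trans σ, ?_, ?_⟩
          · intro x
            rw [hfp, Function.update_apply]
            split
            · omega
            · exact hpos x
          · intro p q hpq
            simp only [Function.comp_apply, Equiv.trans_apply, hfpσ]
            by_cases hp : p = jmax <;> by_cases hq : q = jmax
            · simp [hp, hq]
            · subst hp
              rw [if_pos rfl, if_neg hq]
              exact hhigh q (lt_of_le_of_ne hpq (Ne.symm hq))
            · subst hq
              rw [if_neg hp, if_pos rfl]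
              have : f (σ p) ≤ v0 := by rw [← hmax]; exact hmono hpq
              omega
            · rw [if_neg hp, if_neg hq]
              exact hmono hpq
          · intro i
            simp only [Equiv.trans_apply]
            rw [hfpσ]
            by_cases h : i = jmax
            · subst h
              rw [if_pos rfl]
              have hjN : (j : ℕ) ≤ (jmax : ℕ) := hjmax
              have hmul : (j : ℕ) * b ≤ (jmax : ℕ) * b := Nat.mul_le_mul_right b hjN
              omega
            · rw [if_neg h]
              exact hbnd i
        have hxm : (fun i => (fm i : ℝ)) ∈ XPFP n a b :=
          subset_convexHull ℝ _ ⟨fm, hfmPF, rfl⟩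
        have hxp : (fun i => (fp i : ℝ)) ∈ XPFP n a b :=
          subset_convexHull ℝ _ ⟨fp, hfpPF, rfl⟩
        have hseg : v ∈ openSegment ℝ (fun i => (fm i : ℝ)) (fun i => (fp i : ℝ)) := by
          refine ⟨1/2, 1/2, by norm_num, by norm_num, by norm_num, ?_⟩
          funext c
          simp only [Pi.add_apply, Pi.smul_apply, smul_eq_mul]
          rw [hvf]
          by_cases hc : c = σ jmin
          · subst hc
            rw [hfm, hfp]
            simp only [Function.update_self, hmin]
            have hcast : ((v0 - 1 : ℕ) : ℝ) = (v0 : ℝ) - 1 := by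
              have h1 : 1 ≤ v0 := by omega
              push_cast [h1]
              ring
            rw [hcast]
            push_cast
            ring
          · rw [hfm, hfp]
            simp only [Function.update_apply, if_neg hc]
            ring
        have hvy := (mem_extremePoints.1 hv).2 _ hxm _ hxp hseg |>.2
        have hcf := congrFun hvy (σ jmin)
        rw [hvf] at hcf
        simp only [hfp, Function.update_self, hmin] at hcf
        have : v0 + 1 = v0 := by exact_mod_cast hcf
        omega
  · rintro ⟨k, hk, σ, hvσ⟩
    exact xpf_vertex n a b ha hb k hk σ v hvσ
end

section
/- The classical parking function polytope PF_n is integrally equivalent to the partial permutahedron P(n, n-1), via the translation (x_1,...,x_n) ↦ (x_1+1, ..., x_n+1). -/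
open Finset MeasureTheory

/-- The partial permutahedron `P(n,p)`: convex hull of all coordinate
permutations of `(0,...,0, p-k+1, ..., p-1, p)` with `k` nonzero entries,
for `0 ≤ k ≤ min n p`. -/
def PP (n p : ℕ) : Set (Fin n → ℝ) :=
  convexHull ℝ {x : Fin n → ℝ | ∃ k ≤ min n p, ∃ σ : Equiv.Perm (Fin n),
    ∀ i : Fin n, x (σ i) = if (i : ℕ) < n - k then 0 else (p : ℝ) - (n : ℝ) + 1 + ((i : ℕ) : ℝ)}


/-- Integral equivalence of two (full-dimensional) lattice polytopes in `ℝ^n`: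
an affine bijection mapping one onto the other and preserving the lattice `ℤ^n`. -/
def IntEquiv (n : ℕ) (P Q : Set (Fin n → ℝ)) : Prop :=
  ∃ f : (Fin n → ℝ) ≃ᵃ[ℝ] (Fin n → ℝ), f '' P = Q ∧
    ∀ x : Fin n → ℝ, (∀ i, ∃ z : ℤ, x i = (z : ℝ)) ↔ (∀ i, ∃ z : ℤ, f x i = (z : ℝ))


namespace Stmt8Aux

variable {n : ℕ}


variable {n : ℕ}

/-- number of entries of `f` that are `≤ t` -/
def cnt (n : ℕ) (f : Fin n → ℕ) (t : ℕ) : ℕ :=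
  ((Finset.univ : Finset (Fin n)).filter (fun i => f i ≤ t)).card

lemma card_filter_val_lt (n t : ℕ) (ht : t ≤ n) :
    (((Finset.univ : Finset (Fin n))).filter (fun i : Fin n => (i : ℕ) < t)).card = t := by
  have : ((Finset.univ : Finset (Fin n))).filter (fun i : Fin n => (i : ℕ) < t)
      = (Finset.univ : Finset (Fin t)).map (Fin.castLEEmb ht) := by
    ext i
    simp only [Finset.mem_filter, Finset.mem_univ, true_and, Finset.mem_map]
    constructor
    · intro h
      exact ⟨⟨(i : ℕ), h⟩, Fin.ext rfl⟩
    · rintro ⟨j, rfl⟩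
      exact j.2
  rw [this, Finset.card_map, Finset.card_univ, Fintype.card_fin]

lemma cnt_le (f : Fin n → ℕ) (t : ℕ) : cnt n f t ≤ n := by
  simpa [cnt] using Finset.card_filter_le (Finset.univ : Finset (Fin n)) (fun i => f i ≤ t)

/-- counting characterization of a classical parking function -/
def PFc (n : ℕ) (f : Fin n → ℕ) : Prop :=
  (∀ i, 1 ≤ f i) ∧ ∀ t, t ≤ n → t ≤ cnt n f t

lemma cnt_comp_perm (f : Fin n → ℕ) (σ : Equiv.Perm (Fin n)) (t : ℕ) :
    cnt n (f ∘ σ) t = cnt n f t := by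
  unfold cnt
  apply Finset.card_bij (fun i _ => σ i)
  · intro a ha; simp only [Finset.mem_filter, Finset.mem_univ, true_and] at ha ⊢; exact ha
  · intro a _ b _ h; exact σ.injective h
  · intro b hb
    refine ⟨σ.symm b, ?_, by simp⟩
    simp only [Finset.mem_filter, Finset.mem_univ, true_and, Function.comp_apply,
      Equiv.apply_symm_apply] at hb ⊢
    exact hb

lemma monotone_filter (g : Fin n → ℕ) (hm : Monotone g) (t : ℕ) (j : Fin n) :
    g j ≤ t ↔ (j : ℕ) < cnt n g t := by
  constructor
  · intro h
    have hsub : ((Finset.univ : Finset (Fin n))).filter (fun i : Fin n => (i : ℕ) < (j : ℕ) + 1)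
        ⊆ ((Finset.univ : Finset (Fin n))).filter (fun i => g i ≤ t) := by
      intro i hi
      simp only [Finset.mem_filter, Finset.mem_univ, true_and] at hi ⊢
      have hij : i ≤ j := by
        have := Nat.lt_succ_iff.mp hi
        exact Fin.le_def.mpr this
      exact le_trans (hm hij) h
    have hc := Finset.card_le_card hsub
    rw [card_filter_val_lt n ((j : ℕ) + 1) j.2] at hc
    exact hc
  · intro h
    by_contra hc
    push_neg at hc
    have hsub : ((Finset.univ : Finset (Fin n))).filter (fun i => g i ≤ t)
        ⊆ ((Finset.univ : Finset (Fin n))).filter (fun i : Fin n => (i : ℕ) < (j : ℕ)) := by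
      intro i hi
      simp only [Finset.mem_filter, Finset.mem_univ, true_and] at hi ⊢
      by_contra hij
      push_neg at hij
      have : j ≤ i := Fin.le_def.mpr hij
      exact absurd (le_trans (hm this) hi) (not_le.mpr hc)
    have hcard := Finset.card_le_card hsub
    rw [card_filter_val_lt n (j : ℕ) (le_of_lt j.2)] at hcard
    unfold cnt at h
    omega

lemma isXPF_iff_PFc (f : Fin n → ℕ) : IsXPF n 1 1 f ↔ PFc n f := by
  constructor
  · rintro ⟨h1, σ, hm, hb⟩
    refine ⟨h1, fun t htn => ?_⟩
    have hsub : ((Finset.univ : Finset (Fin n))).filter (fun i : Fin n => (i : ℕ) < t)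
        ⊆ ((Finset.univ : Finset (Fin n))).filter (fun i => (f ∘ σ) i ≤ t) := by
      intro i hi
      simp only [Finset.mem_filter, Finset.mem_univ, true_and] at hi ⊢
      have := hb i
      simp only [mul_one] at this
      simpa using le_trans this (by omega)
    have hcard := Finset.card_le_card hsub
    rw [card_filter_val_lt n t htn] at hcard
    calc t ≤ cnt n (f ∘ σ) t := hcard
      _ = cnt n f t := cnt_comp_perm f σ t
  · rintro ⟨h1, h2⟩
    refine ⟨h1, Tuple.sort f, Tuple.monotone_sort f, fun i => ?_⟩
    have hcnt : (i : ℕ) < cnt n (f ∘ Tuple.sort f) ((i : ℕ) + 1) := by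
      rw [cnt_comp_perm]
      exact lt_of_lt_of_le (Nat.lt_succ_self _) (h2 ((i : ℕ) + 1) i.2)
    have := (monotone_filter (f ∘ Tuple.sort f) (Tuple.monotone_sort f) ((i : ℕ) + 1) i).mpr hcnt
    simpa [mul_one, Nat.add_comm] using this

lemma pfc_val_le (f : Fin n → ℕ) (hf : PFc n f) (i : Fin n) : f i ≤ n := by
  by_contra hc
  push_neg at hc
  have h := hf.2 n le_rfl
  have hsub : ((Finset.univ : Finset (Fin n))).filter (fun j => f j ≤ n)
      ⊆ Finset.univ.erase i := by
    intro j hj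
    simp only [Finset.mem_filter, Finset.mem_univ, true_and] at hj
    refine Finset.mem_erase.mpr ⟨?_, Finset.mem_univ j⟩
    rintro rfl; omega
  have hcard := Finset.card_le_card hsub
  rw [Finset.card_erase_of_mem (Finset.mem_univ i)] at hcard
  have hn1 : 1 ≤ n := lt_of_le_of_lt (Nat.zero_le _) i.2
  unfold cnt at h
  simp only [Finset.card_univ, Fintype.card_fin] at hcard
  omega

lemma pfc_update_add (f : Fin n → ℕ) (hf : PFc n f) (p : Fin n)
    (hslack : f p < cnt n f (f p)) :
    PFc n (Function.update f p (f p + 1)) := by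
  refine ⟨fun i => ?_, fun t htn => ?_⟩
  · rcases eq_or_ne i p with rfl | h
    · simp
    · simpa [Function.update_of_ne h] using hf.1 i
  · rcases eq_or_ne t (f p) with rfl | hne
    · -- cnt drops by at most one, slack saves us
      have hsub : (((Finset.univ : Finset (Fin n))).filter (fun i => f i ≤ f p)).erase p
          ⊆ ((Finset.univ : Finset (Fin n))).filter
              (fun i => Function.update f p (f p + 1) i ≤ f p) := by
        intro i hi
        rw [Finset.mem_erase] at hi
        simp only [Finset.mem_filter, Finset.mem_univ, true_and] at hi ⊢
        rw [Function.update_of_ne hi.1]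
        exact hi.2
      have hcard := Finset.card_le_card hsub
      rw [Finset.card_erase_of_mem (by simp [cnt])] at hcard
      · unfold cnt at hslack ⊢
        omega
    · have hsub : ((Finset.univ : Finset (Fin n))).filter (fun i => f i ≤ t)
          ⊆ ((Finset.univ : Finset (Fin n))).filter
              (fun i => Function.update f p (f p + 1) i ≤ t) := by
        intro i hi
        simp only [Finset.mem_filter, Finset.mem_univ, true_and] at hi ⊢
        rcases eq_or_ne i p with rfl | h
        · rw [Function.update_self]
          omega
        · rw [Function.update_of_ne h]; exact hi
      have hcard := Finset.card_le_card hsub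
      exact le_trans (hf.2 t htn) hcard

lemma pfc_update_sub (f : Fin n → ℕ) (hf : PFc n f) (p : Fin n) (hp : 2 ≤ f p) :
    PFc n (Function.update f p (f p - 1)) := by
  refine ⟨fun i => ?_, fun t htn => ?_⟩
  · rcases eq_or_ne i p with rfl | h
    · simp; omega
    · simpa [Function.update_of_ne h] using hf.1 i
  · have hsub : ((Finset.univ : Finset (Fin n))).filter (fun i => f i ≤ t)
        ⊆ ((Finset.univ : Finset (Fin n))).filter
            (fun i => Function.update f p (f p - 1) i ≤ t) := by
      intro i hi
      simp only [Finset.mem_filter, Finset.mem_univ, true_and] at hi ⊢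
      rcases eq_or_ne i p with rfl | h
      · rw [Function.update_self]; omega
      · rw [Function.update_of_ne h]; exact hi
    exact le_trans (hf.2 t htn) (Finset.card_le_card hsub)

lemma gen_of_tight (hn : 0 < n) (f : Fin n → ℕ) (hf : PFc n f)
    (ht : ∀ p : Fin n, 2 ≤ f p → cnt n f (f p) ≤ f p) :
    ∃ k ≤ min n (n - 1), ∃ σ : Equiv.Perm (Fin n),
      ∀ i : Fin n, f (σ i) = if (i : ℕ) < n - k then 1 else (i : ℕ) + 1 := by
  set σ := Tuple.sort f with hσdef
  set g : Fin n → ℕ := f ∘ σ with hgdef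
  have hm : Monotone g := Tuple.monotone_sort f
  set m : ℕ := cnt n f 1 with hmdef
  have hm1 : 1 ≤ m := hf.2 1 hn
  have hmn : m ≤ n := cnt_le f 1
  refine ⟨n - m, by omega, σ, fun i => ?_⟩
  have hnk : n - (n - m) = m := by omega
  rw [hnk]
  have hg1 : g i ≤ 1 ↔ (i : ℕ) < m := by
    rw [monotone_filter g hm 1 i, hgdef, cnt_comp_perm]
  by_cases hi : (i : ℕ) < m
  · simp only [if_pos hi]
    have ha : g i ≤ 1 := hg1.mpr hi
    have hb : 1 ≤ g i := hf.1 (σ i)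
    show g i = 1
    omega
  · simp only [if_neg hi]
    have hgi2 : 2 ≤ g i := by
      by_contra hc
      exact hi (hg1.mp (by omega))
    set c := g i with hcdef
    have hcle : cnt n f c ≤ c := ht (σ i) hgi2
    have hcn : c ≤ n := pfc_val_le f hf (σ i)
    -- c ≥ i + 1
    have h1 : (i : ℕ) < cnt n g c := (monotone_filter g hm c i).mp le_rfl
    have h2 : cnt n g c = cnt n f c := by rw [hgdef, cnt_comp_perm]
    have hge : (i : ℕ) + 1 ≤ c := by omega
    -- c ≤ i + 1
    have hle : c ≤ (i : ℕ) + 1 := by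
      by_contra hcon
      push_neg at hcon
      have hnotle : ¬ g i ≤ c - 1 := by omega
      have := (monotone_filter g hm (c - 1) i)
      rw [hgdef, cnt_comp_perm] at this
      have hcnti : cnt n f (c - 1) ≤ (i : ℕ) := by
        by_contra hcc
        push_neg at hcc
        exact hnotle (this.mpr hcc)
      have := hf.2 (c - 1) (by omega)
      omega
    show c = (i : ℕ) + 1
    omega



/-- parking function lattice points -/
def Spf (n : ℕ) : Set (Fin n → ℝ) :=
  {x | ∃ f : Fin n → ℕ, IsXPF n 1 1 f ∧ x = fun i => (f i : ℝ)}

/-- translated partial permutahedron generators -/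
def Tgen (n : ℕ) : Set (Fin n → ℝ) :=
  {x | ∃ k ≤ min n (n - 1), ∃ σ : Equiv.Perm (Fin n),
    ∀ i : Fin n, x (σ i) = if (i : ℕ) < n - k then 1 else ((i : ℕ) : ℝ) + 1}

lemma Tgen_sub_Spf : Tgen n ⊆ Spf n := by
  rintro x ⟨k, hk, σ, hx⟩
  refine ⟨fun j => if ((σ.symm j : Fin n) : ℕ) < n - k then 1 else ((σ.symm j : Fin n) : ℕ) + 1,
    ⟨fun i => by dsimp only; split <;> omega, σ, ?_, fun i => ?_⟩, ?_⟩
  · intro a b hab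
    have hab' : (a : ℕ) ≤ (b : ℕ) := hab
    simp only [Function.comp_apply, Equiv.symm_apply_apply]
    split_ifs with h1 h2 h2
    · exact le_refl 1
    · omega
    · omega
    · omega
  · simp only [Equiv.symm_apply_apply]
    split <;> omega
  · funext j
    have h := hx (σ.symm j)
    rw [Equiv.apply_symm_apply] at h
    show x j = ((if ((σ.symm j : Fin n) : ℕ) < n - k then 1
      else ((σ.symm j : Fin n) : ℕ) + 1 : ℕ) : ℝ)
    rw [h]
    split_ifs with hc <;> norm_num

lemma Spf_finite (n : ℕ) : (Spf n).Finite := by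
  have hfin : {f : Fin n → ℕ | ∀ i, f i ≤ n}.Finite := by
    have : {f : Fin n → ℕ | ∀ i, f i ≤ n} ⊆ Set.pi Set.univ (fun _ : Fin n => Set.Iic n) := by
      intro f hf i _
      exact hf i
    exact Set.Finite.subset (Set.Finite.pi (fun _ => Set.finite_Iic n)) this
  apply Set.Finite.subset (hfin.image (fun f : Fin n → ℕ => fun i => (f i : ℝ)))
  rintro x ⟨f, hf, rfl⟩
  exact ⟨f, fun i => pfc_val_le f ((isXPF_iff_PFc f).mp hf) i, rfl⟩

lemma Tgen_finite (hn : 0 < n) : (Tgen n).Finite := by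
  apply Set.Finite.subset (Set.finite_range (fun p : Fin n × Equiv.Perm (Fin n) =>
    fun j : Fin n => if ((p.2.symm j : Fin n) : ℕ) < n - (p.1 : ℕ) then (1 : ℝ)
      else ((p.2.symm j : Fin n) : ℕ) + 1))
  rintro x ⟨k, hk, σ, hx⟩
  have hkn : k < n := by omega
  refine ⟨⟨⟨k, hkn⟩, σ⟩, ?_⟩
  funext j
  have h := hx (σ.symm j)
  rw [Equiv.apply_symm_apply] at h
  rw [h]

lemma hull_sub (hn : 0 < n) : convexHull ℝ (Spf n) ⊆ convexHull ℝ (Tgen n) := by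
  have hS := Spf_finite n
  have hT := Tgen_finite hn
  have hext : Set.extremePoints ℝ (convexHull ℝ (Spf n)) ⊆ Tgen n := by
    intro x hx
    have hxS : x ∈ Spf n := extremePoints_convexHull_subset hx
    obtain ⟨f, hf, rfl⟩ := hxS
    have hpfc : PFc n f := (isXPF_iff_PFc f).mp hf
    by_cases hcase : ∀ p : Fin n, 2 ≤ f p → cnt n f (f p) ≤ f p
    · obtain ⟨k, hk, σ, hσ⟩ := gen_of_tight hn f hpfc hcase
      refine ⟨k, hk, σ, fun i => ?_⟩
      show (f (σ i) : ℝ) = _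
      rw [hσ i]
      split <;> norm_num
    · push_neg at hcase
      obtain ⟨p, hp2, hslack⟩ := hcase
      exfalso
      have hup : PFc n (Function.update f p (f p + 1)) := pfc_update_add f hpfc p hslack
      have hdown : PFc n (Function.update f p (f p - 1)) := pfc_update_sub f hpfc p hp2
      have hupS : (fun i => ((Function.update f p (f p + 1)) i : ℝ)) ∈ Spf n :=
        ⟨_, (isXPF_iff_PFc _).mpr hup, rfl⟩
      have hdownS : (fun i => ((Function.update f p (f p - 1)) i : ℝ)) ∈ Spf n :=
        ⟨_, (isXPF_iff_PFc _).mpr hdown, rfl⟩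
      have hseg : (fun i => (f i : ℝ)) ∈ openSegment ℝ
          (fun i => ((Function.update f p (f p - 1)) i : ℝ))
          (fun i => ((Function.update f p (f p + 1)) i : ℝ)) := by
        refine ⟨1/2, 1/2, by norm_num, by norm_num, by norm_num, ?_⟩
        funext i
        simp only [Pi.add_apply, Pi.smul_apply, smul_eq_mul]
        rcases eq_or_ne i p with rfl | h
        · rw [Function.update_self, Function.update_self]
          have hcast : ((f i - 1 : ℕ) : ℝ) = (f i : ℝ) - 1 := by
            rw [Nat.cast_sub (by omega : 1 ≤ f i)]
            norm_num
          rw [hcast]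
          push_cast
          ring
        · rw [Function.update_of_ne h, Function.update_of_ne h]
          ring
      have hm := (mem_extremePoints.mp hx).2 _
        (subset_convexHull ℝ (Spf n) hdownS) _ (subset_convexHull ℝ (Spf n) hupS) hseg
      have heq := congrFun hm.1 p
      rw [Function.update_self] at heq
      have : ((f p - 1 : ℕ) : ℕ) = f p := Nat.cast_injective heq
      omega
  calc convexHull ℝ (Spf n)
      = closure (convexHull ℝ (Set.extremePoints ℝ (convexHull ℝ (Spf n)))) :=
        (closure_convexHull_extremePoints (hS.isCompact_convexHull ℝ) (convex_convexHull ℝ _)).symm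
    _ ⊆ closure (convexHull ℝ (Tgen n)) := closure_mono (convexHull_mono hext)
    _ = convexHull ℝ (Tgen n) := (hT.isClosed_convexHull (𝕜 := ℝ)).closure_eq

lemma coe_tau (n : ℕ) :
    (fun x : Fin n → ℝ => fun i => x i + 1)
      = ⇑(AffineEquiv.constVAdd ℝ (Fin n → ℝ) 1) := by
  funext x i
  simp [AffineEquiv.constVAdd]
  rw [add_comm]; rfl

lemma image_gen (hn : 0 < n) :
    (fun x : Fin n → ℝ => fun i => x i + 1) ''
      {x : Fin n → ℝ | ∃ k ≤ min n (n - 1), ∃ σ : Equiv.Perm (Fin n),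
        ∀ i : Fin n, x (σ i) = if (i : ℕ) < n - k then 0
          else ((n - 1 : ℕ) : ℝ) - (n : ℝ) + 1 + ((i : ℕ) : ℝ)} = Tgen n := by
  have hcast : ((n - 1 : ℕ) : ℝ) = (n : ℝ) - 1 := by
    rw [Nat.cast_sub hn]
    norm_num
  apply Set.Subset.antisymm
  · rintro y ⟨x, ⟨k, hk, σ, hx⟩, rfl⟩
    refine ⟨k, hk, σ, fun i => ?_⟩
    show x (σ i) + 1 = _
    rw [hx i, hcast]
    split <;> ring
  · rintro y ⟨k, hk, σ, hy⟩
    refine ⟨fun i => y i - 1, ⟨k, hk, σ, fun i => ?_⟩, ?_⟩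
    · show y (σ i) - 1 = _
      rw [hy i, hcast]
      split <;> ring
    · funext i
      show y i - 1 + 1 = y i
      ring

end Stmt8Aux

open Stmt8Aux in
/-- The classical parking function polytope `PF_n = X_n(1,1)` is integrally
equivalent to the partial permutahedron `P(n, n-1)`, via the translation
`(x_1,...,x_n) ↦ (x_1+1,...,x_n+1)`. -/
theorem stmt_8 (n : ℕ) (hn : 0 < n) :
    IntEquiv n (PP n (n - 1)) (XPFP n 1 1) ∧
    (fun x : Fin n → ℝ => fun i => x i + 1) '' PP n (n - 1) = XPFP n 1 1 := by

  have himg : (fun x : Fin n → ℝ => fun i => x i + 1) '' PP n (n - 1) = XPFP n 1 1 := by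
    rw [PP, coe_tau n, ← AffineEquiv.coe_toAffineMap, AffineMap.image_convexHull,
      AffineEquiv.coe_toAffineMap, ← coe_tau n, image_gen hn]
    have hXP : XPFP n 1 1 = convexHull ℝ (Spf n) := rfl
    rw [hXP]
    apply Set.Subset.antisymm
    · exact convexHull_mono Tgen_sub_Spf
    · exact hull_sub hn
  refine ⟨⟨AffineEquiv.constVAdd ℝ (Fin n → ℝ) 1, ?_, ?_⟩, himg⟩
  · rw [← coe_tau n]
    exact himg
  · intro x
    have hτ : ∀ i, (AffineEquiv.constVAdd ℝ (Fin n → ℝ) 1) x i = x i + 1 := by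
      intro i
      rw [← coe_tau n]
    constructor
    · intro h i
      obtain ⟨z, hz⟩ := h i
      exact ⟨z + 1, by rw [hτ i, hz]; push_cast; ring⟩
    · intro h i
      obtain ⟨z, hz⟩ := h i
      rw [hτ i] at hz
      exact ⟨z - 1, by push_cast; linarith⟩
end

section
/- For n ≥ 2 and p ≥ n-1, the partial permutahedron P(n,p) is integrally equivalent to the x-parking function polytope X_n(a,b) if and only if b = 1 and a = p - n + 2. -/
open Finset MeasureTheory

section Aux
variable {n : ℕ}

lemma mem_hull_sum_le {S : Set (Fin n → ℝ)} {J : Finset (Fin n)} {c : ℝ}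
    (h : ∀ y ∈ S, ∑ j ∈ J, y j ≤ c) {x} (hx : x ∈ convexHull ℝ S) : ∑ j ∈ J, x j ≤ c := by
  have hconv : Convex ℝ {y : Fin n → ℝ | ∑ j ∈ J, y j ≤ c} := by
    intro u hu v hv α β hα hβ hαβ
    simp only [Set.mem_setOf_eq] at *
    have he : ∑ j ∈ J, (α • u + β • v) j = α * ∑ j ∈ J, u j + β * ∑ j ∈ J, v j := by
      simp [Finset.mul_sum, Finset.sum_add_distrib]
    rw [he]
    calc α * ∑ j ∈ J, u j + β * ∑ j ∈ J, v j ≤ α * c + β * c :=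
          add_le_add (mul_le_mul_of_nonneg_left hu hα) (mul_le_mul_of_nonneg_left hv hβ)
      _ = c := by rw [← add_mul, hαβ, one_mul]
  exact convexHull_min h hconv hx

lemma mem_hull_le_sum {S : Set (Fin n → ℝ)} {J : Finset (Fin n)} {c : ℝ}
    (h : ∀ y ∈ S, c ≤ ∑ j ∈ J, y j) {x} (hx : x ∈ convexHull ℝ S) : c ≤ ∑ j ∈ J, x j := by
  have hconv : Convex ℝ {y : Fin n → ℝ | c ≤ ∑ j ∈ J, y j} := by
    intro u hu v hv α β hα hβ hαβ
    simp only [Set.mem_setOf_eq] at *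
    have he : ∑ j ∈ J, (α • u + β • v) j = α * ∑ j ∈ J, u j + β * ∑ j ∈ J, v j := by
      simp [Finset.mul_sum, Finset.sum_add_distrib]
    rw [he]
    calc c = α * c + β * c := by rw [← add_mul, hαβ, one_mul]
      _ ≤ _ := add_le_add (mul_le_mul_of_nonneg_left hu hα) (mul_le_mul_of_nonneg_left hv hβ)
  exact convexHull_min h hconv hx

lemma mem_hull_coord_le {S : Set (Fin n → ℝ)} {c : ℝ} {i : Fin n}
    (h : ∀ y ∈ S, y i ≤ c) {x} (hx : x ∈ convexHull ℝ S) : x i ≤ c := by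
  have := mem_hull_sum_le (S := S) (J := {i}) (c := c) (fun y hy => by simpa using h y hy) hx
  simpa using this

lemma mem_hull_le_coord {S : Set (Fin n → ℝ)} {c : ℝ} {i : Fin n}
    (h : ∀ y ∈ S, c ≤ y i) {x} (hx : x ∈ convexHull ℝ S) : c ≤ x i := by
  have := mem_hull_le_sum (S := S) (J := {i}) (c := c) (fun y hy => by simpa using h y hy) hx
  simpa using this

lemma fin_le_apply_of_strictMono {k n : ℕ} {h : Fin k → Fin n} (hh : StrictMono h) (t : Fin k) :
    (t : ℕ) ≤ (h t : ℕ) := by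
  have key : ∀ m : ℕ, ∀ t : Fin k, t.1 = m → m ≤ (h t : ℕ) := by
    intro m
    induction m with
    | zero => exact fun t _ => Nat.zero_le _
    | succ m ih =>
      intro t ht
      have hm : m < k := by omega
      have hlt : (⟨m, hm⟩ : Fin k) < t := by rw [Fin.lt_def]; simp [ht]
      have h1 := hh hlt
      rw [Fin.lt_def] at h1
      have h2 := ih ⟨m, hm⟩ rfl
      omega
  exact key t.1 t rfl

lemma apply_le_of_strictMono {k n : ℕ} {h : Fin k → Fin n} (hh : StrictMono h) (t : Fin k) :
    (h t : ℕ) ≤ n - k + t := by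
  have hk : 0 < k := Fin.pos t
  have hn : 0 < n := Fin.pos (h t)
  have hh' : StrictMono (fun s : Fin k => (h s.rev).rev) := by
    intro s s' hss
    have : s'.rev < s.rev := Fin.rev_lt_rev.mpr hss
    exact Fin.rev_lt_rev.mpr (hh this)
  have := fin_le_apply_of_strictMono hh' t.rev
  simp only [Fin.rev_rev, Fin.val_rev] at this
  have h2 := t.2
  have h3 := (h t).2
  omega

lemma sum_le_sum_top {g : Fin n → ℝ} (hg : Monotone g) (J : Finset (Fin n)) {k : ℕ}
    (hk : J.card = k) (hkn : k ≤ n) :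
    ∑ j ∈ J, g j ≤ ∑ t : Fin k, g (⟨n - k + t.1, by have := t.2; omega⟩ : Fin n) := by
  set e := J.orderEmbOfFin hk with he
  have hinj : Function.Injective (fun t : Fin k => (e t : Fin n)) := e.injective
  have himg : Finset.image (fun t : Fin k => (e t : Fin n)) univ = J := by
    apply Finset.eq_of_subset_of_card_le
    · intro j hj
      simp only [Finset.mem_image] at hj
      obtain ⟨t, _, rfl⟩ := hj
      exact Finset.orderEmbOfFin_mem J hk t
    · rw [Finset.card_image_of_injective _ hinj, Finset.card_univ, Fintype.card_fin, hk]
  rw [← himg, Finset.sum_image (fun x _ y _ h => hinj h)]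
  apply Finset.sum_le_sum
  intro t _
  apply hg
  rw [Fin.le_def]
  exact apply_le_of_strictMono e.strictMono t

def VSet (n a : ℕ) : Set (Fin n → ℝ) :=
  {x | ∃ k ≤ n, ∃ σ : Equiv.Perm (Fin n),
    ∀ i : Fin n, x (σ i) = if (i : ℕ) < n - k then 1 else (a : ℝ) + (i : ℕ)}

def PFSet (n a b : ℕ) : Set (Fin n → ℝ) :=
  {x | ∃ f : Fin n → ℕ, IsXPF n a b f ∧ x = fun i => (f i : ℝ)}

lemma XPFP_eq_hull (n a b : ℕ) : XPFP n a b = convexHull ℝ (PFSet n a b) := rfl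

lemma comp_perm_mem_VSet {a : ℕ} {x : Fin n → ℝ} (hx : x ∈ VSet n a) (π : Equiv.Perm (Fin n)) :
    x ∘ π ∈ VSet n a := by
  obtain ⟨k, hk, σ, hσ⟩ := hx
  refine ⟨k, hk, π⁻¹ * σ, fun i => ?_⟩
  have h1 : (x ∘ π) ((π⁻¹ * σ) i) = x (σ i) := by
    simp [Function.comp, Equiv.Perm.mul_apply]
  rw [h1]; exact hσ i

lemma comp_perm_mem_hull_VSet {a : ℕ} {x : Fin n → ℝ}
    (hx : x ∈ convexHull ℝ (VSet n a)) (π : Equiv.Perm (Fin n)) :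
    x ∘ π ∈ convexHull ℝ (VSet n a) := by
  let L : (Fin n → ℝ) →ₗ[ℝ] (Fin n → ℝ) := LinearMap.funLeft ℝ ℝ π
  have hx' : L x ∈ L '' convexHull ℝ (VSet n a) := ⟨x, hx, rfl⟩
  rw [L.image_convexHull] at hx'
  have hsub : L '' VSet n a ⊆ VSet n a := by
    rintro y ⟨z, hz, rfl⟩
    exact comp_perm_mem_VSet hz π
  exact convexHull_mono hsub hx'

lemma VSet_subset_PFSet {a : ℕ} (ha : 1 ≤ a) : VSet n a ⊆ PFSet n a 1 := by
  classical
  rintro x ⟨k, hk, σ, hσ⟩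
  set g : Fin n → ℕ :=
    fun j => if ((σ.symm j : Fin n) : ℕ) < n - k then 1 else a + ((σ.symm j : Fin n) : ℕ) with hg
  have hgσ : ∀ i : Fin n, g (σ i) = if (i : ℕ) < n - k then 1 else a + (i : ℕ) := by
    intro i; simp [hg]
  refine ⟨g, ⟨?_, σ, ?_, ?_⟩, ?_⟩
  · intro j; simp only [hg]; split <;> omega
  · intro i j hij
    have hij' : (i : ℕ) ≤ (j : ℕ) := hij
    simp only [Function.comp]
    rw [hgσ i, hgσ j]
    split_ifs <;> omega
  · intro i
    rw [hgσ i]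
    simp only [mul_one]
    split_ifs <;> omega
  · funext j
    have h1 := hσ (σ.symm j)
    rw [Equiv.apply_symm_apply] at h1
    rw [h1]; simp only [hg]
    split_ifs with h
    · norm_num
    · push_cast; ring

lemma PFSet_coord_lower {a b : ℕ} {x : Fin n → ℝ} (hx : x ∈ PFSet n a b) (j : Fin n) :
    1 ≤ x j := by
  obtain ⟨f, ⟨hpos, _⟩, rfl⟩ := hx
  exact_mod_cast Nat.one_le_cast.mpr (hpos j)

lemma PFSet_coord_upper {a b : ℕ} {x : Fin n → ℝ} (hx : x ∈ PFSet n a b) (j : Fin n) :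
    x j ≤ ((a + (n - 1) * b : ℕ) : ℝ) := by
  obtain ⟨f, ⟨hpos, σ, hmono, hbd⟩, rfl⟩ := hx
  have h1 : f j = f (σ (σ.symm j)) := by rw [Equiv.apply_symm_apply]
  have h2 := hbd (σ.symm j)
  have h3 : ((σ.symm j : Fin n) : ℕ) ≤ n - 1 := by
    have := (σ.symm j).2; omega
  have h4 : f j ≤ a + (n - 1) * b := by
    rw [h1]
    exact h2.trans (by have := Nat.mul_le_mul_right b h3; omega)
  exact_mod_cast Nat.cast_le.mpr h4

lemma PFSet_sum_bound {a b : ℕ} {x : Fin n → ℝ} (hx : x ∈ PFSet n a b)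
    (S : Finset (Fin n)) {k : ℕ} (hS : S.card = k) (hkn : k ≤ n) :
    ∑ j ∈ S, x j ≤ ∑ t : Fin k, ((a : ℝ) + ((n - k + t.1 : ℕ) : ℝ) * b) := by
  obtain ⟨f, ⟨hpos, σ, hmono, hbd⟩, rfl⟩ := hx
  set y : Fin n → ℝ := fun i => (f i : ℝ) with hy
  have hymono : Monotone (fun i => y (σ i)) := by
    intro i j hij
    simp only [hy]
    exact_mod_cast Nat.cast_le.mpr (hmono hij)
  set J := S.map σ.symm.toEmbedding with hJ
  have hJcard : J.card = k := by rw [hJ, Finset.card_map, hS]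
  have hsum : ∑ j ∈ S, y j = ∑ i ∈ J, y (σ i) := by
    rw [hJ, Finset.sum_map]
    apply Finset.sum_congr rfl
    intro j _
    simp
  rw [hsum]
  refine (sum_le_sum_top hymono J hJcard hkn).trans (Finset.sum_le_sum fun t _ => ?_)
  have hb := hbd (⟨n - k + t.1, by have := t.2; omega⟩ : Fin n)
  have : y (σ (⟨n - k + t.1, by have := t.2; omega⟩ : Fin n)) ≤ ((a + (n - k + t.1) * b : ℕ) : ℝ) := by
    simp only [hy]
    exact_mod_cast Nat.cast_le.mpr hb
  refine this.trans ?_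
  push_cast
  ring_nf
  exact le_refl _


lemma phi_lt_of_sum_lt {C c c' S S' : ℕ} (hc : c' ≤ c) (hS : S < S') (hS' : S' ≤ C) :
    (C + 1) * c' + (C - S') < (C + 1) * c + (C - S) := by
  rcases eq_or_lt_of_le hc with rfl | hlt
  · have h1 : C - S' < C - S := by omega
    exact Nat.add_lt_add_left h1 _
  · have h1 : (C + 1) * (c' + 1) ≤ (C + 1) * c := Nat.mul_le_mul_left _ hlt
    have h2 : (C + 1) * (c' + 1) = (C + 1) * c' + (C + 1) := by ring
    have h3 : C - S' ≤ C := Nat.sub_le _ _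
    omega

lemma phi_lt_of_card_lt {C c c' S S' : ℕ} (hc : c' < c) (hS' : S' ≤ C) :
    (C + 1) * c' + (C - S') < (C + 1) * c + (C - S) := by
  have h1 : (C + 1) * (c' + 1) ≤ (C + 1) * c := Nat.mul_le_mul_left _ hc
  have h2 : (C + 1) * (c' + 1) = (C + 1) * c' + (C + 1) := by ring
  have h3 : C - S' ≤ C := Nat.sub_le _ _
  omega

lemma s2_bound {a : ℕ} (hn : 1 ≤ n) (ha : 1 ≤ a) {f : Fin n → ℕ}
    (hbd : ∀ i : Fin n, f i ≤ a + i) :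
    (∑ i, (f i) ^ 2) + 2 * n + 1 ≤ n * (a + n) ^ 2 := by
  obtain ⟨u, hu⟩ : ∃ u, a + n = u + 1 := ⟨a + n - 1, by omega⟩
  have h1 : ∑ i, (f i) ^ 2 ≤ n * u ^ 2 := by
    calc ∑ i, (f i) ^ 2 ≤ ∑ _i : Fin n, u ^ 2 := by
          apply Finset.sum_le_sum
          intro i _
          have h2 : f i ≤ u := by have := hbd i; have := i.2; omega
          exact Nat.pow_le_pow_left h2 2
      _ = n * u ^ 2 := by simp [Finset.sum_const, Finset.card_univ]
  have h2 : n * (u + 1) ^ 2 = n * u ^ 2 + 2 * (n * u) + n := by ring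
  have h3 : n ≤ n * u := Nat.le_mul_of_pos_right n (by omega)
  rw [hu]
  omega

lemma sorted_mem_hull (n a : ℕ) (hn : 1 ≤ n) (ha : 1 ≤ a) :
    ∀ N : ℕ, ∀ f : Fin n → ℕ, Monotone f → (∀ i : Fin n, 1 ≤ f i) → (∀ i : Fin n, f i ≤ a + i) →
      (n * (a + n) ^ 2 + 1) * (univ.filter (fun i => 2 ≤ f i)).card
        + (n * (a + n) ^ 2 - ∑ i, (f i) ^ 2) ≤ N →
      (fun i => (f i : ℝ)) ∈ convexHull ℝ (VSet n a) := by
  intro N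
  induction N with
  | zero =>
    intro f hmono hpos hbd hphi
    exfalso
    have := s2_bound hn ha hbd
    omega
  | succ N ih =>
    intro f hmono hpos hbd hphi
    by_cases hA : ∃ i j : Fin n, i < j ∧ f i = f j ∧ 2 ≤ f i
    · -- CASE A : a repeated value ≥ 2
      obtain ⟨i1, j1, hij1, hval1, h2v1⟩ := hA
      obtain ⟨v, hv⟩ : ∃ v, f i1 = v := ⟨f i1, rfl⟩
      have h2v : 2 ≤ v := hv ▸ h2v1
      classical
      set P := univ.filter (fun t : Fin n => f t = v) with hP
      have hPne : P.Nonempty := ⟨i1, by rw [hP, mem_filter]; exact ⟨mem_univ _, hv⟩⟩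
      set i₀ := P.min' hPne with hi₀
      set j₀ := P.max' hPne with hj₀
      have hi₀P : i₀ ∈ P := P.min'_mem hPne
      have hj₀P : j₀ ∈ P := P.max'_mem hPne
      have hfi₀ : f i₀ = v := (mem_filter.1 hi₀P).2
      have hfj₀ : f j₀ = v := (mem_filter.1 hj₀P).2
      have hij₀ : i₀ < j₀ := by
        have h1 : i₀ ≤ i1 := P.min'_le i1 (by rw [hP, mem_filter]; exact ⟨mem_univ _, hv⟩)
        have h2 : j1 ≤ j₀ := P.le_max' j1
          (by rw [hP, mem_filter]; exact ⟨mem_univ _, by rw [← hval1, hv]⟩)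
        exact lt_of_le_of_lt h1 (lt_of_lt_of_le hij1 h2)
      have hne : i₀ ≠ j₀ := ne_of_lt hij₀
      have hlow : ∀ t : Fin n, t < i₀ → f t + 1 ≤ v := by
        intro t ht
        have h1 : f t ≤ v := hfi₀ ▸ hmono (le_of_lt ht)
        have h2 : f t ≠ v := by
          intro he
          have h3 : i₀ ≤ t := P.min'_le t (by rw [hP, mem_filter]; exact ⟨mem_univ _, he⟩)
          exact absurd ht (not_lt.2 h3)
        omega
      have hhigh : ∀ t : Fin n, j₀ < t → v + 1 ≤ f t := by
        intro t ht
        have h1 : v ≤ f t := hfj₀ ▸ hmono (le_of_lt ht)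
        have h2 : f t ≠ v := by
          intro he
          have h3 : t ≤ j₀ := P.le_max' t (by rw [hP, mem_filter]; exact ⟨mem_univ _, he⟩)
          exact absurd ht (not_lt.2 h3)
        omega
      obtain ⟨u, hu⟩ : ∃ u, v = u + 1 := ⟨v - 1, by omega⟩
      set fp : Fin n → ℕ := Function.update (Function.update f i₀ u) j₀ (v + 1) with hfp0
      have hfp : ∀ t : Fin n, fp t = if t = j₀ then v + 1 else if t = i₀ then u else f t := by
        intro t
        rw [hfp0]
        rcases eq_or_ne t j₀ with rfl | h1
        · simp [Function.update]
        · rcases eq_or_ne t i₀ with rfl | h2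
          · simp [Function.update, h1]
          · simp [Function.update, h1, h2]
      have hfpi₀ : fp i₀ = u := by rw [hfp i₀, if_neg hne, if_pos rfl]
      have hfpj₀ : fp j₀ = v + 1 := by rw [hfp j₀, if_pos rfl]
      have hfpmono : Monotone fp := by
        intro s t hst
        rw [hfp s, hfp t]
        rcases eq_or_ne s j₀ with rfl | hsj
        · rcases eq_or_ne t j₀ with rfl | htj
          · simp
          · have htj₀ : j₀ < t := lt_of_le_of_ne hst (Ne.symm htj)
            have h1 := hhigh t htj₀
            have h2 : t ≠ i₀ := by
              intro he
              exact absurd (lt_trans hij₀ htj₀) (by rw [he]; exact lt_irrefl _)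
            rw [if_pos rfl, if_neg htj, if_neg h2]
            omega
        · rcases eq_or_ne s i₀ with rfl | hsi
          · rw [if_neg hsj, if_pos rfl]
            rcases eq_or_ne t j₀ with rfl | htj
            · rw [if_pos rfl]; omega
            · rw [if_neg htj]
              rcases eq_or_ne t i₀ with rfl | hti
              · rw [if_pos rfl]
              · rw [if_neg hti]
                have h1 : i₀ < t := lt_of_le_of_ne hst (Ne.symm hti)
                have h2 : f i₀ ≤ f t := hmono (le_of_lt h1)
                omega
          · rw [if_neg hsj, if_neg hsi]
            rcases eq_or_ne t j₀ with rfl | htj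
            · rw [if_pos rfl]
              have h1 : f s ≤ v := hfj₀ ▸ hmono hst
              omega
            · rw [if_neg htj]
              rcases eq_or_ne t i₀ with rfl | hti
              · rw [if_pos rfl]
                have hsi₀ : s < i₀ := lt_of_le_of_ne hst hsi
                have h1 := hlow s hsi₀
                omega
              · rw [if_neg hti]; exact hmono hst
      have hfppos : ∀ t, 1 ≤ fp t := by
        intro t; rw [hfp t]
        have := hpos t
        split_ifs <;> omega
      have hfpbd : ∀ t : Fin n, fp t ≤ a + t := by
        intro t; rw [hfp t]
        split_ifs with h1 h2
        · have h3 := hbd i₀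
          have h4 : (i₀ : ℕ) < (j₀ : ℕ) := hij₀
          subst h1
          omega
        · have h3 := hbd i₀
          subst h2
          omega
        · exact hbd t
      have key : ∀ g : Fin n → ℕ, ∑ t, (g t) ^ 2
          = (∑ t ∈ (univ \ {j₀}) \ {i₀}, (g t) ^ 2) + (g i₀) ^ 2 + (g j₀) ^ 2 := by
        intro g
        rw [Finset.sum_eq_sum_sdiff_singleton_add (Finset.mem_univ j₀) (fun t => (g t) ^ 2)]
        rw [Finset.sum_eq_sum_sdiff_singleton_add
          (show i₀ ∈ univ \ {j₀} by simp [hne]) (fun t => (g t) ^ 2)]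
      have hsum : ∑ t, (fp t) ^ 2 = (∑ t, (f t) ^ 2) + 2 := by
        rw [key fp, key f]
        have h1 : ∀ t ∈ (univ \ {j₀}) \ {i₀}, (fp t) ^ 2 = (f t) ^ 2 := by
          intro t ht
          simp only [Finset.mem_sdiff, Finset.mem_singleton] at ht
          rw [hfp t, if_neg ht.1.2, if_neg ht.2]
        rw [Finset.sum_congr rfl h1, hfpi₀, hfpj₀, hfi₀, hfj₀]
        have r1 : (v + 1) ^ 2 = v ^ 2 + 2 * v + 1 := by ring
        have r2 : v ^ 2 = u ^ 2 + 2 * u + 1 := by rw [hu]; ring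
        omega
      have hcard : (univ.filter (fun t => 2 ≤ fp t)).card
          ≤ (univ.filter (fun t => 2 ≤ f t)).card := by
        apply Finset.card_le_card
        intro t ht
        rw [mem_filter] at ht ⊢
        refine ⟨mem_univ _, ?_⟩
        rw [hfp t] at ht
        rcases eq_or_ne t j₀ with rfl | h1
        · omega
        · rcases eq_or_ne t i₀ with rfl | h2
          · omega
          · rw [if_neg h1, if_neg h2] at ht
            exact ht.2
      have hs2fp : (∑ i, (fp i) ^ 2) + 2 * n + 1 ≤ n * (a + n) ^ 2 := s2_bound hn ha hfpbd
      have hphi' : (n * (a + n) ^ 2 + 1) * (univ.filter (fun i => 2 ≤ fp i)).card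
          + (n * (a + n) ^ 2 - ∑ i, (fp i) ^ 2) ≤ N := by
        have hlt := phi_lt_of_sum_lt (C := n * (a + n) ^ 2) hcard
          (show (∑ i, (f i) ^ 2) < ∑ i, (fp i) ^ 2 by omega) (by omega)
        omega
      have hmem1 := ih fp hfpmono hfppos hfpbd hphi'
      have hmem2 := comp_perm_mem_hull_VSet hmem1 (Equiv.swap i₀ j₀)
      have hcombo : (fun i => (f i : ℝ)) = (1 / 2 : ℝ) • (fun i => (fp i : ℝ))
          + (1 / 2 : ℝ) • ((fun i => (fp i : ℝ)) ∘ (Equiv.swap i₀ j₀)) := by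
        funext t
        simp only [Pi.add_apply, Pi.smul_apply, smul_eq_mul, Function.comp]
        rcases eq_or_ne t i₀ with rfl | h1
        · rw [Equiv.swap_apply_left, hfpi₀, hfpj₀, hfi₀, hu]
          push_cast; ring
        · rcases eq_or_ne t j₀ with rfl | h2
          · rw [Equiv.swap_apply_right, hfpi₀, hfpj₀, hfj₀, hu]
            push_cast; ring
          · rw [Equiv.swap_apply_of_ne_of_ne h1 h2]
            have e : fp t = f t := by rw [hfp t, if_neg h2, if_neg h1]
            rw [e]; ring
      rw [hcombo]
      exact (convex_convexHull ℝ _) hmem1 hmem2 (by norm_num) (by norm_num) (by norm_num)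
    · by_cases hEx : ∃ i : Fin n, 2 ≤ f i ∧ f i < a + i
      · -- CASE B
        have hstrict : ∀ s t : Fin n, s < t → 2 ≤ f s → f s + 1 ≤ f t := by
          intro s t hst h2
          have h1 : f s ≤ f t := hmono (le_of_lt hst)
          have h2' : f s ≠ f t := fun he => hA ⟨s, t, hst, he, h2⟩
          omega
        classical
        obtain ⟨iw, hiw⟩ := hEx
        set P := univ.filter (fun i : Fin n => 2 ≤ f i ∧ f i < a + i) with hPdef
        have hPne : P.Nonempty := ⟨iw, by rw [hPdef, mem_filter]; exact ⟨mem_univ _, hiw⟩⟩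
        set i₀ := P.min' hPne with hi₀
        set i₁ := P.max' hPne with hi₁
        have hi₀P := (mem_filter.1 (P.min'_mem hPne)).2
        have hi₁P := (mem_filter.1 (P.max'_mem hPne)).2
        have h2i₀ : 2 ≤ f i₀ := hi₀P.1
        have hlti₀ : f i₀ < a + i₀ := hi₀P.2
        have h2i₁ : 2 ≤ f i₁ := hi₁P.1
        have hlti₁ : f i₁ < a + i₁ := hi₁P.2
        have hi₀i₁ : i₀ ≤ i₁ := P.min'_le i₁ (P.max'_mem hPne)
        have hgrow : ∀ s t : Fin n, s ≤ t → 2 ≤ f s → f s + ((t : ℕ) - (s : ℕ)) ≤ f t := by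
          intro s t hst h2
          have key : ∀ d : ℕ, ∀ hd : (s : ℕ) + d < n, f s + d ≤ f ⟨(s : ℕ) + d, hd⟩ := by
            intro d
            induction d with
            | zero =>
              intro hd
              have he : (⟨(s : ℕ) + 0, hd⟩ : Fin n) = s := by ext; simp
              rw [he]
              omega
            | succ d ihd =>
              intro hd
              have hd' : (s : ℕ) + d < n := by omega
              have h1 := ihd hd'
              have hlt : (⟨(s : ℕ) + d, hd'⟩ : Fin n) < ⟨(s : ℕ) + (d + 1), hd⟩ :=
                Fin.mk_lt_mk.mpr (by omega)
              have h2' : 2 ≤ f ⟨(s : ℕ) + d, hd'⟩ := by omega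
              have h3 := hstrict _ _ hlt h2'
              omega
          have hst' : (s : ℕ) ≤ (t : ℕ) := hst
          have hd : (s : ℕ) + ((t : ℕ) - (s : ℕ)) < n := by have := t.2; omega
          have h1 := key ((t : ℕ) - (s : ℕ)) hd
          have he : (⟨(s : ℕ) + ((t : ℕ) - (s : ℕ)), hd⟩ : Fin n) = t := by ext; simp; omega
          rw [he] at h1
          omega
        have hprop : ∀ t : Fin n, 2 ≤ f t → f t = a + t → ∀ s : Fin n, t ≤ s → f s = a + s := by
          intro t h2 hmax s hts
          have h1 := hgrow t s hts h2
          have h2' := hbd s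
          have hts' : (t : ℕ) ≤ (s : ℕ) := hts
          omega
        have hleft : ∀ t : Fin n, t < i₀ → f t = 1 := by
          intro t ht
          have hnP : t ∉ P := fun hP' => absurd ht (not_lt.2 (P.min'_le t hP'))
          have h1 := hpos t
          have h2 := hbd t
          by_cases h3 : 2 ≤ f t
          · exfalso
            have h4 : f t = a + t := by
              have h5 : ¬ (2 ≤ f t ∧ f t < a + t) := fun hc =>
                hnP (by rw [hPdef, mem_filter]; exact ⟨mem_univ _, hc⟩)
              omega
            have h5 := hprop t h3 h4 i₀ (le_of_lt ht)
            omega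
          · omega
        have hright : ∀ t : Fin n, i₁ < t → f t = a + t := by
          intro t ht
          have hnP : t ∉ P := fun hP' => absurd ht (not_lt.2 (P.le_max' t hP'))
          have h2 : 2 ≤ f t := le_trans h2i₁ (hmono (le_of_lt ht))
          have h3 : ¬ (2 ≤ f t ∧ f t < a + t) := fun hc =>
            hnP (by rw [hPdef, mem_filter]; exact ⟨mem_univ _, hc⟩)
          have h4 := hbd t
          omega
        have hint : ∀ t : Fin n, i₀ ≤ t → t ≤ i₁ → 2 ≤ f t ∧ f t < a + t := by
          intro t h1 h2
          have h3 : 2 ≤ f t := le_trans h2i₀ (hmono h1)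
          refine ⟨h3, ?_⟩
          by_contra h4
          push_neg at h4
          have h5 : f t = a + t := le_antisymm (hbd t) h4
          have h6 := hprop t h3 h5 i₁ h2
          omega
        have hslack : ∀ t : Fin n, i₀ ≤ t → t ≤ i₁ → f t + (i₁ : ℕ) ≤ f i₁ + (t : ℕ) := by
          intro t h1 h2
          have h3 := hgrow t i₁ h2 (hint t h1 h2).1
          have h4 : (t : ℕ) ≤ (i₁ : ℕ) := h2
          omega
        set tstar := a + (i₁ : ℕ) - f i₁ with htsdef
        set sstar := f i₀ - 1 with hssdef
        have htpos : 1 ≤ tstar := by omega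
        have hspos : 1 ≤ sstar := by omega
        set ftop : Fin n → ℕ := fun t => if i₀ ≤ t ∧ t ≤ i₁ then f t + tstar else f t with htopdef
        set fbot : Fin n → ℕ := fun t => if i₀ ≤ t ∧ t ≤ i₁ then f t - sstar else f t with hbotdef
        have htopbd : ∀ t : Fin n, ftop t ≤ a + t := by
          intro t
          simp only [htopdef]
          split_ifs with h
          · have h1 := hslack t h.1 h.2
            omega
          · exact hbd t
        have htoppos : ∀ t, 1 ≤ ftop t := by
          intro t
          simp only [htopdef]
          have := hpos t
          split_ifs <;> omega
        have htopmono : Monotone ftop := by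
          intro s t hst
          have hst' : (s : ℕ) ≤ (t : ℕ) := hst
          simp only [htopdef]
          split_ifs with h1 h2 h2
          · have := hmono hst; omega
          · have h3 : i₁ < t := by
              rcases not_and_or.1 h2 with h4 | h4
              · exact absurd (le_trans h1.1 hst) h4
              · exact not_le.1 h4
            have h5 := hright t h3
            have h6 := hslack s h1.1 h1.2
            have h7 : (s : ℕ) ≤ (t : ℕ) := hst'
            have h8 : (i₁ : ℕ) < (t : ℕ) := h3
            omega
          · have h3 : s < i₀ := by
              rcases not_and_or.1 h1 with h4 | h4
              · exact not_le.1 h4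
              · exact absurd (le_trans hst h2.2) h4
            have h5 := hleft s h3
            have h6 := hpos t
            omega
          · exact hmono hst
        have hbotbd : ∀ t : Fin n, fbot t ≤ a + t := by
          intro t
          simp only [hbotdef]
          have := hbd t
          split_ifs <;> omega
        have hbotpos : ∀ t, 1 ≤ fbot t := by
          intro t
          simp only [hbotdef]
          split_ifs with h
          · have h1 : f i₀ ≤ f t := hmono h.1
            omega
          · exact hpos t
        have hbotmono : Monotone fbot := by
          intro s t hst
          have hst' : (s : ℕ) ≤ (t : ℕ) := hst
          simp only [hbotdef]
          split_ifs with h1 h2 h2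
          · have := hmono hst; omega
          · have := hmono hst; omega
          · have h3 : s < i₀ := by
              rcases not_and_or.1 h1 with h4 | h4
              · exact not_le.1 h4
              · exact absurd (le_trans hst h2.2) h4
            have h5 := hleft s h3
            have h6 : f i₀ ≤ f t := hmono h2.1
            omega
          · exact hmono hst
        have hstop_lt : ∑ i, (f i) ^ 2 < ∑ i, (ftop i) ^ 2 := by
          apply Finset.sum_lt_sum
          · intro i _
            apply Nat.pow_le_pow_left
            simp only [htopdef]
            split_ifs <;> omega
          · refine ⟨i₀, mem_univ _, ?_⟩
            apply Nat.pow_lt_pow_left ?_ (by norm_num)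
            simp only [htopdef]
            rw [if_pos ⟨le_refl i₀, hi₀i₁⟩]
            omega
        have hctop : (univ.filter fun i : Fin n => 2 ≤ ftop i)
            = (univ.filter fun i : Fin n => 2 ≤ f i) := by
          apply Finset.filter_congr
          intro t _
          simp only [htopdef]
          split_ifs with h
          · have h1 := (hint t h.1 h.2).1
            constructor
            · intro _; exact h1
            · intro _; omega
          · exact Iff.rfl
        have hcbot_lt : (univ.filter fun i : Fin n => 2 ≤ fbot i).card
            < (univ.filter fun i : Fin n => 2 ≤ f i).card := by
          apply Finset.card_lt_card
          rw [Finset.ssubset_iff_of_subset]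
          · refine ⟨i₀, ?_, ?_⟩
            · rw [mem_filter]; exact ⟨mem_univ _, h2i₀⟩
            · rw [mem_filter]
              intro hc
              have h1 : fbot i₀ = 1 := by
                simp only [hbotdef]
                rw [if_pos ⟨le_refl i₀, hi₀i₁⟩]
                omega
              omega
          · intro t ht
            rw [mem_filter] at ht ⊢
            refine ⟨mem_univ _, ?_⟩
            have h1 : fbot t ≤ f t := by
              simp only [hbotdef]
              split_ifs <;> omega
            omega
        have hs2top := s2_bound hn ha htopbd
        have hs2bot := s2_bound hn ha hbotbd
        have hphitop : (n * (a + n) ^ 2 + 1) * (univ.filter (fun i => 2 ≤ ftop i)).card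
            + (n * (a + n) ^ 2 - ∑ i, (ftop i) ^ 2) ≤ N := by
          have hlt := phi_lt_of_sum_lt (C := n * (a + n) ^ 2)
            (le_of_eq (congrArg Finset.card hctop)) hstop_lt (by omega)
          omega
        have hphibot : (n * (a + n) ^ 2 + 1) * (univ.filter (fun i => 2 ≤ fbot i)).card
            + (n * (a + n) ^ 2 - ∑ i, (fbot i) ^ 2) ≤ N := by
          have hlt := phi_lt_of_card_lt (C := n * (a + n) ^ 2)
            (S := ∑ i, (f i) ^ 2) (S' := ∑ i, (fbot i) ^ 2) hcbot_lt (by omega)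
          omega
        have hmemtop := ih ftop htopmono htoppos htopbd hphitop
        have hmembot := ih fbot hbotmono hbotpos hbotbd hphibot
        have hden : (0 : ℝ) < (sstar : ℝ) + (tstar : ℝ) := by
          have h1 : (0 : ℕ) < sstar + tstar := by omega
          exact_mod_cast h1
        have hcombo : (fun i => (f i : ℝ))
            = ((tstar : ℝ) / ((sstar : ℝ) + tstar)) • (fun i => (fbot i : ℝ))
            + ((sstar : ℝ) / ((sstar : ℝ) + tstar)) • (fun i => (ftop i : ℝ)) := by
          funext t
          simp only [Pi.add_apply, Pi.smul_apply, smul_eq_mul]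
          simp only [htopdef, hbotdef]
          split_ifs with h
          · have h1 : f i₀ ≤ f t := hmono h.1
            have h2 : sstar ≤ f t := by omega
            rw [Nat.cast_sub h2]
            push_cast
            field_simp
            ring
          · field_simp
            ring
        rw [hcombo]
        exact (convex_convexHull ℝ _) hmembot hmemtop
          (div_nonneg (Nat.cast_nonneg _) (le_of_lt hden))
          (div_nonneg (Nat.cast_nonneg _) (le_of_lt hden))
          (by field_simp; ring)
      · -- CASE C : staircase
        have hdi : ∀ i : Fin n, f i = 1 ∨ f i = a + i := by
          intro i
          have h1 := hpos i; have h2 := hbd i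
          by_cases h3 : 2 ≤ f i
          · right
            have h4 : ¬ (2 ≤ f i ∧ f i < a + i) := fun hc => hEx ⟨i, hc⟩
            omega
          · left; omega
        classical
        set D := univ.filter (fun i : Fin n => f i ≤ 1) with hD
        set U := univ.filter (fun i : Fin n => 2 ≤ f i) with hU
        have hDU : D.card + U.card = n := by
          have h1 : U = univ.filter (fun i : Fin n => ¬ (f i ≤ 1)) := by
            apply Finset.filter_congr
            intro i _
            constructor
            · omega
            · omega
          rw [hD, h1]
          rw [Finset.card_filter_add_card_filter_not]
          simp
        have hmemD : ∀ i : Fin n, i ∈ D ↔ (i : ℕ) < D.card := by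
          intro i
          constructor
          · intro hi
            have hsub : Finset.Iic i ⊆ D := by
              intro j hj
              rw [Finset.mem_Iic] at hj
              rw [hD, Finset.mem_filter]
              rw [hD, Finset.mem_filter] at hi
              exact ⟨Finset.mem_univ _, le_trans (hmono hj) hi.2⟩
            have hc := Finset.card_le_card hsub
            rw [Fin.card_Iic] at hc
            omega
          · intro hi
            by_contra hni
            have hsub : D ⊆ Finset.Iio i := by
              intro j hj
              rw [Finset.mem_Iio]
              by_contra hji
              push_neg at hji
              apply hni
              rw [hD, Finset.mem_filter] at hj ⊢
              exact ⟨Finset.mem_univ _, le_trans (hmono hji) hj.2⟩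
            have hc := Finset.card_le_card hsub
            rw [Fin.card_Iio] at hc
            omega
        apply subset_convexHull
        refine ⟨U.card, ?_, 1, ?_⟩
        · calc U.card ≤ (univ : Finset (Fin n)).card :=
                Finset.card_le_card (Finset.filter_subset _ _)
            _ = n := by simp
        · intro i
          have hcard : n - U.card = D.card := by omega
          simp only [Equiv.Perm.coe_one, id_eq]
          rw [hcard]
          by_cases hi : (i : ℕ) < D.card
          · rw [if_pos hi]
            have h5 : i ∈ D := (hmemD i).2 hi
            rw [hD, mem_filter] at h5
            have h6 : f i = 1 := by have := hpos i; omega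
            simp [h6]
          · rw [if_neg hi]
            have hni : i ∉ D := fun h => hi ((hmemD i).1 h)
            have h7 : ¬ (f i ≤ 1) := fun h => hni (by rw [hD, mem_filter]; exact ⟨mem_univ _, h⟩)
            have hfi : f i = a + (i:ℕ) := by
              rcases hdi i with h | h
              · omega
              · exact h
            rw [hfi]; push_cast; ring

lemma PFSet_subset_hull_VSet {a : ℕ} (hn : 1 ≤ n) (ha : 1 ≤ a) :
    PFSet n a 1 ⊆ convexHull ℝ (VSet n a) := by
  rintro x ⟨f, ⟨hpos, σ, hmono, hbd⟩, rfl⟩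
  have hgbd : ∀ i : Fin n, f (σ i) ≤ a + i := by
    intro i; have := hbd i; omega
  have hgpos : ∀ i : Fin n, 1 ≤ f (σ i) := fun i => hpos _
  have hgmono : Monotone (fun i => f (σ i)) := hmono
  have h1 := sorted_mem_hull n a hn ha
    ((n * (a + n) ^ 2 + 1) * (univ.filter (fun i => 2 ≤ f (σ i))).card
      + (n * (a + n) ^ 2 - ∑ i, (f (σ i)) ^ 2))
    (fun i => f (σ i)) hgmono hgpos hgbd (le_refl _)
  have h2 := comp_perm_mem_hull_VSet h1 σ⁻¹
  have he : ((fun i => ((f (σ i)) : ℝ)) ∘ ⇑(σ⁻¹)) = fun i => (f i : ℝ) := by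
    funext t
    simp [Function.comp]
  rwa [he] at h2

lemma hull_PFSet_eq {a : ℕ} (hn : 1 ≤ n) (ha : 1 ≤ a) :
    convexHull ℝ (PFSet n a 1) = convexHull ℝ (VSet n a) := by
  apply Set.Subset.antisymm
  · exact convexHull_min (PFSet_subset_hull_VSet hn ha) (convex_convexHull ℝ _)
  · exact convexHull_mono (VSet_subset_PFSet ha)

def PPGen (n p : ℕ) : Set (Fin n → ℝ) := {x | ∃ k ≤ min n p, ∃ σ : Equiv.Perm (Fin n),
    ∀ i : Fin n, x (σ i) = if (i : ℕ) < n - k then 0 else (p : ℝ) - (n : ℝ) + 1 + ((i : ℕ) : ℝ)}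

lemma PP_eq_hull (n p : ℕ) : PP n p = convexHull ℝ (PPGen n p) := rfl

lemma image_PPGen {p : ℕ} (hn : 2 ≤ n) (hp : n - 1 ≤ p) :
    (fun x : Fin n → ℝ => x + 1) '' PPGen n p = VSet n (p + 2 - n) := by
  have hle : n ≤ p + 2 := by omega
  have hcast : ((p + 2 - n : ℕ) : ℝ) = (p : ℝ) - n + 2 := by
    push_cast [hle]
    ring
  apply Set.Subset.antisymm
  · rintro y ⟨x, ⟨k, hk, σ, hσ⟩, rfl⟩
    refine ⟨k, le_trans hk (min_le_left _ _), σ, fun i => ?_⟩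
    show (x + 1) (σ i) = _
    have h1 : (x + 1) (σ i) = x (σ i) + 1 := rfl
    rw [h1, hσ i]
    by_cases h : (i : ℕ) < n - k
    · rw [if_pos h, if_pos h]; norm_num
    · rw [if_neg h, if_neg h, hcast]; ring
  · rintro y ⟨k, hk, σ, hσ⟩
    rcases le_or_gt k (min n p) with hkp | hkp
    · refine ⟨fun j => y j - 1, ⟨k, hkp, σ, fun i => ?_⟩, ?_⟩
      · show y (σ i) - 1 = _
        rw [hσ i]
        by_cases h : (i : ℕ) < n - k
        · rw [if_pos h, if_pos h]; norm_num
        · rw [if_neg h, if_neg h, hcast]; ring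
      · funext j
        show y j - 1 + 1 = y j
        ring
    · have hpn : p + 1 = n ∧ k = n := by
        rcases min_choice n p with h | h <;> omega
      refine ⟨fun j => y j - 1, ⟨n - 1, ?_, σ, fun i => ?_⟩, ?_⟩
      · have := min_choice n p
        have := min_le_left n p
        have := min_le_right n p
        omega
      · show y (σ i) - 1 = _
        rw [hσ i]
        have ha1 : p + 2 - n = 1 := by omega
        have hpcast : ((p : ℕ) : ℝ) = (n : ℝ) - 1 := by
          have h2 : ((p + 1 : ℕ) : ℝ) = ((n : ℕ) : ℝ) := by exact_mod_cast congrArg (Nat.cast (R := ℝ)) hpn.1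
          push_cast at h2
          linarith
        by_cases h : (i : ℕ) < n - (n - 1)
        · have hi0 : (i : ℕ) = 0 := by omega
          rw [if_neg (by omega), if_pos h, ha1]
          simp [hi0]
        · rw [if_neg (by omega), if_neg h, ha1, hpcast]
          simp only [Nat.cast_one]
          ring
      · funext j
        show y j - 1 + 1 = y j
        ring

lemma PP_shift {p : ℕ} (hn : 2 ≤ n) (hp : n - 1 ≤ p) :
    (fun x : Fin n → ℝ => x + 1) '' PP n p = convexHull ℝ (VSet n (p + 2 - n)) := by
  have hT : (fun x : Fin n → ℝ => x + 1)
      = ⇑((AffineEquiv.constVAdd ℝ (Fin n → ℝ) 1).toAffineMap) := by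
    funext x
    funext j
    show x j + 1 = ((1 : Fin n → ℝ) +ᵥ x) j
    simp [Pi.vadd_apply]
    ring
  rw [PP_eq_hull, hT, AffineMap.image_convexHull, ← hT, image_PPGen hn hp]

lemma PPGen_coord_bounds {p : ℕ} {y : Fin n → ℝ} (hy : y ∈ PPGen n p) (j : Fin n) :
    0 ≤ y j ∧ y j ≤ (p : ℝ) := by
  obtain ⟨k, hk, σ, hσ⟩ := hy
  have hkp : k ≤ p := le_trans hk (min_le_right _ _)
  have hkn : k ≤ n := le_trans hk (min_le_left _ _)
  have h1 : y j = y (σ (σ.symm j)) := by rw [Equiv.apply_symm_apply]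
  rw [h1, hσ (σ.symm j)]
  set m := ((σ.symm j : Fin n) : ℕ) with hm
  have hmn : m < n := (σ.symm j).2
  split_ifs with h
  · constructor
    · exact le_refl 0
    · exact_mod_cast Nat.cast_nonneg p
  · have h2 : n ≤ m + k := by omega
    have h3 : ((n : ℕ) : ℝ) ≤ (m : ℝ) + (k : ℝ) := by exact_mod_cast h2
    have h4 : ((k : ℕ) : ℝ) ≤ (p : ℝ) := by exact_mod_cast hkp
    have h5 : (m : ℝ) + 1 ≤ (n : ℝ) := by exact_mod_cast hmn
    constructor
    · linarith
    · linarith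

lemma PP_coord_bounds {p : ℕ} {x : Fin n → ℝ} (hx : x ∈ PP n p) (j : Fin n) :
    0 ≤ x j ∧ x j ≤ (p : ℝ) := by
  rw [PP_eq_hull] at hx
  constructor
  · exact mem_hull_le_coord (fun y hy => (PPGen_coord_bounds hy j).1) hx
  · exact mem_hull_coord_le (fun y hy => (PPGen_coord_bounds hy j).2) hx

lemma XPFP_coord_bounds {a b : ℕ} {x : Fin n → ℝ} (hx : x ∈ XPFP n a b) (j : Fin n) :
    1 ≤ x j ∧ x j ≤ ((a + (n - 1) * b : ℕ) : ℝ) := by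
  rw [XPFP_eq_hull] at hx
  constructor
  · exact mem_hull_le_coord (fun y hy => PFSet_coord_lower hy j) hx
  · exact mem_hull_coord_le (fun y hy => PFSet_coord_upper hy j) hx

lemma chain_bound {f : (Fin n → ℝ) ≃ᵃ[ℝ] (Fin n → ℝ)}
    (hlat : ∀ x : Fin n → ℝ, (∀ i, ∃ z : ℤ, x i = (z : ℝ)) ↔ (∀ i, ∃ z : ℤ, f x i = (z : ℝ)))
    {P Q : Set (Fin n → ℝ)} (himg : f '' P = Q) {lo hi : ℝ}
    (hQ : ∀ y ∈ Q, ∀ i, lo ≤ y i ∧ y i ≤ hi)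
    {u v : Fin n → ℝ} (hu_lat : ∀ i, ∃ z : ℤ, u i = (z : ℝ))
    (hv_lat : ∀ i, ∃ z : ℤ, v i = (z : ℝ)) (hv0 : v ≠ 0) (len : ℕ)
    (huP : u ∈ P) (huvP : u + (len : ℝ) • v ∈ P) : (len : ℝ) ≤ hi - lo := by
  have huv_lat : ∀ i, ∃ z : ℤ, (u + v) i = (z : ℝ) := by
    intro i
    obtain ⟨z1, hz1⟩ := hu_lat i
    obtain ⟨z2, hz2⟩ := hv_lat i
    exact ⟨z1 + z2, by simp [Pi.add_apply, hz1, hz2]⟩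
  have hfu_lat := (hlat u).1 hu_lat
  have hfuv_lat := (hlat (u + v)).1 huv_lat
  set w := f (u + v) - f u with hw
  have hw_lat : ∀ i, ∃ z : ℤ, w i = (z : ℝ) := by
    intro i
    obtain ⟨z1, hz1⟩ := hfuv_lat i
    obtain ⟨z2, hz2⟩ := hfu_lat i
    exact ⟨z1 - z2, by simp [hw, Pi.sub_apply, hz1, hz2]⟩
  have hw0 : w ≠ 0 := by
    intro hc
    have h1 : f (u + v) = f u := by
      have := sub_eq_zero.1 hc
      exact this
    have h2 : u + v = u := f.injective h1
    apply hv0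
    have := congrArg (fun z => z - u) h2
    simpa using this
  have hlinv : ∀ c : ℝ, f (u + c • v) = f u + c • (f.linear v) := by
    intro c
    have h1 : u + c • v = (c • v) +ᵥ u := by
      rw [vadd_eq_add]; ring
    rw [h1]
    rw [AffineEquiv.map_vadd]
    rw [LinearEquiv.map_smul]
    rw [vadd_eq_add]
    ring
  have hwlin : w = f.linear v := by
    have h1 := hlinv 1
    simp at h1
    rw [hw, h1]
    ring
  obtain ⟨i, hwi⟩ : ∃ i, w i ≠ 0 := by
    by_contra hc
    push_neg at hc
    exact hw0 (funext hc)
  obtain ⟨z, hz⟩ := hw_lat i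
  have hz0 : z ≠ 0 := by
    intro hc
    apply hwi
    rw [hz, hc]
    norm_num
  have habs : (1 : ℝ) ≤ |w i| := by
    rw [hz]
    have h1 : 1 ≤ |z| := Int.one_le_abs hz0
    exact_mod_cast h1
  have hQu := hQ (f u) (himg ▸ Set.mem_image_of_mem f huP) i
  have hQuv := hQ (f (u + (len : ℝ) • v)) (himg ▸ Set.mem_image_of_mem f huvP) i
  rw [hlinv (len : ℝ), ← hwlin] at hQuv
  have h2 : (f u + (len : ℝ) • w) i = f u i + (len : ℝ) * w i := rfl
  rw [h2] at hQuv
  have h3 : |(len : ℝ) * w i| ≤ hi - lo := by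
    rw [abs_le]
    constructor
    · linarith [hQu.1, hQu.2, hQuv.1, hQuv.2]
    · linarith [hQu.1, hQu.2, hQuv.1, hQuv.2]
  calc (len : ℝ) = (len : ℝ) * 1 := by ring
    _ ≤ (len : ℝ) * |w i| := by
        apply mul_le_mul_of_nonneg_left habs (Nat.cast_nonneg len)
    _ = |(len : ℝ) * w i| := by
        rw [abs_mul, abs_of_nonneg (Nat.cast_nonneg (α := ℝ) len)]
    _ ≤ hi - lo := h3

lemma zero_mem_PPGen {p : ℕ} : (0 : Fin n → ℝ) ∈ PPGen n p := by
  refine ⟨0, Nat.zero_le _, 1, fun i => ?_⟩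
  have h : (i : ℕ) < n - 0 := by have := i.2; omega
  simp [h]

lemma pe0_mem_PPGen {p : ℕ} (hn : 2 ≤ n) (hp1 : 1 ≤ p) :
    (fun j : Fin n => if (j : ℕ) = 0 then (p : ℝ) else 0) ∈ PPGen n p := by
  have hn0 : 0 < n := by omega
  refine ⟨1, le_min (by omega) hp1, Equiv.swap ⟨0, hn0⟩ ⟨n - 1, by omega⟩, fun i => ?_⟩
  rcases eq_or_ne i ⟨n - 1, by omega⟩ with rfl | hine
  · rw [Equiv.swap_apply_right]
    show (if (0 : ℕ) = 0 then (p : ℝ) else 0)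
      = if n - 1 < n - 1 then 0 else (p : ℝ) - (n : ℝ) + 1 + ((n - 1 : ℕ) : ℝ)
    rw [if_pos rfl, if_neg (lt_irrefl _)]
    have h2 : ((n - 1 : ℕ) : ℝ) = (n : ℝ) - 1 := by
      have h3 : 1 ≤ n := by omega
      push_cast [h3]; ring
    rw [h2]; ring
  · by_cases hi0 : i = ⟨0, hn0⟩
    · subst hi0
      rw [Equiv.swap_apply_left]
      show (if (n - 1 : ℕ) = 0 then (p : ℝ) else 0)
        = if (0 : ℕ) < n - 1 then 0 else (p : ℝ) - (n : ℝ) + 1 + ((0 : ℕ) : ℝ)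
      rw [if_neg (by omega), if_pos (by omega)]
    · rw [Equiv.swap_apply_of_ne_of_ne hi0 hine]
      show (if (i : ℕ) = 0 then (p : ℝ) else 0)
        = if (i : ℕ) < n - 1 then 0 else (p : ℝ) - (n : ℝ) + 1 + ((i : ℕ) : ℝ)
      have h1 : (i : ℕ) ≠ n - 1 := fun h => hine (Fin.ext h)
      have h1b : (i : ℕ) ≠ 0 := fun h => hi0 (Fin.ext h)
      have h2 := i.2
      rw [if_neg h1b, if_pos (by omega)]

lemma ones_mem_PFSet {a b : ℕ} (ha : 1 ≤ a) : (fun _ : Fin n => (1 : ℝ)) ∈ PFSet n a b := by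
  refine ⟨fun _ => 1, ⟨fun i => le_refl 1, 1, fun i j _ => le_refl 1, fun i => ?_⟩, ?_⟩
  · show 1 ≤ a + (i : ℕ) * b
    omega
  · funext i; norm_num

lemma w2_mem_PFSet {a b c d : ℕ} (hn : 2 ≤ n) (ha : 1 ≤ a) (h1d : 1 ≤ d) (hdc : d ≤ c)
    (hd : d ≤ a + (n - 2) * b) (hc : c ≤ a + (n - 1) * b) :
    (fun i : Fin n => if (i : ℕ) = n - 1 then (c : ℝ) else if (i : ℕ) = n - 2 then (d : ℝ) else 1)
      ∈ PFSet n a b := by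
  set g : Fin n → ℕ :=
    fun i => if (i : ℕ) = n - 1 then c else if (i : ℕ) = n - 2 then d else 1 with hg
  refine ⟨g, ⟨?_, 1, ?_, ?_⟩, ?_⟩
  · intro i; simp only [hg]; split_ifs <;> omega
  · intro i j hij
    have hij' : (i : ℕ) ≤ j := hij
    have hj2 := j.2
    have hi2 := i.2
    simp only [Function.comp, Equiv.Perm.coe_one, id_eq, hg]
    split_ifs <;> omega
  · intro i
    have hi2 := i.2
    show g i ≤ a + (i : ℕ) * b
    simp only [hg]
    split_ifs with h1 h2
    · rw [h1]; exact hc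
    · rw [h2]; exact hd
    · omega
  · funext i; simp only [hg]; split_ifs <;> norm_num


lemma gauss_bound {n a b k : ℕ} (hb : 2 ≤ b) (hk : 1 ≤ k) (hkn : k ≤ n) :
    ∑ t : Fin k, ((a : ℝ) + ((n - k + t.1 : ℕ) : ℝ) * (b : ℝ))
      ≤ (k : ℝ) * (((a + (n - 1) * b : ℕ) : ℝ) - (k : ℝ) + 1) := by
  have hn1 : 1 ≤ n := le_trans hk hkn
  have hM : ((a + (n - 1) * b : ℕ) : ℝ) = (a : ℝ) + ((n : ℝ) - 1) * (b : ℝ) := by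
    push_cast [Nat.cast_sub hn1]
    ring
  have hsplit : ∀ t : ℕ, ((n - k + t : ℕ) : ℝ) = ((n : ℝ) - (k : ℝ)) + (t : ℝ) := by
    intro t
    rw [Nat.cast_add, Nat.cast_sub hkn]
  have h1 : ∑ t : Fin k, ((a : ℝ) + ((n - k + t.1 : ℕ) : ℝ) * (b : ℝ))
      = (k : ℝ) * ((a : ℝ) + ((n : ℝ) - k) * b) + (∑ t ∈ Finset.range k, (t : ℝ)) * b := by
    rw [Fin.sum_univ_eq_sum_range (fun t => ((a : ℝ) + ((n - k + t : ℕ) : ℝ) * (b : ℝ))) k]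
    rw [Finset.sum_congr rfl (fun t _ => by rw [hsplit t])]
    have h2 : ∀ t ∈ Finset.range k,
        (a : ℝ) + (((n : ℝ) - k) + (t : ℝ)) * b = ((a : ℝ) + ((n : ℝ) - k) * b) + (t : ℝ) * b := by
      intro t _
      ring
    rw [Finset.sum_congr rfl h2, Finset.sum_add_distrib, Finset.sum_const, Finset.card_range,
      ← Finset.sum_mul]
    simp [nsmul_eq_mul]
    ring
  have h3 : (∑ t ∈ Finset.range k, (t : ℝ)) * 2 = (k : ℝ) * ((k : ℝ) - 1) := by
    have h4 := Finset.sum_range_id_mul_two k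
    have h5 : (((∑ i ∈ Finset.range k, i) * 2 : ℕ) : ℝ) = ((k * (k - 1) : ℕ) : ℝ) := by
      exact_mod_cast congrArg (Nat.cast (R := ℝ)) h4
    push_cast [Nat.cast_sub hk] at h5
    convert h5 using 2
  have hS0 : (0 : ℝ) ≤ ∑ t ∈ Finset.range k, (t : ℝ) :=
    Finset.sum_nonneg fun t _ => Nat.cast_nonneg t
  have hbR : (2 : ℝ) ≤ (b : ℝ) := by exact_mod_cast hb
  rw [h1, hM]
  nlinarith [mul_nonneg hS0 (by linarith : (0:ℝ) ≤ (b : ℝ) - 2)]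

lemma XPFP_lattice_mem_PFSet {a b : ℕ} (hn : 2 ≤ n) (ha : 1 ≤ a) (hb : 2 ≤ b)
    {x : Fin n → ℝ} (hx : x ∈ XPFP n a b) (hlat : ∀ i, ∃ z : ℤ, x i = (z : ℝ)) :
    x ∈ PFSet n (a + (n - 1) * b + 1 - n) 1 := by
  classical
  set M := a + (n - 1) * b with hM
  have hMn : n ≤ M + 1 := by
    have h1 : n - 1 ≤ (n - 1) * b := Nat.le_mul_of_pos_right _ (by omega)
    omega
  choose z hz using hlat
  have hx1 : ∀ i, 1 ≤ x i := fun i => (XPFP_coord_bounds hx i).1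
  have hz1 : ∀ i, 1 ≤ z i := by
    intro i
    have h1 := hx1 i
    rw [hz i] at h1
    exact_mod_cast h1
  set g : Fin n → ℕ := fun i => (z i).toNat with hg
  have hxg : ∀ i, x i = (g i : ℝ) := by
    intro i
    rw [hz i, hg]
    have h1 : (0:ℤ) ≤ z i := by have := hz1 i; omega
    rw [show ((((z i).toNat : ℕ)) : ℝ) = (((z i).toNat : ℤ) : ℝ) by push_cast; ring,
      Int.toNat_of_nonneg h1]
  set τ := Tuple.sort x with hτ
  have hsmono : Monotone (x ∘ τ) := Tuple.monotone_sort x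
  have hkey : ∀ i : Fin n, x (τ i) ≤ ((M + 1 - (n - (i : ℕ)) : ℕ) : ℝ) := by
    intro i
    set k := n - (i : ℕ) with hk
    have hk1 : 1 ≤ k := by have := i.2; omega
    have hkn : k ≤ n := by omega
    set S := Finset.image τ (Finset.Ici i) with hS
    have hcard : S.card = k := by
      rw [hS, Finset.card_image_of_injective _ τ.injective, Fin.card_Ici]
    have hsum_eq : ∑ s ∈ S, x s = ∑ j ∈ Finset.Ici i, x (τ j) :=
      Finset.sum_image (fun u _ v _ h => τ.injective h)
    have hlb : (k : ℝ) * x (τ i) ≤ ∑ j ∈ Finset.Ici i, x (τ j) := by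
      have h1 : ∀ j ∈ Finset.Ici i, x (τ i) ≤ x (τ j) := fun j hj =>
        hsmono (Finset.mem_Ici.1 hj)
      have h2 := Finset.card_nsmul_le_sum (Finset.Ici i) (fun j => x (τ j)) (x (τ i)) h1
      rw [Fin.card_Ici, nsmul_eq_mul] at h2
      exact h2
    have hub : ∑ s ∈ S, x s ≤ ∑ t : Fin k, ((a : ℝ) + ((n - k + t.1 : ℕ) : ℝ) * (b : ℝ)) := by
      rw [XPFP_eq_hull] at hx
      exact mem_hull_sum_le (fun y hy => PFSet_sum_bound hy S hcard hkn) hx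
    have hgauss := gauss_bound (n := n) (a := a) (b := b) hb hk1 hkn
    have hfin : (k : ℝ) * x (τ i) ≤ (k : ℝ) * (((M : ℕ) : ℝ) - (k : ℝ) + 1) := by
      rw [hsum_eq] at hub
      calc (k : ℝ) * x (τ i) ≤ ∑ j ∈ Finset.Ici i, x (τ j) := hlb
        _ ≤ ∑ t : Fin k, ((a : ℝ) + ((n - k + t.1 : ℕ) : ℝ) * (b : ℝ)) := hub
        _ ≤ (k : ℝ) * (((M : ℕ) : ℝ) - (k : ℝ) + 1) := hgauss
    have hkpos : (0 : ℝ) < (k : ℝ) := by exact_mod_cast hk1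
    have hxk : x (τ i) ≤ ((M : ℕ) : ℝ) - (k : ℝ) + 1 :=
      le_of_mul_le_mul_left hfin hkpos
    have hcast : ((M + 1 - k : ℕ) : ℝ) = ((M : ℕ) : ℝ) - (k : ℝ) + 1 := by
      have h1 : k ≤ M + 1 := le_trans hkn hMn
      rw [Nat.cast_sub h1]
      push_cast
      ring
    rw [hcast]
    exact hxk
  refine ⟨g, ⟨?_, τ, ?_, ?_⟩, ?_⟩
  · intro i
    have h1 := hz1 i
    simp only [hg]
    omega
  · intro i j hij
    have h1 := hsmono hij
    show g (τ i) ≤ g (τ j)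
    rw [Function.comp_apply, Function.comp_apply] at h1
    rw [hxg, hxg] at h1
    exact_mod_cast h1
  · intro i
    have h1 := hkey i
    rw [hxg (τ i)] at h1
    have h2 : g (τ i) ≤ M + 1 - (n - (i : ℕ)) := by exact_mod_cast h1
    have hi2 := i.2
    have h3 : M + 1 - n + (i : ℕ) * 1 = M + 1 - (n - (i : ℕ)) := by omega
    rw [hM] at h2 ⊢
    omega
  · funext i
    exact hxg i

lemma wvec_notMem_XPFP {a b : ℕ} (hn : 2 ≤ n) (hb : 2 ≤ b) :
    (fun i : Fin n => if (i : ℕ) = n - 1 then ((a + (n - 1) * b : ℕ) : ℝ)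
      else if (i : ℕ) = n - 2 then ((a + (n - 1) * b - 1 : ℕ) : ℝ) else 1) ∉ XPFP n a b := by
  intro hx
  classical
  set M := a + (n - 1) * b with hM
  have hM1 : 1 ≤ M := by
    have h1 : n - 1 ≤ (n - 1) * b := Nat.le_mul_of_pos_right _ (by omega)
    omega
  set S : Finset (Fin n) := {(⟨n - 2, by omega⟩ : Fin n), (⟨n - 1, by omega⟩ : Fin n)} with hS
  have hne : (⟨n - 2, by omega⟩ : Fin n) ≠ (⟨n - 1, by omega⟩ : Fin n) := by
    intro hc
    have := congrArg Fin.val hc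
    simp at this
    omega
  have hcard : S.card = 2 := by
    rw [hS, Finset.card_insert_of_notMem (by simp [hne]), Finset.card_singleton]
  rw [XPFP_eq_hull] at hx
  have hub := mem_hull_sum_le
    (fun y hy => PFSet_sum_bound hy S hcard (by omega : 2 ≤ n)) hx
  rw [hS] at hub
  rw [Finset.sum_insert (by simp [hne])] at hub
  rw [Finset.sum_singleton] at hub
  have hub2 : (if (n - 2 : ℕ) = n - 1 then ((M : ℕ) : ℝ)
        else if (n - 2 : ℕ) = n - 2 then ((M - 1 : ℕ) : ℝ) else 1)
      + (if (n - 1 : ℕ) = n - 1 then ((M : ℕ) : ℝ)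
        else if (n - 1 : ℕ) = n - 2 then ((M - 1 : ℕ) : ℝ) else 1)
      ≤ ∑ t : Fin 2, ((a : ℝ) + ((n - 2 + t.1 : ℕ) : ℝ) * (b : ℝ)) := hub
  rw [if_neg (by omega), if_pos rfl, if_pos rfl] at hub2
  clear hub
  have hub := hub2
  have hrhs : ∑ t : Fin 2, ((a : ℝ) + ((n - 2 + t.1 : ℕ) : ℝ) * (b : ℝ))
      = ((a + (n - 2) * b : ℕ) : ℝ) + ((a + (n - 1) * b : ℕ) : ℝ) := by
    rw [Fin.sum_univ_two]
    have e1 : (n - 2 + (0 : Fin 2).1 : ℕ) = n - 2 := by simp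
    have e2 : (n - 2 + (1 : Fin 2).1 : ℕ) = n - 1 := by
      have : ((1 : Fin 2) : ℕ) = 1 := rfl
      omega
    rw [e1, e2]
    push_cast
    ring
  rw [hrhs] at hub
  have hnat : (M - 1) + M ≤ (a + (n - 2) * b) + (a + (n - 1) * b) := by
    exact_mod_cast hub
  have hsplit : (n - 1) * b = (n - 2) * b + b := by
    have h1 : n - 1 = (n - 2) + 1 := by omega
    rw [h1]
    ring
  omega

lemma finite_cast_image {B : ℕ} :
    (Set.Finite ((fun g : Fin n → ℕ => (fun i => (g i : ℝ))) '' {g : Fin n → ℕ | ∀ i, g i ≤ B})) := by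
  apply Set.Finite.image
  have h1 : {g : Fin n → ℕ | ∀ i, g i ≤ B} ⊆ Set.pi Set.univ (fun _ : Fin n => Set.Iic B) := by
    intro g hg
    intro i _
    exact hg i
  exact Set.Finite.subset (Set.Finite.pi (fun i => Set.finite_Iic B)) h1

lemma finite_PFSet {a b : ℕ} : (PFSet n a b).Finite := by
  apply Set.Finite.subset (finite_cast_image (B := a + (n - 1) * b))
  rintro x ⟨f, ⟨hpos, σ, hmono, hbd⟩, rfl⟩
  refine ⟨f, ?_, rfl⟩
  intro j
  have h1 : f j = f (σ (σ.symm j)) := by rw [Equiv.apply_symm_apply]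
  have h2 := hbd (σ.symm j)
  have h3 : ((σ.symm j : Fin n) : ℕ) ≤ n - 1 := by have := (σ.symm j).2; omega
  have h4 := Nat.mul_le_mul_right b h3
  omega

lemma finite_PP_lattice {p : ℕ} :
    {x : Fin n → ℝ | x ∈ PP n p ∧ ∀ i, ∃ z : ℤ, x i = (z : ℝ)}.Finite := by
  apply Set.Finite.subset (finite_cast_image (B := p))
  rintro x ⟨hx, hlat⟩
  choose z hz using hlat
  have h0 : ∀ i, 0 ≤ z i := by
    intro i
    have h1 := (PP_coord_bounds hx i).1
    rw [hz i] at h1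
    exact_mod_cast h1
  refine ⟨fun i => (z i).toNat, ?_, ?_⟩
  · intro i
    show (z i).toNat ≤ p
    have h1 := (PP_coord_bounds hx i).2
    rw [hz i] at h1
    have h2 : z i ≤ (p : ℤ) := by exact_mod_cast h1
    omega
  · funext i
    show (((z i).toNat : ℕ) : ℝ) = x i
    rw [hz i]
    rw [show ((((z i).toNat : ℕ)) : ℝ) = (((z i).toNat : ℤ) : ℝ) by push_cast; ring,
      Int.toNat_of_nonneg (h0 i)]

end Aux

/-- For `n ≥ 2` and `p ≥ n-1`, the partial permutahedron `P(n,p)` is integrally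
equivalent to `X_n(a,b)` iff `b = 1` and `a = p - n + 2`. -/

theorem stmt_9 (n p a b : ℕ) (hn : 2 ≤ n) (hp : n - 1 ≤ p) (ha : 0 < a) (hb : 0 < b) :
    IntEquiv n (PP n p) (XPFP n a b) ↔ b = 1 ∧ a + n = p + 2 := by
  have hn1 : 1 ≤ n := by omega
  have hp1 : 1 ≤ p := by omega
  constructor
  · rintro ⟨f, himg, hlat⟩
    have hlat' : ∀ x : Fin n → ℝ,
        (∀ i, ∃ z : ℤ, x i = (z : ℝ)) ↔ (∀ i, ∃ z : ℤ, f.symm x i = (z : ℝ)) := by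
      intro x
      have h1 := hlat (f.symm x)
      rw [AffineEquiv.apply_symm_apply] at h1
      exact h1.symm
    have himg' : ⇑f.symm '' XPFP n a b = PP n p := by
      rw [← himg, ← Set.image_comp]
      have h1 : (⇑f.symm ∘ ⇑f) = id := funext fun x => f.symm_apply_apply x
      rw [h1, Set.image_id]
    set M := a + (n - 1) * b with hMdef
    have hM1 : 1 ≤ M := by
      have h1 : 1 ≤ a := ha
      omega
    -- chain 1 : p ≤ M - 1
    have hchain1 : (p : ℝ) ≤ ((M : ℕ) : ℝ) - 1 := by
      set e0 : Fin n → ℝ := fun j => if (j : ℕ) = 0 then (1 : ℝ) else 0 with he0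
      have he0lat : ∀ i, ∃ z : ℤ, e0 i = (z : ℝ) := by
        intro i
        simp only [he0]
        split_ifs
        · exact ⟨1, by norm_num⟩
        · exact ⟨0, by norm_num⟩
      have hu0lat : ∀ i : Fin n, ∃ z : ℤ, (0 : Fin n → ℝ) i = (z : ℝ) :=
        fun i => ⟨0, by norm_num⟩
      have he00 : e0 ≠ 0 := by
        intro hc
        have h1 := congrFun hc ⟨0, by omega⟩
        simp [he0] at h1
      have h1 : (0 : Fin n → ℝ) ∈ PP n p := by
        rw [PP_eq_hull]
        exact subset_convexHull ℝ _ zero_mem_PPGen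
      have h2 : (0 : Fin n → ℝ) + (p : ℝ) • e0 ∈ PP n p := by
        rw [PP_eq_hull]
        have h3 := pe0_mem_PPGen (n := n) hn hp1
        have h4 : (0 : Fin n → ℝ) + (p : ℝ) • e0
            = fun j : Fin n => if (j : ℕ) = 0 then (p : ℝ) else 0 := by
          funext j
          simp only [Pi.add_apply, Pi.zero_apply, Pi.smul_apply, smul_eq_mul, he0]
          split_ifs <;> ring
        rw [h4]
        exact subset_convexHull ℝ _ h3
      have h5 := chain_bound hlat himg
        (fun y hy i => XPFP_coord_bounds hy i) hu0lat he0lat he00 p h1 h2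
      linarith
    -- chain 2 : M - 1 ≤ p
    have hchain2 : ((M - 1 : ℕ) : ℝ) ≤ (p : ℝ) - 0 := by
      set el : Fin n → ℝ := fun j => if (j : ℕ) = n - 1 then (1 : ℝ) else 0 with hel
      have hellat : ∀ i, ∃ z : ℤ, el i = (z : ℝ) := by
        intro i
        simp only [hel]
        split_ifs
        · exact ⟨1, by norm_num⟩
        · exact ⟨0, by norm_num⟩
      have hulat : ∀ i : Fin n, ∃ z : ℤ, (fun _ : Fin n => (1 : ℝ)) i = (z : ℝ) :=
        fun i => ⟨1, by norm_num⟩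
      have hel0 : el ≠ 0 := by
        intro hc
        have h1 := congrFun hc ⟨n - 1, by omega⟩
        simp [hel] at h1
      have h1 : (fun _ : Fin n => (1 : ℝ)) ∈ XPFP n a b := by
        rw [XPFP_eq_hull]
        exact subset_convexHull ℝ _ (ones_mem_PFSet ha)
      have h2 : (fun _ : Fin n => (1 : ℝ)) + ((M - 1 : ℕ) : ℝ) • el ∈ XPFP n a b := by
        rw [XPFP_eq_hull]
        have h3 := w2_mem_PFSet (n := n) (a := a) (b := b) (c := M) (d := 1) hn ha
          (le_refl 1) hM1 (by omega) (le_refl M)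
        have h4 : (fun _ : Fin n => (1 : ℝ)) + ((M - 1 : ℕ) : ℝ) • el
            = fun i : Fin n => if (i : ℕ) = n - 1 then ((M : ℕ) : ℝ)
                else if (i : ℕ) = n - 2 then ((1 : ℕ) : ℝ) else 1 := by
          funext j
          simp only [Pi.add_apply, Pi.smul_apply, smul_eq_mul, hel]
          rw [Nat.cast_sub hM1]
          split_ifs <;> norm_num
        rw [h4]
        exact subset_convexHull ℝ _ h3
      have h5 := chain_bound hlat' himg'
        (fun y hy i => PP_coord_bounds hy i) hulat hellat hel0 (M - 1) h1 h2
      linarith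
    have hpM : p + 1 = M := by
      have h3 : p ≤ M - 1 := by
        have h4 : (p : ℝ) ≤ ((M - 1 : ℕ) : ℝ) := by
          rw [Nat.cast_sub hM1]
          push_cast
          linarith
        exact_mod_cast h4
      have h4 : M - 1 ≤ p := by
        have h5 : ((M - 1 : ℕ) : ℝ) ≤ (p : ℝ) := by linarith
        exact_mod_cast h5
      omega
    by_cases hb1 : b = 1
    · subst hb1
      refine ⟨rfl, ?_⟩
      have h1 : M = a + (n - 1) * 1 := hMdef
      omega
    · exfalso
      have hb2 : 2 ≤ b := by omega
      set a' := p + 2 - n with ha'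
      have ha'1 : 1 ≤ a' := by omega
      have ha'M : a + (n - 1) * b + 1 - n = a' := by
        have h1 : M = a + (n - 1) * b := hMdef
        omega
      set A := {x : Fin n → ℝ | x ∈ PP n p ∧ ∀ i, ∃ z : ℤ, x i = (z : ℝ)} with hA
      set Cs := {x : Fin n → ℝ | x ∈ XPFP n a b ∧ ∀ i, ∃ z : ℤ, x i = (z : ℝ)} with hCs
      have hAfin : A.Finite := finite_PP_lattice
      have hWfin : (PFSet n a' 1).Finite := finite_PFSet
      have himgA : ⇑f '' A = Cs := by
        ext y
        constructor
        · rintro ⟨x, ⟨hxP, hxl⟩, rfl⟩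
          exact ⟨himg ▸ Set.mem_image_of_mem f hxP, (hlat x).1 hxl⟩
        · rintro ⟨hyQ, hyl⟩
          rw [← himg] at hyQ
          obtain ⟨x, hxP, rfl⟩ := hyQ
          exact ⟨x, ⟨hxP, (hlat x).2 hyl⟩, rfl⟩
      have hcardAC : A.ncard = Cs.ncard := by
        rw [← himgA]
        exact (Set.ncard_image_of_injective A f.injective).symm
      have hWsub : PFSet n a' 1 ⊆ (fun x : Fin n → ℝ => x + 1) '' A := by
        intro w hw
        have h1 : w ∈ convexHull ℝ (VSet n a') := PFSet_subset_hull_VSet hn1 ha'1 hw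
        have h2 : w ∈ (fun x : Fin n → ℝ => x + 1) '' PP n p := by
          rw [PP_shift hn hp]
          rwa [ha'] at h1
        obtain ⟨y, hyP, hyw⟩ := h2
        obtain ⟨g, _, hwg⟩ := hw
        refine ⟨y, ⟨hyP, ?_⟩, hyw⟩
        intro i
        refine ⟨(g i : ℤ) - 1, ?_⟩
        have h3 := congrFun hyw i
        have h4 : y i + 1 = w i := h3
        rw [hwg] at h4
        push_cast
        linarith [h4]
      set wv : Fin n → ℝ := fun i : Fin n => if (i : ℕ) = n - 1 then ((a + (n - 1) * b : ℕ) : ℝ)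
        else if (i : ℕ) = n - 2 then ((a + (n - 1) * b - 1 : ℕ) : ℝ) else 1 with hwv
      have hCsubW : Cs ⊆ PFSet n a' 1 := by
        rintro x ⟨hx1, hx2⟩
        have h1 := XPFP_lattice_mem_PFSet hn ha hb2 hx1 hx2
        rwa [ha'M] at h1
      have hwvW : wv ∈ PFSet n a' 1 := by
        have h0 := w2_mem_PFSet (n := n) (a := a') (b := 1) (c := p + 1) (d := p) hn ha'1
          hp1 (by omega) (by omega) (by omega)
        have heq : (fun i : Fin n => if (i : ℕ) = n - 1 then ((p + 1 : ℕ) : ℝ)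
            else if (i : ℕ) = n - 2 then ((p : ℕ) : ℝ) else 1) = wv := by
          rw [hwv]
          have h1 : (p + 1 : ℕ) = a + (n - 1) * b := by omega
          have h2 : (p : ℕ) = a + (n - 1) * b - 1 := by omega
          rw [h1, h2]
        rwa [heq] at h0
      have hwvC : wv ∉ Cs := by
        intro hc
        exact wvec_notMem_XPFP hn hb2 hc.1
      have h1 : (PFSet n a' 1).ncard ≤ A.ncard := by
        have h2 : ((fun x : Fin n → ℝ => x + 1) '' A).ncard = A.ncard :=
          Set.ncard_image_of_injective A (fun x y hxy => by
            funext i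
            have h3 := congrFun hxy i
            have h4 : x i + 1 = y i + 1 := h3
            linarith)
        calc (PFSet n a' 1).ncard ≤ ((fun x : Fin n → ℝ => x + 1) '' A).ncard :=
              Set.ncard_le_ncard hWsub (hAfin.image _)
          _ = A.ncard := h2
      have h3 : Cs.ncard < (PFSet n a' 1).ncard := by
        apply Set.ncard_lt_ncard
        · rw [Set.ssubset_iff_of_subset hCsubW]
          exact ⟨wv, hwvW, hwvC⟩
        · exact hWfin
      omega
  · rintro ⟨hb1, hap⟩
    subst hb1
    have ha' : a = p + 2 - n := by omega
    refine ⟨AffineEquiv.constVAdd ℝ (Fin n → ℝ) 1, ?_, ?_⟩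
    · have hT : ⇑(AffineEquiv.constVAdd ℝ (Fin n → ℝ) 1) = (fun x : Fin n → ℝ => x + 1) := by
        funext x
        funext j
        show ((1 : Fin n → ℝ) +ᵥ x) j = x j + 1
        simp [Pi.vadd_apply]
        ring
      rw [hT, PP_shift hn hp, XPFP_eq_hull, hull_PFSet_eq hn1 (by omega : 1 ≤ a), ha']
    · intro x
      have hTx : ∀ i : Fin n, (AffineEquiv.constVAdd ℝ (Fin n → ℝ) 1) x i = x i + 1 := by
        intro i
        show ((1 : Fin n → ℝ) +ᵥ x) i = x i + 1
        simp [Pi.vadd_apply]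
        ring
      constructor
      · intro hx i
        obtain ⟨z, hz⟩ := hx i
        refine ⟨z + 1, ?_⟩
        rw [hTx i, hz]
        push_cast
        ring
      · intro hx i
        obtain ⟨z, hz⟩ := hx i
        refine ⟨z - 1, ?_⟩
        have h1 := hTx i
        rw [hz] at h1
        push_cast
        linarith
end
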